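/- arXiv:1502.05267 — 8 statements merged into one kernel-verified Lean document; each statement's English description precedes it below -/
import Mathlib

section
/- Let q be a prime power and let k be an integer with 1 ≤ k ≤ q+1. Then there exists an F_q-linear code C ⊆ F_q^{q+1} of dimension k and minimum distance q - k + 2 (hence MDS) which is constacyclic: there exists λ ∈ F_q \ {0} such that whenever (c_0, c_1, …, c_q) ∈ C, also (λ·c_q, c_0, …, c_{q-1}) ∈ C. -/
/-!
Let `β` be a primitive `(q² - 1)`-th root of unity over `F = 𝔽_q`, so that `α = β ^ (q - 1)` is a
primitive `(q + 1)`-th root of unity, and write `k = n + 1`. The code is the subfield subcode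
over `𝔽_q` of the generalized Reed–Solomon code `{(β ^ (n i) * P (α ^ i))ᵢ : deg P ≤ n}` over
`𝔽_{q²}`. It inherits the distance bound `q + 2 - k` of the Reed–Solomon code, and the twist
`β ^ (n i)` makes it constacyclic with constant `β ^ (-(q + 1) n)`, which is fixed by Frobenius and
so lies in `𝔽_q`. By the Singleton bound its dimension is at most `k`; it is at least `k` because
the products `∏ₘ Tr (γₘ β ^ i)` of `n` traces `Tr u = u + u ^ q` are `𝔽_q`-valued codewords whose
zeros can be placed at any `n` prescribed positions. Finally, any code of dimension `k` contains a
nonzero word vanishing on `k - 1` prescribed positions, which has weight at most `q + 2 - k`.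
-/

open Polynomial Module

section Singleton

variable {F ι : Type*} [Field F] [Fintype ι] [DecidableEq F]

theorem hammingNorm_add_card_le_of_forall_eq_zero {c : ι → F} {s : Finset ι}
    (hc : ∀ i ∈ s, c i = 0) : hammingNorm c + s.card ≤ Fintype.card ι := by
  classical
  have : Finset.univ.filter (c · ≠ 0) ⊆ sᶜ := fun i hi =>
    Finset.mem_compl.2 fun his => (Finset.mem_filter.1 hi).2 (hc i his)
  rw [← Finset.card_add_card_compl s, add_comm s.card, hammingNorm]
  exact Nat.add_le_add_right (Finset.card_le_card this) _

theorem Submodule.exists_ne_zero_hammingNorm_add_card_le {C : Submodule F (ι → F)}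
    (s : Finset ι) (hs : s.card < finrank F C) :
    ∃ c ∈ C, c ≠ 0 ∧ hammingNorm c + s.card ≤ Fintype.card ι := by
  let restrict : C →ₗ[F] (s → F) := (LinearMap.funLeft F F ((↑) : s → ι)).comp C.subtype
  obtain ⟨c, hc, hc0⟩ := Submodule.exists_mem_ne_zero_of_ne_bot
    (LinearMap.ker_ne_bot_of_finrank_lt (f := restrict) (by simpa using hs))
  refine ⟨c, c.2, by simpa using hc0, hammingNorm_add_card_le_of_forall_eq_zero fun i hi => ?_⟩
  exact congrFun (LinearMap.mem_ker.1 hc) ⟨i, hi⟩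

theorem Submodule.finrank_le_of_forall_card_lt_hammingNorm_add {C : Submodule F (ι → F)} {k : ℕ}
    (h : ∀ c ∈ C, c ≠ 0 → Fintype.card ι < hammingNorm c + k) : finrank F C ≤ k := by
  by_contra! hk
  have : finrank F C ≤ Fintype.card ι := by simpa using Submodule.finrank_le C
  obtain ⟨s, -, hs⟩ := Finset.exists_subset_card_eq (s := (Finset.univ : Finset ι)) (n := k)
    (by simp; omega)
  obtain ⟨c, hc, hc0, hcs⟩ := C.exists_ne_zero_hammingNorm_add_card_le s (hs ▸ hk)
  have := h c hc hc0
  omega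

theorem Submodule.exists_ne_zero_hammingNorm_add_le {C : Submodule F (ι → F)} {k : ℕ}
    (hk : k ≤ finrank F C) (hk0 : k ≠ 0) :
    ∃ c ∈ C, c ≠ 0 ∧ hammingNorm c + k ≤ Fintype.card ι + 1 := by
  have : finrank F C ≤ Fintype.card ι := by simpa using Submodule.finrank_le C
  obtain ⟨s, -, hs⟩ := Finset.exists_subset_card_eq (s := (Finset.univ : Finset ι)) (n := k - 1)
    (by simp; omega)
  obtain ⟨c, hc, hc0, hcs⟩ := C.exists_ne_zero_hammingNorm_add_card_le s (by omega)
  exact ⟨c, hc, hc0, by omega⟩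

omit [DecidableEq F] in
theorem Submodule.le_finrank_of_exists_mem_eq_zero_iff {C : Submodule F (ι → F)} {k : ℕ}
    (e : Fin k → ι) (h : ∀ j, ∃ c ∈ C, ∀ m, c (e m) = 0 ↔ m ≠ j) : k ≤ finrank F C := by
  choose c hcC hc using h
  have hli : LinearIndependent F fun j => (⟨c j, hcC j⟩ : C) := by
    refine LinearIndependent.of_comp C.subtype (linearIndependent_iff'.2 fun s g hsum j hj => ?_)
    have := congrFun hsum (e j)
    simp only [Function.comp_apply, Submodule.subtype_apply, Finset.sum_apply, Pi.smul_apply,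
      smul_eq_mul, Pi.zero_apply] at this
    rw [Finset.sum_eq_single_of_mem j hj fun m _ hmj => by rw [(hc m j).2 hmj.symm, mul_zero]]
      at this
    exact (mul_eq_zero.1 this).resolve_right (by simpa using hc j j)
  simpa using hli.fintype_card_le_finrank

end Singleton

section GRS

variable {K ι : Type*} [Field K]

noncomputable def grsCode (x w : ι → K) (k : ℕ) : Submodule K (ι → K) :=
  (degreeLT K k).map (LinearMap.pi fun i => w i • leval (x i))

theorem mem_grsCode {x w : ι → K} {k : ℕ} {v : ι → K} :
    v ∈ grsCode x w k ↔ ∃ P ∈ degreeLT K k, ∀ i, w i * P.eval (x i) = v i := by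
  simp [grsCode, funext_iff]

theorem card_lt_hammingNorm_add_of_mem_grsCode [Fintype ι] [DecidableEq K] {x w : ι → K}
    (hx : Function.Injective x) (hw : ∀ i, w i ≠ 0) {k : ℕ} {v : ι → K}
    (hv : v ∈ grsCode x w k) (hv0 : v ≠ 0) : Fintype.card ι < hammingNorm v + k := by
  obtain ⟨P, hPk, hPv⟩ := mem_grsCode.1 hv
  have hP0 : P ≠ 0 := by
    rintro rfl
    exact hv0 (funext fun i => by simp [← hPv])
  set Z := Finset.univ.filter (v · = 0)
  have hZ : (Z.image x).val ⊆ P.roots := fun y hy => by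
    obtain ⟨i, hi, rfl⟩ := Finset.mem_image.1 hy
    rw [mem_roots hP0, IsRoot, ← mul_right_inj' (hw i), hPv, (Finset.mem_filter.1 hi).2,
      mul_zero]
  have hZP : Z.card ≤ P.natDegree := by
    simpa [Finset.card_image_of_injective _ hx] using card_le_degree_of_subset_roots hZ
  have hPk' : P.natDegree < k := (natDegree_lt_iff_degree_lt hP0).2 (mem_degreeLT.1 hPk)
  have : Z.card + hammingNorm v = Fintype.card ι :=
    Finset.card_filter_add_card_filter_not (s := Finset.univ) (v · = 0)
  omega

def constaShift {R : Type*} [Mul R] {n : ℕ} (lam : R) (c : Fin (n + 1) → R) :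
    Fin (n + 1) → R :=
  fun i => if i = 0 then lam * c (Fin.last n) else c (i - 1)

/-- Shifting the evaluation points `αⁱ` by one step is the substitution `X ↦ α⁻¹ X`. -/
theorem constaShift_mem_grsCode {n k : ℕ} {α ω : K} (hα : α ^ (n + 1) = 1) (hω : ω ≠ 0)
    {v : Fin (n + 1) → K}
    (hv : v ∈ grsCode (fun i : Fin (n + 1) => α ^ (i : ℕ)) (fun i => ω ^ (i : ℕ)) k) :
    constaShift (ω ^ (n + 1))⁻¹ v ∈
      grsCode (fun i : Fin (n + 1) => α ^ (i : ℕ)) (fun i => ω ^ (i : ℕ)) k := by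
  obtain ⟨P, hPk, hPv⟩ := mem_grsCode.1 hv
  have hα0 : α ≠ 0 := by
    rintro rfl
    simp at hα
  refine mem_grsCode.2 ⟨C ω⁻¹ * P.comp (C α⁻¹ * X), ?_, fun i => ?_⟩
  · rw [mem_degreeLT, degree_lt_iff_coeff_zero] at hPk ⊢
    intro m hm
    simp [hPk m hm]
  · induction i using Fin.cases with
    | zero =>
      have hinv : α⁻¹ = α ^ n := inv_eq_of_mul_eq_one_left (by rw [← pow_succ, hα])
      simp only [constaShift, if_pos, ← hPv, Fin.coe_ofNat_eq_mod, Nat.zero_mod, pow_zero,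
        hinv, eval_mul, eval_C, eval_comp, eval_X, mul_one, one_mul, Fin.val_last]
      field_simp
      ring
    | succ j =>
      have hshift : α⁻¹ * α ^ (j + 1 : ℕ) = α ^ (j : ℕ) := by
        rw [pow_succ]
        field_simp
      simp only [constaShift, Fin.succ_ne_zero, if_false, ← hPv, Fin.val_succ, eval_mul, eval_C,
        eval_comp, eval_X, hshift, Fin.coe_sub_one, add_tsub_cancel_right]
      field_simp
      ring

end GRS

section SubfieldSubcode

variable (F : Type*) {K ι : Type*} [Field F] [Field K] [Algebra F K]

def subfieldSubcode (D : Submodule K (ι → K)) : Submodule F (ι → F) :=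
  (D.restrictScalars F).comap (LinearMap.compLeft (Algebra.linearMap F K) ι)

variable {F}

theorem mem_subfieldSubcode {D : Submodule K (ι → K)} {c : ι → F} :
    c ∈ subfieldSubcode F D ↔ (fun i => algebraMap F K (c i)) ∈ D :=
  Iff.rfl

theorem hammingNorm_algebraMap_comp [Fintype ι] [DecidableEq F] [DecidableEq K] (c : ι → F) :
    hammingNorm (fun i => algebraMap F K (c i)) = hammingNorm c :=
  hammingNorm_comp _ (fun _ => (algebraMap F K).injective) fun _ => map_zero _

theorem constaShift_mem_subfieldSubcode {n : ℕ} {D : Submodule K (Fin (n + 1) → K)} {lam : F}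
    (hD : ∀ v ∈ D, constaShift (algebraMap F K lam) v ∈ D) {c : Fin (n + 1) → F}
    (hc : c ∈ subfieldSubcode F D) : constaShift lam c ∈ subfieldSubcode F D := by
  have : (fun i => algebraMap F K (constaShift lam c i)) =
      constaShift (algebraMap F K lam) fun i => algebraMap F K (c i) := by
    funext i
    unfold constaShift
    split_ifs <;> simp
  exact mem_subfieldSubcode.2 (this ▸ hD _ hc)

end SubfieldSubcode

section TraceProducts

variable {K : Type*} [Field K]

theorem mul_pow_add_pow_eq_pow_mul {q : ℕ} (hq : q ≠ 0) (γ β : K) (i : ℕ) :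
    γ * β ^ i + (γ * β ^ i) ^ q = β ^ i * (γ ^ q * (β ^ (q - 1)) ^ i + γ) := by
  have : (β ^ i) ^ q = β ^ i * (β ^ (q - 1)) ^ i := by
    rw [← mul_pow, ← pow_succ', Nat.sub_add_cancel (Nat.one_le_iff_ne_zero.2 hq), ← pow_mul,
      ← pow_mul, mul_comm]
  rw [mul_pow, this]
  ring

theorem prod_trace_mem_grsCode {N n q : ℕ} (hq : q ≠ 0) (β : K) (γ : Fin n → K) :
    (fun i : Fin N => ∏ m, (γ m * β ^ (i : ℕ) + (γ m * β ^ (i : ℕ)) ^ q)) ∈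
      grsCode (fun i : Fin N => (β ^ (q - 1)) ^ (i : ℕ)) (fun i => (β ^ n) ^ (i : ℕ)) (n + 1) := by
  refine mem_grsCode.2 ⟨∏ m, (C (γ m ^ q) * X + C (γ m)), ?_, fun i => ?_⟩
  · rw [mem_degreeLT]
    refine (degree_le_of_natDegree_le (n := n) ((natDegree_prod_le _ _).trans ?_)).trans_lt ?_
    · exact (Finset.sum_le_sum fun m _ => natDegree_linear_le).trans (by simp)
    · exact_mod_cast n.lt_succ_self
  · rw [eval_prod, ← pow_mul, mul_comm n, pow_mul, ← Fin.prod_const, ← Finset.prod_mul_distrib]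
    refine Finset.prod_congr rfl fun m _ => ?_
    simp [mul_pow_add_pow_eq_pow_mul hq]

end TraceProducts

section PrimitiveRoot

variable {M : Type*} [CommMonoid M] {q : ℕ} {β : M}

theorem IsPrimitiveRoot.pow_pow_sq_eq_pow (hq : q ≠ 0) (hβ : IsPrimitiveRoot β (q ^ 2 - 1))
    (s : ℕ) : (β ^ s) ^ q ^ 2 = β ^ s := by
  rw [← pow_mul, mul_comm, pow_mul, ← Nat.sub_add_cancel (Nat.one_le_pow _ _ hq.bot_lt), pow_succ,
    hβ.pow_eq_one, one_mul]

theorem IsPrimitiveRoot.pow_sub_one_of_sq_sub_one (hq : 1 < q)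
    (hβ : IsPrimitiveRoot β (q ^ 2 - 1)) : IsPrimitiveRoot (β ^ (q - 1)) (q + 1) :=
  hβ.pow (Nat.sub_pos_of_lt (Nat.one_lt_pow two_ne_zero hq))
    (by simpa [mul_comm] using Nat.sq_sub_sq q 1)

end PrimitiveRoot

section FiniteField

variable {F K : Type*} [Field F] [Fintype F] [Field K] [Algebra F K] {β : K}

local notation "q" => Fintype.card F

theorem FiniteField.exists_algebraMap_eq_of_pow_card_eq {x : K} (hx : x ^ q = x) :
    ∃ a : F, algebraMap F K a = x := by
  classical
  have hq : 1 < q := Fintype.one_lt_card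
  have hroots : ((X ^ q - X : F[X]).map (algebraMap F K)).roots =
      Finset.univ.val.map (algebraMap F K) := by
    rw [← FiniteField.roots_X_pow_card_sub_X F]
    refine (roots_map_of_injective_of_card_eq_natDegree (algebraMap F K).injective ?_).symm
    rw [FiniteField.roots_X_pow_card_sub_X, FiniteField.X_pow_card_sub_X_natDegree_eq F hq]
    rfl
  have hx' : x ∈ ((X ^ q - X : F[X]).map (algebraMap F K)).roots := by
    rw [mem_roots (Polynomial.map_ne_zero (FiniteField.X_pow_card_sub_X_ne_zero F hq))]
    simp [hx]
  obtain ⟨a, -, ha⟩ := Multiset.mem_map.1 (hroots ▸ hx')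
  exact ⟨a, ha⟩

theorem FiniteField.add_pow_card_pow_card_eq_self {u : K} (hu : u ^ q ^ 2 = u) :
    (u + u ^ q) ^ q = u + u ^ q := by
  have h := map_add (FiniteField.frobeniusAlgHom F K) u (u ^ q)
  simp only [FiniteField.frobeniusAlgHom_apply, ← pow_mul, ← sq] at h
  rw [h, hu, add_comm]

theorem FiniteField.exists_isPrimitiveRoot_sq_sub_one :
    ∃ β : AlgebraicClosure F, IsPrimitiveRoot β (q ^ 2 - 1) := by
  have : NeZero ((q ^ 2 - 1 : ℕ) : F) := ⟨by
    rw [Nat.cast_sub (Nat.one_le_pow _ _ Fintype.card_pos), Nat.cast_pow,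
      FiniteField.cast_card_eq_zero]
    simp⟩
  exact HasEnoughRootsOfUnity.exists_primitiveRoot _ _

theorem IsPrimitiveRoot.exists_pow_card_mul_add_eq_zero_iff
    (hβ : IsPrimitiveRoot β (q ^ 2 - 1)) (s : ℕ) :
    ∃ γ : K, γ ^ q ^ 2 = γ ∧ ∀ y, γ ^ q * y + γ = 0 ↔ y = (β ^ (q - 1)) ^ s := by
  have hq : 1 < q := Fintype.one_lt_card
  have hα := hβ.pow_sub_one_of_sq_sub_one hq
  have hβ0 : β ≠ 0 := hβ.ne_zero (Nat.sub_ne_zero_of_lt (Nat.one_lt_pow two_ne_zero hq))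
  have hβq : β ^ q ^ 2 = β := by simpa using hβ.pow_pow_sq_eq_pow (by omega) 1
  let φ := FiniteField.frobeniusAlgHom F K
  have hφ (x : K) : φ x = x ^ q := rfl
  -- Any nonzero `δ` of trace zero works: `γ = δ / β ^ s` then satisfies `γ ^ q * α ^ s = -γ`.
  set δ := β ^ q - β
  have hδq : δ ^ q = -δ := by
    rw [← hφ, map_sub, hφ, hφ, ← pow_mul, ← sq, hβq]
    ring
  have hδ0 : δ ≠ 0 := by
    intro h
    refine hα.ne_one (by omega) (mul_right_cancel₀ hβ0 ?_)
    rw [← pow_succ, Nat.sub_add_cancel hq.le, one_mul, ← sub_eq_zero]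
    exact h
  have hδq2 : δ ^ q ^ 2 = δ := by
    rw [sq, pow_mul, hδq, ← hφ, map_neg, hφ, hδq, neg_neg]
  refine ⟨δ / β ^ s, ?_, fun y => ?_⟩
  · rw [div_pow, hδq2, hβ.pow_pow_sq_eq_pow (by omega)]
  · have hb : (β ^ s) ^ q = β ^ s * (β ^ (q - 1)) ^ s := by
      rw [← mul_pow, ← pow_succ', Nat.sub_add_cancel hq.le, ← pow_mul, ← pow_mul, mul_comm]
    have key : (δ / β ^ s) ^ q * y + δ / β ^ s =
        -(δ / (β ^ s) ^ q) * (y - (β ^ (q - 1)) ^ s) := by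
      rw [div_pow, hδq, hb]
      field_simp
      ring
    rw [key, mul_eq_zero, sub_eq_zero, or_iff_right]
    exact neg_ne_zero.2 (div_ne_zero hδ0 (pow_ne_zero _ (pow_ne_zero _ hβ0)))

variable (F) in
noncomputable def twistedRSSubcode (β : K) (n : ℕ) : Submodule F (Fin (q + 1) → F) :=
  subfieldSubcode F (grsCode (fun i : Fin (q + 1) => (β ^ (q - 1)) ^ (i : ℕ))
    (fun i => (β ^ n) ^ (i : ℕ)) (n + 1))

theorem IsPrimitiveRoot.exists_mem_twistedRSSubcode_eq_zero_iff
    (hβ : IsPrimitiveRoot β (q ^ 2 - 1)) {n : ℕ} (s : Fin n → Fin (q + 1)) :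
    ∃ c ∈ twistedRSSubcode F β n, ∀ i, c i = 0 ↔ i ∈ Set.range s := by
  have hq : 1 < q := Fintype.one_lt_card
  have hα := hβ.pow_sub_one_of_sq_sub_one hq
  have hβ0 : β ≠ 0 := hβ.ne_zero (Nat.sub_ne_zero_of_lt (Nat.one_lt_pow two_ne_zero hq))
  choose γ hγ hγ0 using fun m => hβ.exists_pow_card_mul_add_eq_zero_iff (s m : ℕ)
  set v := fun i : Fin (q + 1) => ∏ m, (γ m * β ^ (i : ℕ) + (γ m * β ^ (i : ℕ)) ^ q)
  have hv (i) : v i ^ q = v i := by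
    refine (Finset.prod_pow _ _ _).symm.trans (Finset.prod_congr rfl fun m _ => ?_)
    exact FiniteField.add_pow_card_pow_card_eq_self (F := F)
      (by rw [mul_pow, hγ, hβ.pow_pow_sq_eq_pow (by omega)])
  choose c hc using fun i => FiniteField.exists_algebraMap_eq_of_pow_card_eq (hv i)
  refine ⟨c, mem_subfieldSubcode.2 ?_, fun i => ?_⟩
  · simpa only [hc] using prod_trace_mem_grsCode (by omega) β γ
  · rw [← (algebraMap F K).injective.eq_iff, map_zero, hc, Finset.prod_eq_zero_iff]
    simp only [Finset.mem_univ, true_and, mul_pow_add_pow_eq_pow_mul (by omega : q ≠ 0),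
      mul_eq_zero, pow_ne_zero _ hβ0, false_or, Set.mem_range]
    exact exists_congr fun m => by
      rw [hγ0 m]
      exact ⟨fun h => (Fin.ext (hα.pow_inj i.isLt (s m).isLt h)).symm, fun h => h ▸ rfl⟩

theorem IsPrimitiveRoot.card_lt_hammingNorm_add_of_mem_twistedRSSubcode [DecidableEq F]
    (hβ : IsPrimitiveRoot β (q ^ 2 - 1)) {n : ℕ} {c : Fin (q + 1) → F}
    (hc : c ∈ twistedRSSubcode F β n) (hc0 : c ≠ 0) : q + 1 < hammingNorm c + (n + 1) := by
  classical
  have hq : 1 < q := Fintype.one_lt_card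
  have hα := hβ.pow_sub_one_of_sq_sub_one hq
  have hβ0 : β ≠ 0 := hβ.ne_zero (Nat.sub_ne_zero_of_lt (Nat.one_lt_pow two_ne_zero hq))
  have := card_lt_hammingNorm_add_of_mem_grsCode
    (fun i j h => Fin.ext (hα.pow_inj i.isLt j.isLt h)) (fun i => pow_ne_zero _ (pow_ne_zero _ hβ0))
    (mem_subfieldSubcode.1 hc)
    (fun h => hc0 (funext fun i => (algebraMap F K).injective (by simpa using congrFun h i)))
  rwa [hammingNorm_algebraMap_comp, Fintype.card_fin] at this

theorem IsPrimitiveRoot.finrank_twistedRSSubcode (hβ : IsPrimitiveRoot β (q ^ 2 - 1)) {n : ℕ}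
    (hn : n ≤ q) : finrank F (twistedRSSubcode F β n) = n + 1 := by
  classical
  refine le_antisymm (Submodule.finrank_le_of_forall_card_lt_hammingNorm_add fun c hc hc0 => ?_) ?_
  · simpa using hβ.card_lt_hammingNorm_add_of_mem_twistedRSSubcode hc hc0
  set e := Fin.castLE (Nat.succ_le_succ hn)
  refine Submodule.le_finrank_of_exists_mem_eq_zero_iff e fun j => ?_
  obtain ⟨c, hc, hc0⟩ := hβ.exists_mem_twistedRSSubcode_eq_zero_iff (e ∘ j.succAbove)
  refine ⟨c, hc, fun m => ?_⟩
  rw [hc0, Set.range_comp, (Fin.castLE_injective _).mem_set_image, Fin.range_succAbove]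
  rfl

theorem IsPrimitiveRoot.exists_constaShift_mem_twistedRSSubcode
    (hβ : IsPrimitiveRoot β (q ^ 2 - 1)) (n : ℕ) :
    ∃ lam : F, lam ≠ 0 ∧
      ∀ c ∈ twistedRSSubcode F β n, constaShift lam c ∈ twistedRSSubcode F β n := by
  have hq : 1 < q := Fintype.one_lt_card
  have hβ0 : β ≠ 0 := hβ.ne_zero (Nat.sub_ne_zero_of_lt (Nat.one_lt_pow two_ne_zero hq))
  have hβq : β ^ q ^ 2 = β := by simpa using hβ.pow_pow_sq_eq_pow (by omega) 1
  obtain ⟨a, ha⟩ := FiniteField.exists_algebraMap_eq_of_pow_card_eq (F := F)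
    (by rw [← pow_mul, add_mul, one_mul, pow_add, ← sq, hβq, pow_succ'] :
      (β ^ (q + 1)) ^ q = β ^ (q + 1))
  have ha0 : a ≠ 0 := by
    rintro rfl
    exact pow_ne_zero (q + 1) hβ0 (by simpa using ha.symm)
  refine ⟨(a ^ n)⁻¹, inv_ne_zero (pow_ne_zero _ ha0), fun c hc =>
    constaShift_mem_subfieldSubcode (fun v hv => ?_) hc⟩
  rw [map_inv₀, map_pow, ha, ← pow_mul, mul_comm, pow_mul]
  exact constaShift_mem_grsCode (hβ.pow_sub_one_of_sq_sub_one hq).pow_eq_one (pow_ne_zero _ hβ0) hv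

end FiniteField

/-- For `q` a prime power (realized as the cardinality of a finite field `F`)
and `1 ≤ k ≤ q + 1`, there exists an `F_q`-linear code `C ⊆ F_q^{q+1}` of dimension `k`
and minimum distance `q - k + 2` (hence MDS) which is constacyclic. -/
theorem stmt_0 (q : ℕ) (F : Type) [Field F] [Fintype F] [DecidableEq F]
    (hF : Fintype.card F = q)
    (k : ℕ) (hk1 : 1 ≤ k) (hk2 : k ≤ q + 1) :
    ∃ C : Submodule F (Fin (q + 1) → F),
      Module.finrank F C = k ∧
      (∀ c ∈ C, c ≠ 0 → q + 2 - k ≤ hammingNorm c) ∧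
      (∃ c ∈ C, c ≠ 0 ∧ hammingNorm c = q + 2 - k) ∧
      (∃ lam : F, lam ≠ 0 ∧ ∀ c ∈ C,
        (fun i : Fin (q + 1) => if i = 0 then lam * c (Fin.last q) else c (i - 1)) ∈ C) := by
  subst hF
  obtain ⟨n, rfl⟩ : ∃ n, k = n + 1 := ⟨k - 1, by omega⟩
  obtain ⟨β, hβ⟩ := FiniteField.exists_isPrimitiveRoot_sq_sub_one (F := F)
  have hdim := hβ.finrank_twistedRSSubcode (by omega : n ≤ Fintype.card F)
  have hdist : ∀ c ∈ twistedRSSubcode F β n, c ≠ 0 → _ := fun c hc hc0 =>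
    hβ.card_lt_hammingNorm_add_of_mem_twistedRSSubcode hc hc0
  obtain ⟨c, hc, hc0, hcw⟩ := (twistedRSSubcode F β n).exists_ne_zero_hammingNorm_add_le
    hdim.ge n.succ_ne_zero
  refine ⟨twistedRSSubcode F β n, hdim, fun c hc hc0 => by have := hdist c hc hc0; omega,
    ⟨c, hc, hc0, ?_⟩, hβ.exists_constaShift_mem_twistedRSSubcode n⟩
  have := hdist c hc hc0
  rw [Fintype.card_fin] at hcw
  omega
end

section
/- Let q be a prime power, ω a generator of the multiplicative group of F_{q²}, α = ω^{q-1}, and μ ≥ 0 an integer with 2μ + 1 ≤ q. Let g₁(z) = ∏_{i=-μ}^{μ} (z - α^i) ∈ F_{q²}[z]. Then the code C = {v ∈ F_q^{q+1} : g₁(z) divides Σ_{i=0}^{q} v_i z^i in F_{q²}[z]} is an F_q-linear cyclic code of length q+1, dimension q - 2μ, and minimum distance exactly 2μ + 2; in particular C is an MDS code with parameters [q+1, q-2μ, 2μ+2]_q. -/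
open Polynomial

/-- Vandermonde argument: if `∑ i in s, c i * x i ^ j = 0` for all `j < s.card`, with the
nodes `x i` distinct on `s`, then all `c i` vanish on `s`. -/
lemma aux_vander_zero {E : Type} [Field E] {ι : Type} {s : Finset ι} (x c : ι → E)
    (hx : Set.InjOn x s)
    (h : ∀ j < s.card, ∑ i ∈ s, c i * x i ^ j = 0) : ∀ i ∈ s, c i = 0 := by
  classical
  set n := s.card with hn
  set e : Fin n ≃ {i // i ∈ s} := s.equivFin.symm with he
  set A : Matrix (Fin n) (Fin n) E := (Matrix.vandermonde fun k => x (e k)).transpose with hA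
  have hdet : A.det ≠ 0 := by
    rw [hA, Matrix.det_transpose, Matrix.det_vandermonde]
    refine Finset.prod_ne_zero_iff.mpr fun i _ => Finset.prod_ne_zero_iff.mpr fun j hj => ?_
    have hij : i ≠ j := by
      rintro rfl; simp [Finset.mem_Ioi] at hj
    exact sub_ne_zero_of_ne fun hxx =>
      hij (e.injective (Subtype.ext (hx (e j).2 (e i).2 hxx))).symm
  have hinj : Function.Injective (A.mulVec) :=
    Matrix.mulVec_injective_iff_isUnit.2 ((Matrix.isUnit_iff_isUnit_det A).2 (isUnit_iff_ne_zero.2 hdet))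
  have hAd : A.mulVec (fun k => c (e k)) = A.mulVec 0 := by
    rw [Matrix.mulVec_zero]
    funext j
    rw [Matrix.mulVec]
    simp only [dotProduct, hA, Matrix.transpose_apply, Matrix.vandermonde]
    have := h j (by simpa using j.2)
    rw [← Finset.sum_coe_sort s (fun i => c i * x i ^ (j : ℕ))] at this
    rw [← Equiv.sum_comp e (fun i : {i // i ∈ s} => c i * x i ^ (j : ℕ))] at this
    simpa [mul_comm] using this
  intro i hi
  have := congrFun (hinj hAd) (e.symm ⟨i, hi⟩)
  simpa using this

/-- The range of `f : F →+* E` is exactly the set of fixed points of `x ↦ x ^ q`. -/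
lemma aux_range {q : ℕ} {F E : Type} [Field F] [Fintype F] [Field E] [Fintype E]
    [DecidableEq E]
    (hF : Fintype.card F = q) (f : F →+* E) (hf : ∀ x : F, f x ^ q = f x)
    {c : E} (hc : c ^ q = c) : c ∈ Set.range f := by
  classical
  have hq2 : 2 ≤ q := hF ▸ Fintype.one_lt_card
  have hPne : ((X : E[X]) ^ q - X) ≠ 0 := FiniteField.X_pow_card_sub_X_ne_zero E hq2
  set T : Finset E := ((X : E[X]) ^ q - X).roots.toFinset with hT
  have hTcard : T.card ≤ q := by
    calc T.card ≤ Multiset.card ((X : E[X]) ^ q - X).roots := ((X : E[X]) ^ q - X).roots.toFinset_card_le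
    _ ≤ ((X : E[X]) ^ q - X).natDegree := card_roots' _
    _ = q := FiniteField.X_pow_card_sub_X_natDegree_eq E hq2
  set Rf : Finset E := Finset.univ.image f with hRf
  have hRfcard : Rf.card = q := by
    rw [hRf, Finset.card_image_of_injective _ f.injective, Finset.card_univ, hF]
  have hsub : Rf ⊆ T := by
    intro x hx
    obtain ⟨a, _, rfl⟩ := Finset.mem_image.1 hx
    rw [hT, Multiset.mem_toFinset, mem_roots hPne]
    simp [IsRoot, hf a]
  have heq : Rf = T := Finset.eq_of_subset_of_card_le hsub (hTcard.trans hRfcard.ge)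
  have hcT : c ∈ T := by
    rw [hT, Multiset.mem_toFinset, mem_roots hPne]
    simp [IsRoot, hc]
  rw [← heq] at hcT
  obtain ⟨a, _, rfl⟩ := Finset.mem_image.1 hcT
  exact ⟨a, rfl⟩

/-- Cyclic-shift identity for the associated polynomials. -/
lemma aux_shift {q : ℕ} {E : Type} [CommRing E] (c : Fin (q + 1) → E) :
    (∑ i : Fin (q + 1), C (if i = 0 then c (Fin.last q) else c (i - 1)) * X ^ (i : ℕ))
      = X * (∑ i : Fin (q + 1), C (c i) * X ^ (i : ℕ))
        - C (c (Fin.last q)) * ((X : E[X]) ^ (q + 1) - 1) := by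
  have hsub : ∀ i : Fin q, (i.succ : Fin (q + 1)) - 1 = i.castSucc := by
    intro i
    apply Fin.ext
    rw [Fin.coe_sub_one]
    simp [Fin.succ_ne_zero]
  rw [Fin.sum_univ_succ, Finset.mul_sum (a := (X : E[X]))]
  rw [Fin.sum_univ_castSucc
    (f := fun i : Fin (q+1) => (X : E[X]) * (C (c i) * X ^ (i : ℕ)))]
  simp only [Fin.succ_ne_zero, if_false, if_true, reduceIte, hsub, Fin.val_succ,
    Fin.coe_castSucc, Fin.val_last, Fin.val_zero, pow_zero, Fin.isValue]
  have hs : ∀ x : Fin q, (X : E[X]) * (C (c x.castSucc) * X ^ (x : ℕ))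
      = C (c x.castSucc) * X ^ ((x : ℕ) + 1) := fun x => by ring
  rw [Finset.sum_congr rfl (fun x _ => hs x)]
  ring

set_option maxHeartbeats 2000000

/-- For `q` a prime power (with `F_q ⊆ F_{q²}` realized by a ring hom `f`
into the fixed field of `x ↦ x^q`), `ω` a generator of the multiplicative group of
`F_{q²}`, `α = ω^(q-1)`, `2μ + 1 ≤ q`, and `g₁(z) = ∏_{i=-μ}^{μ} (z - α^i)`:
the code `C = {v ∈ F_q^{q+1} : g₁ ∣ Σ v_i z^i}` is an `F_q`-linear cyclic code of
length `q+1`, dimension `q - 2μ`, and minimum distance exactly `2μ + 2`;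
in particular it is MDS with parameters `[q+1, q-2μ, 2μ+2]_q`. -/
theorem stmt_2 (q : ℕ) (F E : Type) [Field F] [Fintype F] [DecidableEq F]
    [Field E] [Fintype E]
    (hF : Fintype.card F = q) (hE : Fintype.card E = q ^ 2)
    (f : F →+* E) (hf : ∀ x : F, f x ^ q = f x)
    (ω : E) (hω : IsPrimitiveRoot ω (q ^ 2 - 1)) (μ : ℕ) (hμ : 2 * μ + 1 ≤ q)
    (g₁ : Polynomial E)
    (hg₁ : g₁ = ∏ i ∈ Finset.Icc (-(μ : ℤ)) (μ : ℤ),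
      (Polynomial.X - Polynomial.C ((ω ^ (q - 1)) ^ i))) :
    ∃ C : Submodule F (Fin (q + 1) → F),
      (C : Set (Fin (q + 1) → F)) =
        {v | g₁ ∣ ∑ i : Fin (q + 1), Polynomial.C (f (v i)) * Polynomial.X ^ (i : ℕ)} ∧
      Module.finrank F C = q - 2 * μ ∧
      (∀ v ∈ C, v ≠ 0 → 2 * μ + 2 ≤ hammingNorm v) ∧
      (∃ v ∈ C, v ≠ 0 ∧ hammingNorm v = 2 * μ + 2) ∧
      (∀ v ∈ C, (fun i : Fin (q + 1) => if i = 0 then v (Fin.last q) else v (i - 1)) ∈ C) := by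
  classical
  have hq2 : 2 ≤ q := hF ▸ Fintype.one_lt_card
  set α : E := ω ^ (q - 1) with hαdef
  have hsq : q ^ 2 - 1 = (q - 1) * (q + 1) := by
    obtain ⟨m, rfl⟩ : ∃ m, q = m + 2 := ⟨q - 2, by omega⟩
    have h1 : (m + 2) ^ 2 = (m + 1) * (m + 3) + 1 := by ring
    rw [show m + 2 - 1 = m + 1 from rfl, show m + 2 + 1 = m + 3 from rfl]
    omega
  have hn0 : 0 < q ^ 2 - 1 := by
    rw [hsq]; exact Nat.mul_pos (by omega) (by omega)
  have hα : IsPrimitiveRoot α (q + 1) := hω.pow hn0 hsq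
  have hαne : α ≠ 0 := hα.ne_zero (Nat.succ_ne_zero q)
  have hzne : ∀ m : ℤ, α ^ m ≠ 0 := fun m => zpow_ne_zero m hαne
  have hα1 : α ^ ((q : ℤ) + 1) = 1 := by
    have h := hα.pow_eq_one
    rw [show ((q : ℤ) + 1) = ((q + 1 : ℕ) : ℤ) by push_cast; ring, zpow_natCast]
    exact h
  have hμz : 2 * (μ : ℤ) + 1 ≤ (q : ℤ) := by exact_mod_cast hμ
  have hdvd_int : ∀ i j : ℤ, α ^ i = α ^ j → ((q : ℤ) + 1) ∣ (i - j) := by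
    intro i j hij
    have h1 : α ^ (i - j) = 1 := by
      rw [zpow_sub₀ hαne, hij, div_self (hzne j)]
    have h2 := (hα.zpow_eq_one_iff_dvd _).mp h1
    exact_mod_cast h2
  have hinj : ∀ i ∈ Finset.Icc (-(μ : ℤ)) (μ : ℤ), ∀ j ∈ Finset.Icc (-(μ : ℤ)) (μ : ℤ),
      α ^ i = α ^ j → i = j := by
    intro i hi j hj hij
    simp only [Finset.mem_Icc] at hi hj
    have h0 : i - j = 0 :=
      Int.eq_zero_of_dvd_of_natAbs_lt_natAbs (hdvd_int i j hij) (by omega)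
    omega
  have hIcc_card : (Finset.Icc (-(μ : ℤ)) (μ : ℤ)).card = 2 * μ + 1 := by
    rw [Int.card_Icc]; omega
  have hg1monic : g₁.Monic := by
    rw [hg₁]; exact monic_prod_of_monic _ _ (fun i _ => monic_X_sub_C _)
  have hg1deg : g₁.natDegree = 2 * μ + 1 := by
    rw [hg₁, natDegree_prod_of_monic _ _ (fun i _ => monic_X_sub_C _)]
    simp [natDegree_X_sub_C, hIcc_card]
  have hroot1 : ∀ i : ℤ, (α ^ i) ^ (q + 1) = 1 := by
    intro i
    rw [← zpow_natCast (α ^ i), ← zpow_mul,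
      show ((q + 1 : ℕ) : ℤ) = (q : ℤ) + 1 by push_cast; ring,
      mul_comm, zpow_mul, hα1, one_zpow]
  have hg1dvd : g₁ ∣ (X : E[X]) ^ (q + 1) - 1 := by
    rw [hg₁]
    refine Finset.prod_dvd_of_coprime ?_ ?_
    · intro i hi j hj hij
      exact isCoprime_X_sub_C_of_isUnit_sub
        (sub_ne_zero_of_ne (fun h => hij (hinj i hi j hj h))).isUnit
    · intro i _
      rw [dvd_iff_isRoot]
      simp only [IsRoot, eval_sub, eval_pow, eval_X, eval_one, hroot1 i, sub_self]
  -- Frobenius fixes g₁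
  have hpF : CharP F (ringChar F) := ringChar.charP F
  obtain ⟨n, hpprime, hqpn⟩ := FiniteField.card F (ringChar F)
  haveI : Fact (Nat.Prime (ringChar F)) := ⟨hpprime⟩
  haveI hpE : CharP E (ringChar F) := charP_of_injective_ringHom f.injective (ringChar F)
  set φ : E →+* E := iterateFrobenius E (ringChar F) n with hφdef
  have hφ : ∀ x : E, φ x = x ^ q := by
    intro x; rw [hφdef, iterateFrobenius_def, ← hqpn, hF]
  have hαq : ∀ i : ℤ, (α ^ i) ^ q = α ^ (-i) := by
    intro i
    rw [← zpow_natCast (α ^ i), ← zpow_mul]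
    have h1 : α ^ (i * (q : ℤ) + i) = 1 := by
      rw [show i * (q : ℤ) + i = ((q : ℤ) + 1) * i by ring, zpow_mul, hα1, one_zpow]
    have h2 := zpow_add₀ hαne (i * (q : ℤ)) i
    rw [h1] at h2
    rw [zpow_neg]
    exact eq_inv_of_mul_eq_one_left h2.symm
  have hmapfix : g₁.map φ = g₁ := by
    conv_lhs => rw [hg₁]
    rw [Polynomial.map_prod]
    conv_rhs => rw [hg₁]
    refine Finset.prod_equiv (Equiv.neg ℤ) (fun i => by simp [Finset.mem_Icc]; omega)
      (fun i _ => ?_)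
    simp only [Polynomial.map_sub, map_X, map_C, Equiv.neg_apply]
    rw [hφ, hαq]
  have hfix : ∀ k, (g₁.coeff k) ^ q = g₁.coeff k := by
    intro k
    have := congrArg (fun p => Polynomial.coeff p k) hmapfix
    simpa [coeff_map, hφ] using this
  -- a lift over F
  have hlift : g₁ ∈ Polynomial.lifts (f : F →+* E) :=
    (Polynomial.lifts_iff_coeff_lifts g₁).2 (fun k => aux_range hF f hf (hfix k))
  obtain ⟨g₀, hg₀⟩ := (Polynomial.mem_lifts g₁).1 hlift
  have hginj : Function.Injective f := f.injective
  have hg₀monic : g₀.Monic := monic_of_injective hginj (hg₀ ▸ hg1monic)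
  have hg₀deg : g₀.natDegree = 2 * μ + 1 := by
    rw [← natDegree_map_eq_of_injective hginj, hg₀, hg1deg]
  have hdvd_iff : ∀ p : F[X], g₀ ∣ p ↔ g₁ ∣ p.map f := by
    intro p; rw [← hg₀]; exact (map_dvd_map f hginj hg₀monic).symm
  have hg₀dvd : g₀ ∣ (X : F[X]) ^ (q + 1) - 1 := by
    rw [hdvd_iff]
    simpa [Polynomial.map_sub, Polynomial.map_pow] using hg1dvd
  have hg₀ne : g₀ ≠ 0 := hg₀monic.ne_zero
  have hg₀degree : g₀.degree = ((2 * μ + 1 : ℕ) : WithBot ℕ) := by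
    rw [degree_eq_natDegree hg₀ne, hg₀deg]
  -- the linear maps
  set V : (Fin (q + 1) → F) →ₗ[F] F[X] :=
    (Polynomial.degreeLT F (q + 1)).subtype.comp
      ((Polynomial.degreeLTEquiv F (q + 1)).symm :
        (Fin (q + 1) → F) ≃ₗ[F] Polynomial.degreeLT F (q + 1)).toLinearMap with hV
  have hVpoly : ∀ v, V v = ∑ i : Fin (q + 1), Polynomial.monomial (i : ℕ) (v i) :=
    fun v => rfl
  have hVmap : ∀ v, (V v).map f = ∑ i : Fin (q + 1), C (f (v i)) * X ^ (i : ℕ) := by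
    intro v
    rw [show (V v).map f = Polynomial.mapRingHom f (V v) from rfl, hVpoly, map_sum]
    refine Finset.sum_congr rfl fun i _ => ?_
    rw [coe_mapRingHom, Polynomial.map_monomial, ← C_mul_X_pow_eq_monomial]
  have hVsec : ∀ (p : F[X]) (hp : p ∈ Polynomial.degreeLT F (q + 1)),
      V (fun i => p.coeff i) = p := by
    intro p hp
    show ((Polynomial.degreeLTEquiv F (q + 1)).symm (fun i => p.coeff i) : F[X]) = p
    have h1 : (fun i : Fin (q + 1) => p.coeff i)
        = (Polynomial.degreeLTEquiv F (q + 1)) ⟨p, hp⟩ := rfl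
    rw [h1, LinearEquiv.symm_apply_apply]
  set M : (Fin (q + 1) → F) →ₗ[F] (Fin (2 * μ + 1) → F) :=
    (LinearMap.pi fun j : Fin (2 * μ + 1) => Polynomial.lcoeff F (j : ℕ)).comp
      ((Polynomial.modByMonicHom g₀).comp V) with hM
  have hMapply : ∀ v j, M v j = (V v %ₘ g₀).coeff (j : ℕ) := fun v j => rfl
  have hkermem : ∀ v, M v = 0 ↔ g₀ ∣ V v := by
    intro v
    constructor
    · intro h0
      rw [← Polynomial.modByMonic_eq_zero_iff_dvd hg₀monic]
      have hdeg : (V v %ₘ g₀).degree < g₀.degree := degree_modByMonic_lt _ hg₀monic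
      ext k
      rw [coeff_zero]
      by_cases hk : k < 2 * μ + 1
      · exact (hMapply v ⟨k, hk⟩) ▸ congrFun h0 ⟨k, hk⟩
      · refine coeff_eq_zero_of_degree_lt (lt_of_lt_of_le hdeg ?_)
        rw [hg₀degree]
        have hk2 : 2 * μ + 1 ≤ k := by omega
        exact_mod_cast hk2
    · intro hdvd
      have h0 : V v %ₘ g₀ = 0 := (Polynomial.modByMonic_eq_zero_iff_dvd hg₀monic).2 hdvd
      funext j
      rw [hMapply, h0, coeff_zero]; rfl
  have hmem : ∀ v : Fin (q + 1) → F,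
      v ∈ LinearMap.ker M ↔ g₁ ∣ ∑ i : Fin (q + 1), C (f (v i)) * X ^ (i : ℕ) := by
    intro v
    rw [LinearMap.mem_ker, hkermem, hdvd_iff, hVmap]
  -- dimension
  have hMsurj : Function.Surjective M := by
    intro w
    set r : F[X] := ((Polynomial.degreeLTEquiv F (2 * μ + 1)).symm w : F[X]) with hrdef
    have hrmem : r ∈ Polynomial.degreeLT F (2 * μ + 1) :=
      ((Polynomial.degreeLTEquiv F (2 * μ + 1)).symm w).2
    have hrcoeff : ∀ j : Fin (2 * μ + 1), r.coeff (j : ℕ) = w j := fun j =>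
      congrFun ((Polynomial.degreeLTEquiv F (2 * μ + 1)).apply_symm_apply w) j
    have hrdeg : r.degree < ((2 * μ + 1 : ℕ) : WithBot ℕ) := Polynomial.mem_degreeLT.1 hrmem
    have hrmem' : r ∈ Polynomial.degreeLT F (q + 1) :=
      Polynomial.mem_degreeLT.2 (lt_of_lt_of_le hrdeg (by
        have hk2 : 2 * μ + 1 ≤ q + 1 := by omega
        exact_mod_cast hk2))
    refine ⟨fun i => r.coeff i, ?_⟩
    funext j
    rw [hMapply, hVsec r hrmem',
      (modByMonic_eq_self_iff hg₀monic).2 (hg₀degree ▸ hrdeg), hrcoeff]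
  have hrank : Module.finrank F (LinearMap.ker M) = q - 2 * μ := by
    have h1 := LinearMap.finrank_range_add_finrank_ker M
    rw [LinearMap.range_eq_top.2 hMsurj, finrank_top] at h1
    simp only [Module.finrank_pi, Fintype.card_fin] at h1
    omega
  -- minimum distance lower bound
  have hlow : ∀ v : Fin (q + 1) → F, v ∈ LinearMap.ker M → v ≠ 0 →
      2 * μ + 2 ≤ hammingNorm v := by
    intro v hv hvne
    by_contra hcon
    push_neg at hcon
    have hdvdv : g₁ ∣ ∑ i : Fin (q + 1), C (f (v i)) * X ^ (i : ℕ) := (hmem v).1 hv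
    set s : Finset (Fin (q + 1)) := Finset.univ.filter (fun i => v i ≠ 0) with hs
    have hsnorm : hammingNorm v = s.card := rfl
    have hscard : s.card ≤ 2 * μ + 1 := by omega
    have heval : ∀ m ∈ Finset.Icc (-(μ : ℤ)) (μ : ℤ),
        ∑ i ∈ s, f (v i) * α ^ (m * ((i : ℕ) : ℤ)) = 0 := by
      intro m hm
      have hd1 : (X - Polynomial.C (α ^ m)) ∣
          ∑ i : Fin (q + 1), C (f (v i)) * X ^ (i : ℕ) :=
        dvd_trans (by rw [hg₁]; exact Finset.dvd_prod_of_mem _ hm) hdvdv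
      have h1 : Polynomial.eval (α ^ m)
          (∑ i : Fin (q + 1), C (f (v i)) * X ^ (i : ℕ)) = 0 :=
        eval_eq_zero_of_dvd_of_eval_eq_zero hd1 (by simp)
      rw [Polynomial.eval_finset_sum] at h1
      simp only [eval_mul, eval_C, eval_pow, eval_X] at h1
      have h2 : ∀ i : Fin (q + 1), f (v i) * (α ^ m) ^ (i : ℕ)
          = f (v i) * α ^ (m * ((i : ℕ) : ℤ)) := by
        intro i
        rw [← zpow_natCast (α ^ m), ← zpow_mul]
      rw [Finset.sum_congr rfl (fun i _ => h2 i)] at h1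
      rw [← h1]
      refine Finset.sum_subset (Finset.subset_univ s) ?_
      intro i _ hi
      have : v i = 0 := by
        by_contra hne
        exact hi (Finset.mem_filter.2 ⟨Finset.mem_univ i, hne⟩)
      simp [this]
    have hvan := aux_vander_zero (s := s)
      (fun i => α ^ ((i : ℕ) : ℤ))
      (fun i => f (v i) * α ^ (-(μ : ℤ) * ((i : ℕ) : ℤ)))
      ?_ ?_
    · obtain ⟨i0, hi0⟩ : ∃ i, v i ≠ 0 := Function.ne_iff.1 hvne
      have hi0s : i0 ∈ s := Finset.mem_filter.2 ⟨Finset.mem_univ i0, hi0⟩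
      have := hvan i0 hi0s
      rcases mul_eq_zero.1 this with h | h
      · exact hi0 (by simpa using hginj (h.trans (map_zero f).symm))
      · exact hzne _ h
    · intro i hi j hj hij
      have hd := hdvd_int _ _ hij
      have h0 : ((i : Fin (q + 1)) : ℕ) = ((j : Fin (q + 1)) : ℕ) := by
        have := Int.eq_zero_of_dvd_of_natAbs_lt_natAbs hd (by
          have hi1 := (i : Fin (q + 1)).isLt
          have hj1 := (j : Fin (q + 1)).isLt
          omega)
        omega
      exact Fin.ext h0
    · intro j hj
      have hm : ((j : ℤ) - μ) ∈ Finset.Icc (-(μ : ℤ)) (μ : ℤ) := by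
        simp only [Finset.mem_Icc]
        constructor <;> omega
      have := heval _ hm
      rw [← this]
      refine Finset.sum_congr rfl fun i _ => ?_
      rw [mul_assoc]
      congr 1
      rw [← zpow_natCast (α ^ ((i : ℕ) : ℤ)) j, ← zpow_mul, ← zpow_add₀ hαne]
      congr 1
      ring
  refine ⟨LinearMap.ker M, Set.ext fun v => (SetLike.mem_coe).trans (hmem v), hrank,
    fun v hv hvne => hlow v hv hvne, ?_, ?_⟩
  · -- existence of a weight 2μ+2 codeword
    set v : Fin (q + 1) → F := fun i => g₀.coeff i with hvdef
    have hg₀mem : g₀ ∈ Polynomial.degreeLT F (q + 1) := by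
      refine Polynomial.mem_degreeLT.2 ?_
      rw [hg₀degree]
      exact_mod_cast (by omega : 2 * μ + 1 < q + 1)
    have hVv : V v = g₀ := hVsec g₀ hg₀mem
    have hvmem : v ∈ LinearMap.ker M := by
      rw [hmem, ← hVmap, hVv, hg₀]
    have hlc : g₀.coeff (2 * μ + 1) = 1 := by
      have h := hg₀monic.coeff_natDegree
      rwa [hg₀deg] at h
    have hvne : v ≠ 0 := by
      intro h0
      have h1 : g₀.coeff (2 * μ + 1) = 0 := by
        have h2 := congrFun h0 ⟨2 * μ + 1, by omega⟩
        simpa [hvdef] using h2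
      rw [hlc] at h1
      exact one_ne_zero h1
    have hup : hammingNorm v ≤ 2 * μ + 2 := by
      have hcard : (Finset.univ.filter fun i : Fin (q + 1) => v i ≠ 0).card
          ≤ (Finset.univ : Finset (Fin (2 * μ + 2))).card := by
        refine Finset.card_le_card_of_injOn
          (fun i => if h : (i : ℕ) < 2 * μ + 2 then (⟨(i : ℕ), h⟩ : Fin (2 * μ + 2)) else 0)
          (fun a _ => Finset.mem_univ _) ?_
        intro a ha b hb hab
        simp only [Finset.coe_filter, Set.mem_setOf_eq] at ha hb
        have ha2 : (a : ℕ) < 2 * μ + 2 := by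
          have := Polynomial.le_natDegree_of_ne_zero ha.2
          omega
        have hb2 : (b : ℕ) < 2 * μ + 2 := by
          have := Polynomial.le_natDegree_of_ne_zero hb.2
          omega
        dsimp only at hab
        rw [dif_pos ha2, dif_pos hb2] at hab
        rw [Fin.mk.injEq] at hab
        exact Fin.ext hab
      calc hammingNorm v
          = (Finset.univ.filter fun i : Fin (q + 1) => v i ≠ 0).card := rfl
        _ ≤ (Finset.univ : Finset (Fin (2 * μ + 2))).card := hcard
        _ = 2 * μ + 2 := by simp
    exact ⟨v, hvmem, hvne, le_antisymm hup (hlow v hvmem hvne)⟩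
  · -- cyclicity
    intro v hv
    rw [hmem] at hv ⊢
    have hiff : ∀ i : Fin (q + 1),
        C (f (if i = 0 then v (Fin.last q) else v (i - 1)))
          = C (if i = 0 then f (v (Fin.last q)) else f (v (i - 1))) := by
      intro i; rw [apply_ite f]
    calc g₁ ∣ X * (∑ i : Fin (q + 1), C (f (v i)) * X ^ (i : ℕ))
        - C (f (v (Fin.last q))) * ((X : E[X]) ^ (q + 1) - 1) :=
      dvd_sub (hv.mul_left X) (hg1dvd.mul_left _)
    _ = ∑ i : Fin (q + 1),
        C (f (if i = 0 then v (Fin.last q) else v (i - 1))) * X ^ (i : ℕ) := by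
      rw [← aux_shift (fun i => f (v i))]
      exact Finset.sum_congr rfl fun i _ => by rw [hiff i]
end

section
/- Let q = 2^m be an even prime power, ω a generator of the multiplicative group of F_{q²}, α = ω^{q-1}, and μ ≥ 0 an integer with 2μ + 2 ≤ q. Let g₂(z) = ∏_{i=q/2-μ}^{q/2+1+μ} (z - α^i) ∈ F_{q²}[z]. Then every coefficient of g₂ lies in F_q, and the code C = {v ∈ F_q^{q+1} : g₂(z) divides Σ_{i=0}^{q} v_i z^i in F_{q²}[z]} is an F_q-linear cyclic code of length q+1, dimension q - 1 - 2μ, and minimum distance exactly 2μ + 3; in particular C is an MDS code with parameters [q+1, q-1-2μ, 2μ+3]_q. -/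
open Polynomial Finset
open Polynomial Finset

/-- polynomial from a coefficient vector -/
noncomputable def pvec {F : Type} [Semiring F] {N : ℕ} (v : Fin N → F) : Polynomial F :=
  ∑ i : Fin N, Polynomial.monomial (i : ℕ) (v i)

lemma coeff_pvec {F : Type} [Semiring F] {N : ℕ} (v : Fin N → F) (n : ℕ) :
    (pvec v).coeff n = if h : n < N then v ⟨n, h⟩ else 0 := by
  rw [pvec, Polynomial.finset_sum_coeff]
  simp only [Polynomial.coeff_monomial]
  split
  · next h =>
    rw [Finset.sum_eq_single (⟨n, h⟩ : Fin N)]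
    · simp
    · intro b _ hb
      rw [if_neg]; exact fun hbn => hb (Fin.ext hbn)
    · simp
  · next h =>
    apply Finset.sum_eq_zero
    intro i _
    rw [if_neg]; exact fun hin => h (hin ▸ i.isLt)

lemma pvec_natDegree_le {F : Type} [Semiring F] {N : ℕ} (v : Fin N → F) :
    (pvec v).natDegree ≤ N - 1 := by
  rw [Polynomial.natDegree_le_iff_coeff_eq_zero]
  intro M hM
  rw [coeff_pvec]
  rw [dif_neg]; omega

lemma pvec_eq_self {F : Type} [Semiring F] {N : ℕ} (p : Polynomial F) (hp : p.natDegree < N) :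
    pvec (fun i : Fin N => p.coeff i) = p := by
  ext n
  rw [coeff_pvec]
  split
  · rfl
  · next h => exact (Polynomial.coeff_eq_zero_of_natDegree_lt (by omega)).symm

lemma pvec_inj {F : Type} [Semiring F] {N : ℕ} (v : Fin N → F) (hv : pvec v = 0) : v = 0 := by
  funext i
  have := congrArg (fun p => Polynomial.coeff p (i : ℕ)) hv
  simpa [coeff_pvec] using this

lemma pvec_map {F E : Type} [Semiring F] [Semiring E] (f : F →+* E) {N : ℕ} (v : Fin N → F) :
    (pvec v).map f = pvec (fun i => f (v i)) := by
  ext n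
  rw [Polynomial.coeff_map, coeff_pvec, coeff_pvec]
  split <;> simp

lemma pvec_eq_sum_C {E : Type} [CommSemiring E] {N : ℕ} (v : Fin N → E) :
    pvec v = ∑ i : Fin N, Polynomial.C (v i) * Polynomial.X ^ (i : ℕ) := by
  rw [pvec]
  exact Finset.sum_congr rfl fun i _ => (Polynomial.C_mul_X_pow_eq_monomial).symm

lemma pvec_add {F : Type} [Semiring F] {N : ℕ} (v w : Fin N → F) :
    pvec (v + w) = pvec v + pvec w := by
  rw [pvec, pvec, pvec, ← Finset.sum_add_distrib]
  exact Finset.sum_congr rfl fun i _ => by simp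

lemma pvec_smul {F : Type} [CommSemiring F] {N : ℕ} (c : F) (v : Fin N → F) :
    pvec (c • v) = Polynomial.C c * pvec v := by
  rw [pvec, pvec, Finset.mul_sum]
  exact Finset.sum_congr rfl fun i _ => by
    simp [Polynomial.C_mul_monomial]

/-- divisibility transfer along an injective field map -/
lemma dvd_map_iff_dvd {F E : Type} [Field F] [Field E] (f : F →+* E) {g p : Polynomial F}
    (hg : g.Monic) : g.map f ∣ p.map f ↔ g ∣ p := by
  constructor
  · intro h
    rw [← Polynomial.modByMonic_eq_zero_iff_dvd hg]
    rw [← Polynomial.modByMonic_eq_zero_iff_dvd (hg.map f), ← Polynomial.map_modByMonic f hg,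
      Polynomial.map_eq_zero_iff f.injective] at h
    exact h
  · intro h
    exact Polynomial.map_dvd f h
open Polynomial Finset

lemma prod_dvd_X_pow_sub_one {E : Type} [Field E] {α : E} {n : ℕ}
    (hα : IsPrimitiveRoot α n) (hn : 0 < n) (s : Finset ℕ) (hs : ∀ i ∈ s, i < n) :
    (∏ i ∈ s, (X - C (α ^ i))) ∣ (X : Polynomial E) ^ n - 1 := by
  have hne : (X : Polynomial E) ^ n - 1 ≠ 0 := by
    simpa using Polynomial.X_pow_sub_C_ne_zero hn (1 : E)
  have key : (∏ i ∈ s, (X - C (α ^ i))) =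
      ((s.val.map (fun i => α ^ i)).map (fun r => X - C r)).prod := by
    rw [Multiset.map_map, Finset.prod]
    rfl
  rw [key]
  rw [Multiset.prod_X_sub_C_dvd_iff_le_roots hne]
  have hnodup : (s.val.map (fun i => α ^ i)).Nodup := by
    refine Multiset.Nodup.map_on ?_ s.nodup
    intro i hi j hj hij
    exact hα.pow_inj (hs i hi) (hs j hj) hij
  rw [Multiset.le_iff_subset hnodup]
  intro x hx
  rw [Multiset.mem_map] at hx
  obtain ⟨i, hi, rfl⟩ := hx
  rw [Polynomial.mem_roots hne]
  show Polynomial.IsRoot _ _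
  rw [Polynomial.IsRoot, Polynomial.eval_sub, Polynomial.eval_pow, Polynomial.eval_X,
    Polynomial.eval_one, ← pow_mul, mul_comm, pow_mul, hα.pow_eq_one, one_pow, sub_self]

lemma vandermonde_vanish {E : Type} [Field E] {w : ℕ} (x : Fin w → E)
    (hx : Function.Injective x) (hx0 : ∀ r, x r ≠ 0) (a : ℕ) (y : Fin w → E)
    (hy : ∀ t : Fin w, ∑ r, y r * (x r) ^ (a + (t : ℕ)) = 0) : y = 0 := by
  classical
  set M : Matrix (Fin w) (Fin w) E :=
    Matrix.of (fun t r : Fin w => (x r ^ a) * (Matrix.vandermonde x r t)) with hM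
  have hdet : M.det ≠ 0 := by
    have : M = Matrix.of (fun t r : Fin w => (x r ^ a) * ((Matrix.vandermonde x).transpose t r)) := rfl
    rw [this, Matrix.det_mul_row, Matrix.det_transpose]
    exact mul_ne_zero (Finset.prod_ne_zero_iff.mpr fun r _ => pow_ne_zero _ (hx0 r))
      (Matrix.det_vandermonde_ne_zero_iff.mpr hx)
  have hmv : M.mulVec y = 0 := by
    funext t
    rw [Matrix.mulVec, dotProduct]
    rw [show (0 : Fin w → E) t = 0 from rfl, ← hy t]
    refine Finset.sum_congr rfl fun r _ => ?_
    simp only [M, Matrix.of_apply, Matrix.vandermonde_apply]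
    rw [pow_add]; ring
  exact Matrix.eq_zero_of_mulVec_eq_zero hdet hmv

/-- For `q = 2^m` an even prime power, `ω` a generator of the multiplicative
group of `F_{q²}`, `α = ω^(q-1)`, `2μ + 2 ≤ q`, and
`g₂(z) = ∏_{i=q/2-μ}^{q/2+1+μ} (z - α^i)`: every coefficient of `g₂` lies in `F_q`
(is fixed by `x ↦ x^q`), and the code `C = {v ∈ F_q^{q+1} : g₂ ∣ Σ v_i z^i}` is an
`F_q`-linear cyclic code of length `q+1`, dimension `q - 1 - 2μ`, and minimum distance
exactly `2μ + 3`; in particular it is MDS with parameters `[q+1, q-1-2μ, 2μ+3]_q`. -/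
theorem stmt_3 (q m : ℕ) (hm : 1 ≤ m) (hq : q = 2 ^ m)
    (F E : Type) [Field F] [Fintype F] [DecidableEq F] [Field E] [Fintype E]
    (hF : Fintype.card F = q) (hE : Fintype.card E = q ^ 2)
    (f : F →+* E) (hf : ∀ x : F, f x ^ q = f x)
    (ω : E) (hω : IsPrimitiveRoot ω (q ^ 2 - 1)) (μ : ℕ) (hμ : 2 * μ + 2 ≤ q)
    (g₂ : Polynomial E)
    (hg₂ : g₂ = ∏ i ∈ Finset.Icc (q / 2 - μ) (q / 2 + 1 + μ),
      (Polynomial.X - Polynomial.C ((ω ^ (q - 1)) ^ i))) :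
    (∀ n : ℕ, (g₂.coeff n) ^ q = g₂.coeff n) ∧
    ∃ C : Submodule F (Fin (q + 1) → F),
      (C : Set (Fin (q + 1) → F)) =
        {v | g₂ ∣ ∑ i : Fin (q + 1), Polynomial.C (f (v i)) * Polynomial.X ^ (i : ℕ)} ∧
      Module.finrank F C = q - 1 - 2 * μ ∧
      (∀ v ∈ C, v ≠ 0 → 2 * μ + 3 ≤ hammingNorm v) ∧
      (∃ v ∈ C, v ≠ 0 ∧ hammingNorm v = 2 * μ + 3) ∧
      (∀ v ∈ C, (fun i : Fin (q + 1) => if i = 0 then v (Fin.last q) else v (i - 1)) ∈ C) := by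
  classical
  -- basic numerology
  have hq2 : 2 ≤ q := by
    have : 2 ^ 1 ≤ 2 ^ m := Nat.pow_le_pow_right (by norm_num) hm
    omega
  have hdvd : 2 ∣ q := hq ▸ dvd_pow_self 2 (by omega)
  set a := q / 2 - μ with ha
  set b := q / 2 + 1 + μ with hb
  have hμhalf : μ + 1 ≤ q / 2 := by omega
  have hab : a + b = q + 1 := by omega
  have hbq : b ≤ q := by omega
  have hcard : (Finset.Icc a b).card = 2 * μ + 2 := by
    rw [Nat.card_Icc]; omega
  set α := ω ^ (q - 1) with hαdef
  have hq21 : q ^ 2 - 1 = (q - 1) * (q + 1) := by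
    obtain ⟨c, rfl⟩ := Nat.exists_eq_add_of_le hq2
    have h1 : (2 + c) ^ 2 = c ^ 2 + 4 * c + 4 := by ring
    have h2 : (2 + c - 1) * (2 + c + 1) = c ^ 2 + 4 * c + 3 := by
      have h3 : 2 + c - 1 = c + 1 := by omega
      rw [h3]; ring
    omega
  have hα : IsPrimitiveRoot α (q + 1) :=
    IsPrimitiveRoot.pow (by have := Nat.pow_le_pow_left hq2 2; omega) hω hq21
  have hα1 : α ^ (q + 1) = 1 := hα.pow_eq_one
  have hαne : α ≠ 0 := fun h => by
    rw [h, zero_pow (by omega)] at hα1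
    exact one_ne_zero hα1.symm
  -- characteristic
  have hchar : CharP E 2 := by
    haveI : CharP E (ringChar E) := ringChar.charP E
    obtain ⟨n, hp, hcardE⟩ := FiniteField.card E (ringChar E)
    have hpn : (ringChar E) ^ (n : ℕ) = 2 ^ (2 * m) := by
      rw [← hcardE, hE, hq, ← pow_mul, mul_comm]
    have hp2 : ringChar E = 2 := by
      have hdvd2 : (ringChar E) ∣ 2 ^ (2 * m) := hpn ▸ dvd_pow_self _ n.pos.ne'
      exact (Nat.prime_dvd_prime_iff_eq hp Nat.prime_two).mp (hp.dvd_of_dvd_pow hdvd2)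
    exact hp2 ▸ ringChar.charP E
  haveI := hchar
  haveI : Fact (Nat.Prime 2) := ⟨Nat.prime_two⟩
  set φ := iterateFrobenius E 2 m with hφdef
  have hφ : ∀ x : E, φ x = x ^ q := fun x => by
    rw [hφdef, iterateFrobenius_def, hq]
  have hkey : ∀ i ∈ Finset.Icc a b, φ (α ^ i) = α ^ (q + 1 - i) := by
    intro i hi
    rw [Finset.mem_Icc] at hi
    rw [hφ, ← pow_mul]
    have hmul : α ^ (i * q) * α ^ i = 1 := by
      rw [← pow_add, show i * q + i = (q + 1) * i by ring, pow_mul, hα1, one_pow]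
    have hmul2 : α ^ (q + 1 - i) * α ^ i = 1 := by
      rw [← pow_add, show q + 1 - i + i = q + 1 by omega, hα1]
    exact mul_right_cancel₀ (pow_ne_zero i hαne) (hmul.trans hmul2.symm)
  have hmapφ : g₂.map φ = g₂ := by
    rw [hg₂, Polynomial.map_prod]
    simp only [Polynomial.map_sub, Polynomial.map_X, Polynomial.map_C]
    have hre : ∏ i ∈ Finset.Icc a b, (X - C (φ (α ^ i))) =
        ∏ i ∈ Finset.Icc a b, (X - C (α ^ (q + 1 - i))) :=
      Finset.prod_congr rfl fun i hi => by rw [hkey i hi]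
    rw [hre]
    refine Finset.prod_bij' (fun i _ => q + 1 - i) (fun i _ => q + 1 - i) ?_ ?_ ?_ ?_ ?_
    · intro i hi; simp only [Finset.mem_Icc] at hi ⊢; omega
    · intro i hi; simp only [Finset.mem_Icc] at hi ⊢; omega
    · intro i hi; simp only [Finset.mem_Icc] at hi; show q + 1 - (q + 1 - i) = i; omega
    · intro i hi; simp only [Finset.mem_Icc] at hi; show q + 1 - (q + 1 - i) = i; omega
    · intro i hi; rfl
  have part1 : ∀ n : ℕ, (g₂.coeff n) ^ q = g₂.coeff n := by
    intro n
    have := congrArg (fun p => Polynomial.coeff p n) hmapφ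
    simpa [Polynomial.coeff_map, hφ] using this
  -- range f equals the fixed points of x ↦ x ^ q
  have hrange : ∀ x : E, x ^ q = x → x ∈ Set.range f := by
    intro x hx
    set P : Polynomial E := X ^ q - X with hP
    have hPne : P ≠ 0 := by
      have hc : P.coeff q = 1 := by
        rw [hP, Polynomial.coeff_sub, Polynomial.coeff_X_pow, if_pos rfl,
          Polynomial.coeff_X, if_neg (by omega), sub_zero]
      intro h0; rw [h0] at hc; simp at hc
    have hdeg : P.natDegree ≤ q := by
      refine le_trans (Polynomial.natDegree_sub_le _ _) ?_
      simp only [Polynomial.natDegree_X_pow, Polynomial.natDegree_X]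
      omega
    have hsub : (Finset.univ.image f) ⊆ P.roots.toFinset := by
      intro y hy
      rw [Finset.mem_image] at hy
      obtain ⟨z, _, rfl⟩ := hy
      rw [Multiset.mem_toFinset, Polynomial.mem_roots hPne]
      show Polynomial.eval _ _ = 0
      rw [hP, Polynomial.eval_sub, Polynomial.eval_pow, Polynomial.eval_X, hf z, sub_self]
    have hcard1 : q ≤ (Finset.univ.image f).card := by
      rw [Finset.card_image_of_injective _ f.injective, Finset.card_univ, hF]
    have hcard2 : P.roots.toFinset.card ≤ q :=
      le_trans (Multiset.toFinset_card_le _) (le_trans (Polynomial.card_roots' P) hdeg)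
    have hEq : Finset.univ.image f = P.roots.toFinset :=
      Finset.eq_of_subset_of_card_le hsub (by omega)
    have hxT : x ∈ P.roots.toFinset := by
      rw [Multiset.mem_toFinset, Polynomial.mem_roots hPne]
      show Polynomial.eval _ _ = 0
      rw [hP, Polynomial.eval_sub, Polynomial.eval_pow, Polynomial.eval_X, hx, sub_self]
    rw [← hEq, Finset.mem_image] at hxT
    obtain ⟨z, _, rfl⟩ := hxT
    exact ⟨z, rfl⟩
  -- lift g₂ to F
  have hg₂monic : g₂.Monic := hg₂ ▸ Polynomial.monic_prod_of_monic _ _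
    (fun i _ => Polynomial.monic_X_sub_C _)
  have hg₂deg : g₂.natDegree = 2 * μ + 2 := by
    rw [hg₂, Polynomial.natDegree_prod_of_monic _ _ (fun i _ => Polynomial.monic_X_sub_C _)]
    simp only [Polynomial.natDegree_X_sub_C]
    rw [Finset.sum_const, smul_eq_mul, mul_one, hcard]
  obtain ⟨g, hgmap, hgdeg0, hgmonic⟩ := Polynomial.lifts_and_natDegree_eq_and_monic
      ((Polynomial.lifts_iff_coeff_lifts g₂).mpr fun n => hrange _ (part1 n)) hg₂monic
  have hgdeg : g.natDegree = 2 * μ + 2 := hgdeg0.trans hg₂deg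
  -- the code as a submodule
  set C : Submodule F (Fin (q + 1) → F) :=
    { carrier := {v | g ∣ pvec v}
      add_mem' := fun {v w} hv hw => by
        show g ∣ pvec (v + w)
        rw [pvec_add]; exact dvd_add hv hw
      zero_mem' := by
        show g ∣ pvec (0 : Fin (q + 1) → F)
        have h0 : pvec (0 : Fin (q + 1) → F) = 0 := by
          ext n; simp [coeff_pvec]
        rw [h0]; exact dvd_zero g
      smul_mem' := fun c v hv => by
        show g ∣ pvec (c • v)
        rw [pvec_smul]; exact Dvd.dvd.mul_left hv _ } with hCdef
  have hmemC : ∀ v : Fin (q + 1) → F, v ∈ C ↔ g ∣ pvec v := fun v => Iff.rfl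
  have hmem2 : ∀ v : Fin (q + 1) → F,
      v ∈ C ↔ g₂ ∣ (∑ i : Fin (q + 1), Polynomial.C (f (v i)) * Polynomial.X ^ (i : ℕ)) := by
    intro v
    rw [hmemC, show (∑ i : Fin (q + 1), Polynomial.C (f (v i)) * Polynomial.X ^ (i : ℕ))
        = (pvec v).map f by rw [pvec_map, pvec_eq_sum_C], ← hgmap, dvd_map_iff_dvd f hgmonic]
  -- dimension setup
  set k := q - 1 - 2 * μ with hk
  have hk1 : 1 ≤ k := by omega
  have hkq : k + (2 * μ + 2) = q + 1 := by omega
  set L : (Fin k → F) →ₗ[F] Polynomial F :=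
    ∑ i : Fin k, (Polynomial.monomial (i : ℕ)).comp (LinearMap.proj i) with hL
  have hLv : ∀ u : Fin k → F, L u = pvec u := by
    intro u
    rw [hL, LinearMap.sum_apply, pvec]
    exact Finset.sum_congr rfl fun i _ => rfl
  set T : (Fin k → F) →ₗ[F] (Fin (q + 1) → F) :=
    (LinearMap.pi fun i : Fin (q + 1) => Polynomial.lcoeff F (i : ℕ)).comp
      ((LinearMap.mulLeft F g).comp L) with hT
  have hTval : ∀ (u : Fin k → F) (i : Fin (q + 1)), T u i = (g * pvec u).coeff i := by
    intro u i
    rw [hT]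
    simp [LinearMap.pi_apply, Polynomial.lcoeff_apply, LinearMap.mulLeft_apply, hLv]
  have hdegmul : ∀ u : Fin k → F, (g * pvec u).natDegree ≤ q := by
    intro u
    by_cases h0 : pvec u = 0
    · rw [h0, mul_zero]; simp
    · rw [Polynomial.natDegree_mul hgmonic.ne_zero h0, hgdeg]
      have := pvec_natDegree_le u
      omega
  have hrangeT : LinearMap.range T = C := by
    apply le_antisymm
    · rintro v ⟨u, rfl⟩
      show g ∣ pvec (T u)
      have hTu : T u = fun i : Fin (q + 1) => (g * pvec u).coeff i := funext fun i => hTval u i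
      rw [hTu, pvec_eq_self _ (lt_of_le_of_lt (hdegmul u) (by omega))]
      exact Dvd.intro _ rfl
    · intro v hv
      obtain ⟨h, hh⟩ : g ∣ pvec v := hv
      by_cases h0 : pvec v = 0
      · have hv0 : v = 0 := pvec_inj v h0
        rw [hv0]; exact (LinearMap.range T).zero_mem
      · have hhne : h ≠ 0 := fun hz => h0 (by rw [hh, hz, mul_zero])
        have hdegv : (pvec v).natDegree ≤ q := le_trans (pvec_natDegree_le v) (by omega)
        have hdegh : h.natDegree ≤ k - 1 := by
          have hnd := Polynomial.natDegree_mul hgmonic.ne_zero hhne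
          rw [← hh] at hnd
          omega
        refine ⟨fun j : Fin k => h.coeff j, ?_⟩
        have hpu : pvec (fun j : Fin k => h.coeff j) = h := pvec_eq_self _ (by omega)
        funext i
        rw [hTval, hpu, ← hh, coeff_pvec, dif_pos i.isLt]
  have hTinj : Function.Injective T := by
    refine LinearMap.ker_eq_bot.mp (LinearMap.ker_eq_bot'.mpr ?_)
    intro u hu
    have hcoeffs : ∀ i : Fin (q + 1), (g * pvec u).coeff i = 0 := fun i => by
      rw [← hTval u i, hu]; rfl
    have hgz : g * pvec u = 0 := by
      ext n
      rw [Polynomial.coeff_zero]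
      by_cases hn : n < q + 1
      · exact hcoeffs ⟨n, hn⟩
      · exact Polynomial.coeff_eq_zero_of_natDegree_lt (lt_of_le_of_lt (hdegmul u) (by omega))
    rcases mul_eq_zero.mp hgz with h1 | h2
    · exact absurd h1 hgmonic.ne_zero
    · exact pvec_inj u h2
  have hfinrank : Module.finrank F C = q - 1 - 2 * μ := by
    rw [← hrangeT]
    rw [LinearMap.finrank_range_of_inj hTinj]
    exact Module.finrank_fin_fun F
  -- evaluation of pvec
  have heval_pvec : ∀ (u : Fin (q + 1) → E) (x : E),
      Polynomial.eval x (pvec u) = ∑ i : Fin (q + 1), u i * x ^ (i : ℕ) := by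
    intro u x
    rw [pvec, Polynomial.eval_finset_sum]
    exact Finset.sum_congr rfl fun i _ => by rw [Polynomial.eval_monomial]
  -- minimum distance lower bound
  have hlow : ∀ v ∈ C, v ≠ 0 → 2 * μ + 3 ≤ hammingNorm v := by
    intro v hv hvne
    by_contra hcon
    push_neg at hcon
    have hnormdef : hammingNorm v = (Finset.univ.filter (fun i => v i ≠ 0)).card := rfl
    set s : Finset (Fin (q + 1)) := Finset.univ.filter (fun i => v i ≠ 0) with hs
    set w := s.card with hw
    have hw2 : w ≤ 2 * μ + 2 := by omega
    have hw1 : 1 ≤ w := by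
      rcases Finset.eq_empty_or_nonempty s with he | hne
      · exfalso
        apply hvne
        funext i
        by_contra hvi
        have hi : i ∈ s := by rw [hs]; exact Finset.mem_filter.mpr ⟨Finset.mem_univ i, hvi⟩
        rw [he] at hi
        exact absurd hi (Finset.notMem_empty i)
      · exact Finset.card_pos.mpr hne
    set e := s.orderIsoOfFin rfl with he
    have hvs : ∀ r : Fin w, v ((e r : s) : Fin (q + 1)) ≠ 0 := fun r =>
      (Finset.mem_filter.mp (e r).2).2
    have hQdvd : g₂ ∣ (pvec v).map f := by
      rw [← hgmap, dvd_map_iff_dvd f hgmonic]; exact hv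
    have hroot : ∀ i ∈ Finset.Icc a b, Polynomial.eval (α ^ i) ((pvec v).map f) = 0 := by
      intro i hi
      refine Polynomial.eval_eq_zero_of_dvd_of_eval_eq_zero
        (dvd_trans (Finset.dvd_prod_of_mem _ hi) (hg₂ ▸ hQdvd)) ?_
      rw [Polynomial.eval_sub, Polynomial.eval_X, Polynomial.eval_C, sub_self]
    have hy : ∀ t : Fin w,
        ∑ r : Fin w, (f (v ((e r : s) : Fin (q + 1)))) *
          ((α ^ (((e r : s) : Fin (q + 1)) : ℕ)) ^ (a + (t : ℕ))) = 0 := by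
      intro t
      have hit : a + (t : ℕ) ∈ Finset.Icc a b := by
        rw [Finset.mem_Icc]
        have := t.isLt
        omega
      have h0 := hroot _ hit
      rw [pvec_map, heval_pvec] at h0
      have hsum : ∑ i : Fin (q + 1), f (v i) * (α ^ (a + (t : ℕ))) ^ (i : ℕ)
          = ∑ i ∈ s, f (v i) * (α ^ (a + (t : ℕ))) ^ (i : ℕ) := by
        refine (Finset.sum_subset (Finset.subset_univ s) ?_).symm
        intro i _ hi
        have : v i = 0 := by
          by_contra hvi
          exact hi (by rw [hs]; exact Finset.mem_filter.mpr ⟨Finset.mem_univ i, hvi⟩)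
        rw [this, map_zero, zero_mul]
      rw [hsum] at h0
      rw [← h0]
      rw [← Finset.sum_coe_sort s (fun i => f (v i) * (α ^ (a + (t : ℕ))) ^ (i : ℕ))]
      refine Fintype.sum_equiv e.toEquiv _ _ fun r => ?_
      have hpc : ∀ (x : E) (i j : ℕ), (x ^ i) ^ j = (x ^ j) ^ i := fun x i j => by
        rw [← pow_mul, ← pow_mul, Nat.mul_comm]
      rw [hpc]
      rfl
    have hy0 : (fun r : Fin w => f (v ((e r : s) : Fin (q + 1)))) = 0 := by
      refine vandermonde_vanish (fun r => α ^ (((e r : s) : Fin (q + 1)) : ℕ)) ?_ ?_ a _ hy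
      · intro r r' hrr
        have hj := hα.pow_inj (Fin.isLt _) (Fin.isLt _) hrr
        have : ((e r : s) : Fin (q + 1)) = ((e r' : s) : Fin (q + 1)) := Fin.ext hj
        exact e.injective (Subtype.ext this)
      · intro r
        exact pow_ne_zero _ hαne
    have := congrFun hy0 ⟨0, hw1⟩
    simp only [Pi.zero_apply] at this
    exact hvs ⟨0, hw1⟩ (by
      have := (map_eq_zero_iff f f.injective).mp this
      exact this)
  -- existence of a minimum weight codeword
  have hexist : ∃ v ∈ C, v ≠ 0 ∧ hammingNorm v = 2 * μ + 3 := by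
    set v : Fin (q + 1) → F := fun i => g.coeff i with hv
    have hpv : pvec v = g := pvec_eq_self g (by omega)
    have hvC : v ∈ C := by
      show g ∣ pvec v
      rw [hpv]
    have hvne : v ≠ 0 := by
      intro h0
      have h1 := congrFun h0 ⟨2 * μ + 2, by omega⟩
      rw [hv] at h1
      simp only [Pi.zero_apply] at h1
      have h2 : g.coeff (2 * μ + 2) = 1 := by
        rw [← hgdeg]; exact hgmonic.coeff_natDegree
      exact one_ne_zero (h2.symm.trans h1)
    refine ⟨v, hvC, hvne, le_antisymm ?_ (hlow v hvC hvne)⟩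
    have hnormdef : hammingNorm v = (Finset.univ.filter (fun i => v i ≠ 0)).card := rfl
    rw [hnormdef]
    have hmapsto : ∀ i ∈ Finset.univ.filter (fun i : Fin (q + 1) => v i ≠ 0),
        (i : ℕ) ∈ g.support := by
      intro i hi
      rw [Polynomial.mem_support_iff]
      exact (Finset.mem_filter.mp hi).2
    calc (Finset.univ.filter (fun i => v i ≠ 0)).card
        ≤ g.support.card := Finset.card_le_card_of_injOn (fun i => (i : ℕ)) hmapsto
          (fun i _ j _ hij => Fin.ext hij)
      _ ≤ 2 * μ + 3 := by
          have := Finset.card_le_card (Polynomial.supp_subset_range_natDegree_succ (p := g))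
          rw [Finset.card_range, hgdeg] at this
          exact this
  -- cyclicity
  have hcyc : ∀ v ∈ C,
      (fun i : Fin (q + 1) => if i = 0 then v (Fin.last q) else v (i - 1)) ∈ C := by
    intro v hv
    show g ∣ pvec (fun i : Fin (q + 1) => if i = 0 then v (Fin.last q) else v (i - 1))
    have hxq : g ∣ (X : Polynomial F) ^ (q + 1) - 1 := by
      rw [← dvd_map_iff_dvd f hgmonic, hgmap]
      have hmap1 : ((X : Polynomial F) ^ (q + 1) - 1).map f = (X : Polynomial E) ^ (q + 1) - 1 := by
        rw [Polynomial.map_sub, Polynomial.map_pow, Polynomial.map_X, Polynomial.map_one]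
      rw [hmap1, hg₂]
      refine prod_dvd_X_pow_sub_one hα (by omega) _ (fun i hi => ?_)
      rw [Finset.mem_Icc] at hi
      omega
    have hiden : pvec (fun i : Fin (q + 1) => if i = 0 then v (Fin.last q) else v (i - 1)) =
        X * pvec v - Polynomial.C (v (Fin.last q)) * ((X : Polynomial F) ^ (q + 1) - 1) := by
      ext n
      rw [coeff_pvec]
      cases n with
      | zero =>
        rw [dif_pos (Nat.succ_pos q)]
        have h2 : (⟨0, Nat.succ_pos q⟩ : Fin (q + 1)) = 0 := rfl
        rw [h2, if_pos rfl]
        rw [Polynomial.coeff_sub, Polynomial.coeff_C_mul, Polynomial.coeff_sub,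
          Polynomial.coeff_X_pow, Polynomial.mul_coeff_zero, Polynomial.coeff_X_zero, zero_mul,
          Polynomial.coeff_one, if_neg (show ¬ ((0 : ℕ) = q + 1) by omega),
          if_pos (rfl : (0 : ℕ) = 0)]
        ring
      | succ n =>
        rw [Polynomial.coeff_sub, Polynomial.coeff_C_mul, Polynomial.coeff_sub,
          Polynomial.coeff_X_pow, Polynomial.coeff_X_mul, Polynomial.coeff_one,
          if_neg (show ¬ (n + 1 = 0) by omega), coeff_pvec]
        by_cases hn : n + 1 < q + 1
        · rw [dif_pos hn, dif_pos (show n < q + 1 by omega),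
            if_neg (show ¬ (n + 1 = q + 1) by omega)]
          have hne0 : (⟨n + 1, hn⟩ : Fin (q + 1)) ≠ 0 := by
            intro hc
            have := congrArg Fin.val hc
            simp at this
          rw [if_neg hne0]
          have hsub : ((⟨n + 1, hn⟩ : Fin (q + 1)) - 1) = (⟨n, by omega⟩ : Fin (q + 1)) := by
            apply Fin.ext
            rw [Fin.coe_sub_one, if_neg hne0]
            simp
          rw [hsub]
          ring
        · rw [dif_neg hn]
          by_cases hq1 : n + 1 = q + 1
          · rw [if_pos hq1, dif_pos (show n < q + 1 by omega)]
            have hlast : (⟨n, show n < q + 1 by omega⟩ : Fin (q + 1)) = Fin.last q := by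
              apply Fin.ext
              simp only [Fin.val_last]
              omega
            rw [hlast]
            ring
          · rw [if_neg hq1, dif_neg (show ¬ (n < q + 1) by omega)]
            ring
    rw [hiden]
    exact dvd_sub (Dvd.dvd.mul_left hv X) (Dvd.dvd.mul_left hxq _)
  refine ⟨part1, C, ?_, hfinrank, hlow, hexist, hcyc⟩
  ext v
  exact hmem2 v
end

section
/- Let q be an odd prime power, ω a generator of the multiplicative group of F_{q²}, α = ω^{q-1}, and μ ≥ 0 an integer with 2μ ≤ q. Let g₃(z) = ∏_{i=1}^{μ} (z - ω·α^i)(z - ω·α^{1-i}) ∈ F_{q²}[z]. Then every coefficient of g₃ lies in F_q (i.e., is fixed by x ↦ x^q), and g₃(z) divides z^{q+1} - ω^{q+1} in F_{q²}[z]. -/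
open Polynomial

/-- For `q` an odd prime power, `ω` a generator of the multiplicative group of
`F_{q²}`, `α = ω^(q-1)`, `2μ ≤ q`, and `g₃(z) = ∏_{i=1}^{μ} (z - ω·α^i)(z - ω·α^(1-i))`:
every coefficient of `g₃` lies in `F_q` (is fixed by `x ↦ x^q`), and `g₃` divides
`z^(q+1) - ω^(q+1)` in `F_{q²}[z]`. -/
theorem stmt_5 (q : ℕ) (hq : Odd q) (E : Type) [Field E] [Fintype E]
    (hE : Fintype.card E = q ^ 2)
    (ω : E) (hω : IsPrimitiveRoot ω (q ^ 2 - 1)) (μ : ℕ) (hμ : 2 * μ ≤ q)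
    (g₃ : Polynomial E)
    (hg₃ : g₃ = ∏ i ∈ Finset.Icc 1 μ,
      ((Polynomial.X - Polynomial.C (ω * (ω ^ (q - 1)) ^ (i : ℤ))) *
       (Polynomial.X - Polynomial.C (ω * (ω ^ (q - 1)) ^ (1 - (i : ℤ)))))) :
    (∀ n : ℕ, (g₃.coeff n) ^ q = g₃.coeff n) ∧
    g₃ ∣ (Polynomial.X ^ (q + 1) - Polynomial.C (ω ^ (q + 1))) := by
  have hEcard : 1 < Fintype.card E := Fintype.one_lt_card
  have h2 : 2 ≤ q := by
    by_contra h
    push_neg at h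
    interval_cases q <;> simp_all
  have hN : 0 < q ^ 2 - 1 := by
    have h4 : 2 * 2 ≤ q * q := Nat.mul_le_mul h2 h2
    have hsq : q ^ 2 = q * q := sq q
    omega
  have hω0 : ω ≠ 0 := by
    intro h
    have h1 : ω ^ (q ^ 2 - 1) = 1 := hω.pow_eq_one
    rw [h, zero_pow hN.ne'] at h1
    exact one_ne_zero h1.symm
  set α := ω ^ (q - 1) with hαdef
  have hα0 : α ≠ 0 := pow_ne_zero _ hω0
  have hfac : (q - 1) * (q + 1) = q ^ 2 - 1 := by
    rcases Nat.exists_eq_add_of_le h2 with ⟨k, rfl⟩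
    have e1 : 2 + k - 1 = k + 1 := by omega
    rw [e1]
    have h1 : (k + 1) * (2 + k + 1) = k * k + 4 * k + 3 := by ring
    have h2' : (2 + k) ^ 2 = k * k + 4 * k + 4 := by ring
    omega
  have hα1 : α ^ (q + 1) = 1 := by rw [← pow_mul, hfac]; exact hω.pow_eq_one
  have hα1z : α ^ ((q : ℤ) + 1) = 1 := by
    rw [show ((q : ℤ) + 1) = ((q + 1 : ℕ) : ℤ) by push_cast; ring, zpow_natCast, hα1]
  have hdvd : ∀ m : ℤ, α ^ m = 1 → ((q : ℤ) + 1) ∣ m := by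
    intro m hm
    rw [hαdef, ← zpow_natCast ω (q - 1), ← zpow_mul] at hm
    have h1 := (hω.zpow_eq_one_iff_dvd _).mp hm
    have hcast : ((q ^ 2 - 1 : ℕ) : ℤ) = ((q : ℤ) - 1) * ((q : ℤ) + 1) := by
      have : (1 : ℕ) ≤ q ^ 2 := by omega
      push_cast [Nat.cast_sub this]
      ring
    have hcast2 : ((q - 1 : ℕ) : ℤ) = (q : ℤ) - 1 := by
      have : (1 : ℕ) ≤ q := by omega
      push_cast [Nat.cast_sub this]; ring
    rw [hcast, hcast2] at h1
    have hq1 : ((q : ℤ) - 1) ≠ 0 := by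
      have : (2 : ℤ) ≤ (q : ℤ) := by exact_mod_cast h2
      omega
    exact (mul_dvd_mul_iff_left hq1).mp h1
  have hne : ∀ j k : ℤ, j ≠ k → |j - k| < (q : ℤ) + 1 → ω * α ^ j ≠ ω * α ^ k := by
    intro j k hjk habs heq
    have h1 : α ^ j = α ^ k := mul_left_cancel₀ hω0 heq
    have h2' : α ^ (j - k) = 1 := by
      rw [zpow_sub₀ hα0, h1, div_self (zpow_ne_zero _ hα0)]
    have h3 := hdvd _ h2'
    have := Int.eq_zero_of_abs_lt_dvd h3 habs
    omega
  have hkey : ∀ j : ℤ, (ω * α ^ j) ^ q = ω * α ^ (1 - j) := by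
    intro j
    have hωq : ω ^ q = ω * α := by
      conv_lhs => rw [show q = 1 + (q - 1) by omega, pow_add, pow_one]
    have hj : (1 : ℤ) + j * q = (1 - j) + ((q : ℤ) + 1) * j := by ring
    calc (ω * α ^ j) ^ q = ω ^ q * (α ^ j) ^ q := mul_pow _ _ _
      _ = (ω * α) * α ^ (j * (q : ℤ)) := by
          rw [hωq, ← zpow_natCast (α ^ j) q, ← zpow_mul]
      _ = ω * α ^ (1 + j * (q : ℤ)) := by
          rw [zpow_add₀ hα0, zpow_one]; ring
      _ = ω * (α ^ ((1 : ℤ) - j) * (α ^ ((q : ℤ) + 1)) ^ j) := by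
          rw [hj, zpow_add₀ hα0, ← zpow_mul]
      _ = ω * α ^ ((1 : ℤ) - j) := by rw [hα1z, one_zpow, mul_one]
  constructor
  · -- coefficients fixed by x ↦ x^q
    obtain ⟨p, hp⟩ := CharP.exists E
    haveI := hp
    obtain ⟨n, hpp, hcard⟩ := FiniteField.card E p
    have hqdvd : q ∣ p ^ (n : ℕ) := by
      rw [← hcard, hE]; exact dvd_pow_self q two_ne_zero
    obtain ⟨m, hm, hqm⟩ := (Nat.dvd_prime_pow hpp).mp hqdvd
    haveI : Fact p.Prime := ⟨hpp⟩
    haveI : ExpChar E p := ExpChar.prime hpp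
    set φ := iterateFrobenius E p m with hφdef
    have hφ : ∀ x : E, φ x = x ^ q := fun x => by
      rw [hφdef, iterateFrobenius_def, ← hqm]
    have hmap : g₃.map φ = g₃ := by
      rw [hg₃, Polynomial.map_prod]
      refine Finset.prod_congr rfl fun i hi => ?_
      rw [Polynomial.map_mul, Polynomial.map_sub, Polynomial.map_sub, map_X, map_C,
        map_C, hφ, hφ, hkey, hkey, sub_sub_cancel]
      ring
    intro n'
    have h := congrArg (fun pp : Polynomial E => pp.coeff n') hmap
    simpa [Polynomial.coeff_map, hφ] using h
  · -- divisibility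
    have hroot : ∀ j : ℤ, (X - C (ω * α ^ j)) ∣ (X ^ (q + 1) - C (ω ^ (q + 1))) := by
      intro j
      rw [dvd_iff_isRoot, IsRoot, eval_sub, eval_pow, eval_X, eval_C, sub_eq_zero,
        mul_pow, ← zpow_natCast (α ^ j), ← zpow_mul, mul_comm j, zpow_mul,
        show ((q + 1 : ℕ) : ℤ) = (q : ℤ) + 1 from by push_cast; ring, hα1z,
        one_zpow, mul_one]
    have hcop : ∀ a b : E, a ≠ b → IsCoprime (X - C a : Polynomial E) (X - C b) := by
      intro a b hab
      have h : (b - a) ≠ 0 := sub_ne_zero.mpr (Ne.symm hab)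
      refine ⟨C (b - a)⁻¹, -C (b - a)⁻¹, ?_⟩
      rw [← C_1, ← inv_mul_cancel₀ h, C_mul, C_sub]
      ring
    rw [hg₃]
    apply Finset.prod_dvd_of_coprime
    · intro i hi j hj hij
      simp only [Finset.coe_Icc, Set.mem_Icc] at hi hj
      have hi1 := hi.1; have hi2 := hi.2; have hj1 := hj.1; have hj2 := hj.2
      have hijn : i ≠ j := hij
      apply IsCoprime.mul_left <;> apply IsCoprime.mul_right <;>
        apply hcop <;> apply hne <;>
        first
          | (intro hcontra; omega)
          | (rw [abs_lt]; constructor <;> omega)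
    · intro i hi
      simp only [Finset.mem_Icc] at hi
      refine (hcop _ _ (hne (i : ℤ) (1 - (i : ℤ)) ?_ ?_)).mul_dvd (hroot _) (hroot _)
      · intro hcontra; omega
      · rw [abs_lt]; constructor <;> omega
end

section
/- Let q be an odd prime power, ω a generator of the multiplicative group of F_{q²}, α = ω^{q-1}, and μ ≥ 0 an integer with 2μ ≤ q. Let g₃(z) = ∏_{i=1}^{μ} (z - ω·α^i)(z - ω·α^{1-i}) ∈ F_{q²}[z]. Then the code C = {v ∈ F_q^{q+1} : g₃(z) divides Σ_{i=0}^{q} v_i z^i in F_{q²}[z]} is an F_q-linear constacyclic code with shift constant λ = ω^{q+1} ∈ F_q (i.e., (c_0,…,c_q) ∈ C implies (λ·c_q, c_0, …, c_{q-1}) ∈ C) of length q+1, dimension q + 1 - 2μ, and minimum distance exactly 2μ + 1; in particular C is an MDS code with parameters [q+1, q+1-2μ, 2μ+1]_q. -/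
open Polynomial Finset

lemma prodIcc {M : Type*} [CommMonoid M] (G : ℤ → M) (μ : ℕ) :
    ∏ i ∈ Finset.Icc 1 μ, (G (i : ℤ) * G (1 - (i : ℤ))) =
      ∏ i ∈ Finset.Icc (1 - (μ : ℤ)) (μ : ℤ), G i := by
  induction μ with
  | zero => simp
  | succ m ih =>
    have h1 : Finset.Icc (1 : ℕ) (m + 1) = insert (m+1) (Finset.Icc 1 m) := by
      ext x; simp [Finset.mem_Icc]; omega
    have h2 : Finset.Icc (1 - ((m : ℤ)+1)) ((m : ℤ)+1) =
        insert (-(m : ℤ)) (insert ((m : ℤ)+1) (Finset.Icc (1 - (m : ℤ)) (m : ℤ))) := by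
      ext x; simp only [Finset.mem_insert, Finset.mem_Icc]; omega
    rw [h1, Finset.prod_insert (by simp [Finset.mem_Icc])]
    push_cast
    rw [h2, Finset.prod_insert (by simp only [Finset.mem_insert, Finset.mem_Icc]; omega),
      Finset.prod_insert (by simp only [Finset.mem_insert, Finset.mem_Icc]; omega), ← ih]
    ring_nf
    rw [mul_comm (G (1+(m:ℤ))) (G (-(m:ℤ))), mul_assoc]

lemma coeff_sum_fin {R : Type*} [Semiring R] {m : ℕ} (w : Fin m → R) (i : ℕ) :
    (∑ j : Fin m, Polynomial.C (w j) * Polynomial.X ^ (j : ℕ)).coeff i =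
      if h : i < m then w ⟨i, h⟩ else 0 := by
  rw [Polynomial.finset_sum_coeff]
  simp only [Polynomial.coeff_C_mul, Polynomial.coeff_X_pow]
  by_cases h : i < m
  · rw [dif_pos h, Finset.sum_eq_single (⟨i, h⟩ : Fin m)]
    · simp
    · intro b _ hb
      simp only [mul_ite, mul_one, mul_zero, ite_eq_right_iff]
      intro hbi
      exact absurd (Fin.ext hbi.symm) hb
    · simp
  · rw [dif_neg h]
    apply Finset.sum_eq_zero
    intro b _
    have : i ≠ (b : ℕ) := by omega
    simp [this]

lemma natDegree_sum_fin_lt {R : Type*} [Semiring R] {m : ℕ} (w : Fin m → R)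
    (hne : (∑ j : Fin m, Polynomial.C (w j) * Polynomial.X ^ (j : ℕ)) ≠ 0) :
    (∑ j : Fin m, Polynomial.C (w j) * Polynomial.X ^ (j : ℕ)).natDegree < m := by
  by_contra h
  push_neg at h
  have := Polynomial.leadingCoeff_ne_zero.mpr hne
  rw [Polynomial.leadingCoeff, coeff_sum_fin, dif_neg (by omega)] at this
  exact this rfl

lemma fin_succ_sub_one {q : ℕ} (i : Fin q) : (i.succ : Fin (q+1)) - 1 = i.castSucc := by
  have hq : 1 ≤ q := i.pos
  apply Fin.ext
  rw [Fin.sub_def]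
  simp only [Fin.val_succ, Fin.coe_castSucc, Fin.val_one']
  rw [Nat.mod_eq_of_lt (by omega : 1 < q + 1)]
  have h2 : q + 1 - 1 + ((i:ℕ) + 1) = (i:ℕ) + (q+1) := by omega
  rw [h2, Nat.add_mod_right, Nat.mod_eq_of_lt (by omega : (i:ℕ) < q + 1)]

lemma card_filter_lt (n c : ℕ) (h : c ≤ n) :
    (Finset.filter (fun i : Fin n => (i:ℕ) < c) Finset.univ).card = c := by
  have : (Finset.filter (fun i : Fin n => (i:ℕ) < c) Finset.univ) =
      Finset.map (Fin.castLEEmb h) Finset.univ := by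
    ext i
    simp only [Finset.mem_filter, Finset.mem_univ, true_and, Finset.mem_map,
      Fin.castLEEmb_apply]
    constructor
    · intro hi; exact ⟨⟨i, hi⟩, rfl⟩
    · rintro ⟨j, rfl⟩; exact j.isLt
  rw [this, Finset.card_map, Finset.card_univ, Fintype.card_fin]

lemma frob_exists (E : Type) [Field E] [Fintype E] (q : ℕ) (hq3 : 3 ≤ q)
    (hE : Fintype.card E = q ^ 2) : ∃ φ : E →+* E, ∀ x, φ x = x ^ q := by
  set p := ringChar E with hp
  haveI : CharP E p := ringChar.charP E
  obtain ⟨k, hpprime, hcard⟩ := FiniteField.card E p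
  haveI : Fact p.Prime := ⟨hpprime⟩
  have hqdvd : q ∣ p ^ (k : ℕ) := by
    rw [← hcard, hE]; exact ⟨q, (sq q)⟩
  obtain ⟨t, ht, hqt⟩ := (Nat.dvd_prime_pow hpprime).mp hqdvd
  haveI : ExpChar E p := ExpChar.prime hpprime
  refine ⟨iterateFrobenius E p t, fun x => ?_⟩
  rw [iterateFrobenius_def, hqt]

lemma range_f (F E : Type) [Field F] [Fintype F] [DecidableEq F] [Field E] [Fintype E]
    (q : ℕ) (hq3 : 3 ≤ q) (hF : Fintype.card F = q) (f : F →+* E)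
    (hf : ∀ x : F, f x ^ q = f x) : ∀ x : E, x ^ q = x → ∃ y, f y = x := by
  classical
  set P : E[X] := X ^ q - X with hP
  have hPne : P ≠ 0 := by
    intro h
    have : P.coeff q = 1 := by
      rw [hP, Polynomial.coeff_sub, Polynomial.coeff_X_pow, Polynomial.coeff_X, if_pos rfl,
        if_neg (by omega : ¬ (1:ℕ) = q), sub_zero]
    rw [h] at this
    simp at this
  have hdeg : P.natDegree ≤ q := by
    apply le_trans (Polynomial.natDegree_sub_le _ _)
    simp [Polynomial.natDegree_X_pow, Polynomial.natDegree_X]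
    omega
  set T : Finset E := P.roots.toFinset with hT
  have hTcard : T.card ≤ q := by
    apply le_trans (Multiset.toFinset_card_le _)
    exact le_trans (Polynomial.card_roots' P) hdeg
  set A : Finset E := Finset.univ.image f with hA
  have hAcard : A.card = q := by
    rw [hA, Finset.card_image_of_injective _ f.injective, Finset.card_univ, hF]
  have hroot : ∀ x : E, x ^ q = x → x ∈ T := by
    intro x hx
    rw [hT, Multiset.mem_toFinset, Polynomial.mem_roots hPne]
    simp [hP, Polynomial.IsRoot, hx]
  have hsub : A ⊆ T := by
    intro x hx
    rw [hA, Finset.mem_image] at hx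
    obtain ⟨y, _, rfl⟩ := hx
    exact hroot _ (hf y)
  have hAT : A = T := Finset.eq_of_subset_of_card_le hsub (by omega)
  intro x hx
  have := hroot x hx
  rw [← hAT, hA, Finset.mem_image] at this
  obtain ⟨y, _, hy⟩ := this
  exact ⟨y, hy⟩

noncomputable def codeMap (F : Type) [Field F] (n m : ℕ) (g : Polynomial F) :
    (Fin m → F) →ₗ[F] (Fin n → F) where
  toFun w := fun i => (g * ∑ j : Fin m, Polynomial.C (w j) * Polynomial.X ^ (j : ℕ)).coeff i
  map_add' w w' := by
    funext i
    simp only [Pi.add_apply, map_add, add_mul, Finset.sum_add_distrib, mul_add,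
      Polynomial.coeff_add]
  map_smul' a w := by
    funext i
    simp only [Pi.smul_apply, smul_eq_mul, map_mul, RingHom.id_apply]
    rw [show (∑ x : Fin m, Polynomial.C a * Polynomial.C (w x) * Polynomial.X ^ (x : ℕ)) =
      Polynomial.C a * ∑ j : Fin m, Polynomial.C (w j) * Polynomial.X ^ (j : ℕ) by
        rw [Finset.mul_sum]; congr 1; funext j; rw [mul_assoc]]
    rw [mul_left_comm, Polynomial.coeff_C_mul]

theorem stmt_6 (q : ℕ) (hq : Odd q) (F E : Type) [Field F] [Fintype F] [DecidableEq F]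
    [Field E] [Fintype E]
    (hF : Fintype.card F = q) (hE : Fintype.card E = q ^ 2)
    (f : F →+* E) (hf : ∀ x : F, f x ^ q = f x)
    (ω : E) (hω : IsPrimitiveRoot ω (q ^ 2 - 1)) (μ : ℕ) (hμ : 2 * μ ≤ q)
    (g₃ : Polynomial E)
    (hg₃ : g₃ = ∏ i ∈ Finset.Icc 1 μ,
      ((Polynomial.X - Polynomial.C (ω * (ω ^ (q - 1)) ^ (i : ℤ))) *
       (Polynomial.X - Polynomial.C (ω * (ω ^ (q - 1)) ^ (1 - (i : ℤ)))))) :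
    ∃ C : Submodule F (Fin (q + 1) → F),
      (C : Set (Fin (q + 1) → F)) =
        {v | g₃ ∣ ∑ i : Fin (q + 1), Polynomial.C (f (v i)) * Polynomial.X ^ (i : ℕ)} ∧
      Module.finrank F C = q + 1 - 2 * μ ∧
      (∀ v ∈ C, v ≠ 0 → 2 * μ + 1 ≤ hammingNorm v) ∧
      (∃ v ∈ C, v ≠ 0 ∧ hammingNorm v = 2 * μ + 1) ∧
      (∃ lam : F, lam ≠ 0 ∧ f lam = ω ^ (q + 1) ∧ ∀ v ∈ C,
        (fun i : Fin (q + 1) => if i = 0 then lam * v (Fin.last q) else v (i - 1)) ∈ C) := by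
  classical
  -- numerology
  have hq2 : 2 ≤ q := by rw [← hF]; exact Fintype.one_lt_card
  have hq3 : 3 ≤ q := by
    rcases hq with ⟨k, hk⟩; omega
  have hqq : q ^ 2 = q * q := sq q
  have hsq9 : 3 * 3 ≤ q * q := Nat.mul_le_mul hq3 hq3
  have hn2 : 0 < q ^ 2 - 1 := by omega
  have hfac : q ^ 2 - 1 = (q - 1) * (q + 1) := by
    have h1 : q ^ 2 = (q - 1) * (q + 1) + 1 := by
      cases q with
      | zero => omega
      | succ n => simp only [Nat.succ_sub_one]; ring
    omega
  set A := ω ^ (q - 1) with hA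
  have hApr : IsPrimitiveRoot A (q + 1) := hω.pow hn2 (by rw [hfac])
  have hωne : ω ≠ 0 := hω.ne_zero (by omega)
  have hAne : A ≠ 0 := pow_ne_zero _ hωne
  have hA1 : A ^ (q + 1) = 1 := hApr.pow_eq_one
  have hA1z : A ^ ((q : ℤ) + 1) = 1 := by
    rw [show ((q:ℤ) + 1) = ((q + 1 : ℕ) : ℤ) by push_cast; ring, zpow_natCast, hA1]
  have hωq : ω ^ q = ω * A := by
    rw [hA, ← pow_succ', Nat.sub_add_cancel (by omega)]
  set r : ℤ → E := fun i => ω * A ^ i with hr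
  have hconj : ∀ i : ℤ, (r i) ^ q = r (1 - i) := by
    intro i
    rw [hr]
    simp only
    rw [mul_pow, hωq]
    have h1 : (A ^ i) ^ q = A ^ (-i) := by
      rw [← zpow_natCast (A ^ i), ← zpow_mul]
      rw [show i * (q:ℤ) = -i + ((q:ℤ)+1) * i by ring, zpow_add₀ hAne, zpow_mul, hA1z,
        one_zpow, mul_one]
    rw [h1, show (1:ℤ) - i = 1 + (-i) by ring, zpow_add₀ hAne, zpow_one]
    ring
  have hlamE : (ω ^ (q+1)) ^ q = ω ^ (q+1) := by
    rw [← pow_mul]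
    have h1 : (q+1) * q = (q+1) + (q^2 - 1) := by
      have : (q+1) * q = (q+1) + (q-1)*(q+1) := by
        cases q with
        | zero => omega
        | succ n => simp only [Nat.succ_sub_one]; ring
      omega
    rw [h1, pow_add, hω.pow_eq_one, mul_one]
  have hroot_lam : ∀ i : ℤ, (r i) ^ (q+1) = ω ^ (q+1) := by
    intro i
    rw [hr]
    simp only
    rw [mul_pow, ← zpow_natCast (A ^ i), ← zpow_mul,
      show i * ((q+1:ℕ):ℤ) = ((q:ℤ)+1) * i by push_cast; ring, zpow_mul, hA1z, one_zpow, mul_one]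
  -- the index set
  set I : Finset ℤ := Finset.Icc (1 - (μ:ℤ)) (μ:ℤ) with hI
  have hg₃I : g₃ = ∏ i ∈ I, (X - C (r i)) := by
    rw [hg₃, hI]
    exact prodIcc (fun i => X - C (ω * A ^ i)) μ
  have hInj : ∀ i ∈ I, ∀ j ∈ I, r i = r j → i = j := by
    intro i hi j hj h
    rw [hr] at h
    simp only at h
    have h2 : A ^ i = A ^ j := mul_left_cancel₀ hωne h
    have h3 : A ^ (i - j) = 1 := by
      rw [zpow_sub₀ hAne, h2, div_self (zpow_ne_zero _ hAne)]
    have h4 : ((q+1 : ℕ) : ℤ) ∣ (i - j) := (hApr.zpow_eq_one_iff_dvd _).mp h3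
    rw [hI, Finset.mem_Icc] at hi hj
    have h5 : |i - j| < ((q+1 : ℕ) : ℤ) := by
      rw [abs_lt]
      have : (2 * μ : ℤ) ≤ q := by exact_mod_cast hμ
      push_cast
      omega
    have := Int.eq_zero_of_abs_lt_dvd h4 h5
    omega
  have hg₃monic : g₃.Monic := by
    rw [hg₃I]; exact monic_prod_of_monic _ _ (fun i _ => monic_X_sub_C _)
  have hIcard : I.card = 2 * μ := by
    rw [hI, Int.card_Icc]
    have : (μ:ℤ) + 1 - (1 - μ) = ((2*μ : ℕ) : ℤ) := by push_cast; ring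
    rw [this, Int.toNat_natCast]
  have hg₃deg : g₃.natDegree = 2 * μ := by
    rw [hg₃I, Polynomial.natDegree_prod _ _ (fun i _ => X_sub_C_ne_zero _)]
    simp only [Polynomial.natDegree_X_sub_C]
    rw [Finset.sum_const, smul_eq_mul, mul_one, hIcard]
  -- Frobenius fixes the coefficients of g₃
  obtain ⟨φ, hφ⟩ := frob_exists E q hq3 hE
  have himg : I.image (fun i => 1 - i) = I := by
    ext x
    simp only [Finset.mem_image, hI, Finset.mem_Icc]
    constructor
    · rintro ⟨i, hi, rfl⟩; omega
    · intro hx; exact ⟨1 - x, by omega, by ring⟩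
  have hmapg₃ : g₃.map φ = g₃ := by
    rw [hg₃I, Polynomial.map_prod]
    have h1 : ∀ i ∈ I, (X - C (r i)).map φ = X - C (r (1 - i)) := by
      intro i _
      rw [Polynomial.map_sub, Polynomial.map_X, Polynomial.map_C, hφ, hconj]
    rw [Finset.prod_congr rfl h1]
    have h2 : ∀ i ∈ I, ∀ j ∈ I, (1 - i : ℤ) = 1 - j → i = j := by
      intro i _ j _ h; omega
    conv_rhs => rw [← himg]
    exact (Finset.prod_image (g := fun i => 1 - i) (f := fun x => X - C (r x)) h2).symm
  have hfix : ∀ k, (g₃.coeff k) ^ q = g₃.coeff k := by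
    intro k
    conv_rhs => rw [← hmapg₃]
    rw [Polynomial.coeff_map, hφ]
  have hrange := range_f F E q hq3 hF f hf
  -- lift g₃ to F
  obtain ⟨g, hg⟩ : ∃ g : F[X], g.map f = g₃ :=
    (Polynomial.mem_lifts g₃).mp ((Polynomial.lifts_iff_coeff_lifts g₃).mpr
      (fun n => hrange _ (hfix n)))
  have hgmonic : g.Monic := by
    apply Polynomial.monic_of_injective f.injective
    rw [hg]; exact hg₃monic
  have hgne : g ≠ 0 := hgmonic.ne_zero
  have hgdeg : g.natDegree = 2 * μ := by
    have := Polynomial.natDegree_map_eq_of_injective f.injective g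
    rw [hg, hg₃deg] at this
    exact this.symm
  -- the linear map and the code
  set m : ℕ := q + 1 - 2 * μ with hm
  have hm2 : 2 * μ + m = q + 1 := by omega
  set M := codeMap F (q+1) m g with hM
  have hMapp : ∀ (w : Fin m → F) (i : Fin (q+1)),
      M w i = (g * ∑ j : Fin m, C (w j) * X ^ (j : ℕ)).coeff i := fun w i => rfl
  -- high coefficients of g * (poly of w) vanish
  have hhigh : ∀ (w : Fin m → F) (i : ℕ), q + 1 ≤ i →
      (g * ∑ j : Fin m, C (w j) * X ^ (j : ℕ)).coeff i = 0 := by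
    intro w i hi
    by_cases hw : (∑ j : Fin m, C (w j) * X ^ (j : ℕ)) = 0
    · rw [hw, mul_zero, Polynomial.coeff_zero]
    · apply Polynomial.coeff_eq_zero_of_natDegree_lt
      calc (g * ∑ j : Fin m, C (w j) * X ^ (j : ℕ)).natDegree
          ≤ g.natDegree + (∑ j : Fin m, C (w j) * X ^ (j : ℕ)).natDegree :=
            Polynomial.natDegree_mul_le
        _ < 2 * μ + m := by
            rw [hgdeg]
            have := natDegree_sum_fin_lt w hw
            omega
        _ ≤ i := by omega
  have hMinj : Function.Injective M := by
    have hker : ∀ w, M w = 0 → w = 0 := by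
      intro w hw
      by_contra hwne
      have hpwne : (∑ j : Fin m, C (w j) * X ^ (j : ℕ)) ≠ 0 := by
        intro h0
        apply hwne
        funext j
        have := coeff_sum_fin w (j : ℕ)
        rw [h0, Polynomial.coeff_zero, dif_pos j.isLt] at this
        simpa using this.symm
      have hprodne : g * (∑ j : Fin m, C (w j) * X ^ (j : ℕ)) ≠ 0 := mul_ne_zero hgne hpwne
      have hd : (g * ∑ j : Fin m, C (w j) * X ^ (j : ℕ)).natDegree < q + 1 := by
        rw [Polynomial.natDegree_mul hgne hpwne, hgdeg]
        have := natDegree_sum_fin_lt w hpwne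
        omega
      have hlead := Polynomial.leadingCoeff_ne_zero.mpr hprodne
      rw [Polynomial.leadingCoeff] at hlead
      apply hlead
      have := congrFun hw ⟨(g * ∑ j : Fin m, C (w j) * X ^ (j : ℕ)).natDegree, hd⟩
      rw [hMapp] at this
      exact this
    intro w w' h
    have : M (w - w') = 0 := by rw [map_sub, h, sub_self]
    have := hker _ this
    exact sub_eq_zero.mp this
  -- map identity
  have hpvmap : ∀ v : Fin (q+1) → F,
      (∑ i : Fin (q+1), C (f (v i)) * X ^ (i : ℕ)) =
      (∑ i : Fin (q+1), C (v i) * X ^ (i : ℕ)).map f := by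
    intro v
    rw [Polynomial.map_sum]
    congr 1
    funext i
    rw [Polynomial.map_mul, Polynomial.map_C, Polynomial.map_pow, Polynomial.map_X]
  have hdvd_iff : ∀ v : Fin (q+1) → F,
      (g₃ ∣ ∑ i : Fin (q+1), C (f (v i)) * X ^ (i : ℕ)) ↔
        g ∣ ∑ i : Fin (q+1), C (v i) * X ^ (i:ℕ) := by
    intro v
    rw [hpvmap, ← hg]
    exact Polynomial.map_dvd_map f f.injective hgmonic
  have hset : ((LinearMap.range M : Submodule F (Fin (q+1) → F)) : Set (Fin (q+1) → F)) =
      {v | g₃ ∣ ∑ i : Fin (q + 1), C (f (v i)) * X ^ (i : ℕ)} := by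
    ext v
    simp only [SetLike.mem_coe, LinearMap.mem_range, Set.mem_setOf_eq]
    rw [hdvd_iff v]
    constructor
    · rintro ⟨w, rfl⟩
      have hpoly : (∑ i : Fin (q+1), C ((M w) i) * X ^ ((i : Fin (q+1)):ℕ)) =
          g * ∑ j : Fin m, C (w j) * X ^ (j:ℕ) := by
        apply Polynomial.ext
        intro k
        rw [coeff_sum_fin]
        by_cases hk : k < q + 1
        · rw [dif_pos hk]; exact (hMapp w ⟨k, hk⟩)
        · rw [dif_neg hk, hhigh w k (by omega)]
      rw [hpoly]
      exact Dvd.intro _ rfl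
    · rintro ⟨h, hh⟩
      refine ⟨fun j => h.coeff j, ?_⟩
      have hpw : (∑ j : Fin m, C (h.coeff (j:ℕ)) * X ^ (j:ℕ)) = h := by
        apply Polynomial.ext
        intro k
        rw [coeff_sum_fin]
        by_cases hk : k < m
        · rw [dif_pos hk]
        · rw [dif_neg hk]
          symm
          by_cases hh0 : h = 0
          · rw [hh0, Polynomial.coeff_zero]
          · apply Polynomial.coeff_eq_zero_of_natDegree_lt
            have hvne : (∑ i : Fin (q+1), C (v i) * X ^ ((i : Fin (q+1)):ℕ)) ≠ 0 := by
              rw [hh]; exact mul_ne_zero hgne hh0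
            have hdeg1 := natDegree_sum_fin_lt v hvne
            rw [hh, Polynomial.natDegree_mul hgne hh0, hgdeg] at hdeg1
            omega
      funext i
      rw [hMapp, hpw, ← hh, coeff_sum_fin, dif_pos i.isLt]
  -- minimum distance lower bound (for members of the set)
  have hmin : ∀ v : Fin (q+1) → F,
      (g₃ ∣ ∑ i : Fin (q + 1), C (f (v i)) * X ^ (i : ℕ)) → v ≠ 0 →
      2 * μ + 1 ≤ hammingNorm v := by
    intro v hv hvne
    by_contra hlt
    push_neg at hlt
    set S : Finset (Fin (q+1)) := Finset.univ.filter (fun i => v i ≠ 0) with hS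
    have hScard : hammingNorm v = S.card := rfl
    have hcard_le : S.card ≤ 2 * μ := by omega
    have hSne : S.Nonempty := by
      obtain ⟨i, hi⟩ := Function.ne_iff.mp hvne
      refine ⟨i, Finset.mem_filter.mpr ⟨Finset.mem_univ i, ?_⟩⟩
      simpa using hi
    have hw0 : 0 < S.card := Finset.card_pos.mpr hSne
    set e := S.orderIsoOfFin rfl with he
    -- evaluation of the codeword polynomial at the roots vanishes
    have heval : ∀ i ∈ I, ∑ t : Fin (q+1), f (v t) * (r i) ^ (t : ℕ) = 0 := by
      intro i hi
      obtain ⟨c, hc⟩ := hv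
      have h1 : Polynomial.eval (r i) g₃ = 0 := by
        rw [hg₃I, Polynomial.eval_prod]
        apply Finset.prod_eq_zero hi
        simp
      have := congrArg (Polynomial.eval (r i)) hc
      rw [Polynomial.eval_mul, h1, zero_mul, Polynomial.eval_finset_sum] at this
      simp only [Polynomial.eval_mul, Polynomial.eval_C, Polynomial.eval_pow,
        Polynomial.eval_X] at this
      exact this
    -- restrict to the support and reindex
    have heval2 : ∀ i ∈ I, ∑ j : Fin S.card, f (v (e j)) * (r i) ^ (((e j : Fin (q+1))) : ℕ) = 0 := by
      intro i hi
      have h1 : ∑ t ∈ S, f (v t) * (r i) ^ (t : ℕ)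
          = ∑ t : Fin (q+1), f (v t) * (r i) ^ (t : ℕ) := by
        apply Finset.sum_subset (Finset.subset_univ S)
        intro x _ hx
        rw [hS, Finset.mem_filter] at hx
        push_neg at hx
        rw [hx (Finset.mem_univ x), map_zero, zero_mul]
      have h2 : ∑ t ∈ S, f (v t) * (r i) ^ (t : ℕ)
          = ∑ j : Fin S.card, f (v (e j)) * (r i) ^ (((e j : Fin (q+1))) : ℕ) := by
        rw [← Finset.sum_coe_sort S]
        exact (Fintype.sum_equiv e.toEquiv _ _ (fun j => rfl)).symm
      rw [← h2, h1]
      exact heval i hi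
    -- the Vandermonde argument
    set x : Fin S.card → E := fun j => A ^ (((e j : Fin (q+1))) : ℕ) with hx
    have hx_inj : Function.Injective x := by
      intro j1 j2 h
      have h1 := hApr.pow_inj (e j1 : Fin (q+1)).isLt (e j2 : Fin (q+1)).isLt h
      have h2 : (e j1 : Fin (q+1)) = (e j2 : Fin (q+1)) := Fin.ext h1
      exact e.injective (Subtype.ext h2)
    set y : Fin S.card → E := fun j =>
      f (v (e j)) * (ω ^ (((e j : Fin (q+1))) : ℕ) * A ^ ((1 - (μ:ℤ)) * (((e j : Fin (q+1))) : ℕ))) with hy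
    have hpowkey : ∀ (k t : ℕ), (r ((1 - (μ:ℤ)) + k)) ^ t
        = (ω ^ t * A ^ ((1 - (μ:ℤ)) * t)) * (A ^ t) ^ k := by
      intro k t
      rw [hr]
      simp only
      rw [mul_pow, ← zpow_natCast (A ^ ((1 - (μ:ℤ)) + k)), ← zpow_mul, add_mul,
        zpow_add₀ hAne, mul_assoc]
      congr 1
      congr 1
      rw [← pow_mul, ← zpow_natCast A (t * k)]
      congr 1
      push_cast
      ring
    have hz : ∀ k : Fin S.card, ∑ j : Fin S.card, y j * x j ^ (k : ℕ) = 0 := by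
      intro k
      have hmem : ((1 - (μ:ℤ)) + k) ∈ I := by
        rw [hI, Finset.mem_Icc]
        have hk2 : (k : ℕ) < 2 * μ := by omega
        have : ((k:ℕ) : ℤ) < 2 * μ := by exact_mod_cast hk2
        omega
      have := heval2 _ hmem
      rw [← this]
      apply Finset.sum_congr rfl
      intro j _
      rw [hy, hx]
      simp only
      rw [hpowkey (k : ℕ) (((e j : Fin (q+1))) : ℕ)]
      ring
    have hy0 := Matrix.eq_zero_of_forall_pow_sum_mul_pow_eq_zero hx_inj hz
    have hj0 : y ⟨0, hw0⟩ = 0 := by rw [hy0]; rfl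
    rw [hy] at hj0
    simp only at hj0
    rcases mul_eq_zero.mp hj0 with h | h
    · have hmem : v (e ⟨0, hw0⟩) ≠ 0 := (Finset.mem_filter.mp (e ⟨0, hw0⟩).2).2
      exact hmem (map_eq_zero_iff f f.injective |>.mp h)
    · rcases mul_eq_zero.mp h with h1 | h1
      · exact pow_ne_zero _ hωne h1
      · exact zpow_ne_zero _ hAne h1
  refine ⟨LinearMap.range M, hset, ?_, ?_, ?_, ?_⟩
  · rw [LinearMap.finrank_range_of_inj hMinj, Module.finrank_fin_fun]
  · intro v hv hvne
    have : v ∈ (LinearMap.range M : Submodule F (Fin (q+1) → F)) := hv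
    rw [← SetLike.mem_coe, hset, Set.mem_setOf_eq] at this
    exact hmin v this hvne
  · -- existence of a codeword of weight exactly 2μ+1
    set π : (Fin (q+1) → F) →ₗ[F] (Fin (q - 2*μ) → F) :=
      LinearMap.funLeft F F (fun j : Fin (q - 2*μ) => Fin.castLE (by omega) j) with hπ
    set π' := π.comp (LinearMap.range M).subtype with hπ'
    have hni : ¬ Function.Injective π' := by
      intro hinj
      have h1 := LinearMap.finrank_le_finrank_of_injective hinj
      rw [Module.finrank_fin_fun, LinearMap.finrank_range_of_inj hMinj,
        Module.finrank_fin_fun] at h1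
      omega
    obtain ⟨a, b, hab, hne_ab⟩ := Function.not_injective_iff.mp hni
    set u := a - b with hu
    have hune : u ≠ 0 := sub_ne_zero.mpr hne_ab
    set v : Fin (q+1) → F := (u : Fin (q+1) → F) with hv
    have hvne : v ≠ 0 := by
      intro h0
      apply hune
      exact Subtype.ext h0
    have hπu : π' u = 0 := by
      rw [hu, map_sub, hab, sub_self]
    have hzero : ∀ i : Fin (q+1), (i:ℕ) < q - 2*μ → v i = 0 := by
      intro i hi
      have h2 := congrFun hπu ⟨(i:ℕ), hi⟩
      have h3 : Fin.castLE (by omega : q - 2*μ ≤ q + 1) (⟨(i:ℕ), hi⟩ : Fin (q - 2*μ)) = i :=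
        Fin.ext rfl
      rw [hπ'] at h2
      simpa [hπ, LinearMap.funLeft, h3] using h2
    have hle : hammingNorm v ≤ 2*μ + 1 := by
      have hsub2 : Finset.univ.filter (fun i => v i ≠ 0) ⊆
          Finset.univ.filter (fun i : Fin (q+1) => ¬ ((i:ℕ) < q - 2*μ)) := by
        intro i hi
        rw [Finset.mem_filter] at *
        exact ⟨hi.1, fun h => hi.2 (hzero i h)⟩
      have h3 := Finset.card_le_card hsub2
      have h4 := Finset.card_filter_add_card_filter_not
        (s := (Finset.univ : Finset (Fin (q+1)))) (p := fun i : Fin (q+1) => (i:ℕ) < q - 2*μ)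
      rw [card_filter_lt (q+1) (q-2*μ) (by omega), Finset.card_univ, Fintype.card_fin] at h4
      have h5 : hammingNorm v = (Finset.univ.filter (fun i => v i ≠ 0)).card := rfl
      omega
    have hvmem : v ∈ LinearMap.range M := u.2
    have hvset : g₃ ∣ ∑ i : Fin (q + 1), C (f (v i)) * X ^ (i:ℕ) := by
      have h6 : v ∈ ((LinearMap.range M : Submodule F (Fin (q+1) → F)) :
        Set (Fin (q+1) → F)) := hvmem
      rw [hset] at h6
      exact h6
    have hge := hmin v hvset hvne
    exact ⟨v, hvmem, hvne, le_antisymm hle hge⟩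
  · -- constacyclic
    obtain ⟨lam, hlam⟩ := hrange (ω ^ (q+1)) hlamE
    have hlamne : lam ≠ 0 := by
      intro h0
      rw [h0, map_zero] at hlam
      exact pow_ne_zero (q+1) hωne hlam.symm
    refine ⟨lam, hlamne, hlam, ?_⟩
    intro v hv
    have hvset : g₃ ∣ ∑ i : Fin (q + 1), C (f (v i)) * X ^ (i:ℕ) := by
      have h6 : v ∈ ((LinearMap.range M : Submodule F (Fin (q+1) → F)) :
        Set (Fin (q+1) → F)) := hv
      rw [hset] at h6
      exact h6
    have hXdvd : g₃ ∣ (X ^ (q+1) - C (ω ^ (q+1))) := by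
      have hne0 : (X ^ (q+1) - C (ω ^ (q+1)) : E[X]) ≠ 0 := X_pow_sub_C_ne_zero (by omega) _
      have hRsub : (I.image r).val ≤ (X ^ (q+1) - C (ω ^ (q+1))).roots := by
        rw [Multiset.le_iff_subset (I.image r).nodup]
        intro a ha
        have ha2 : a ∈ I.image r := ha
        obtain ⟨i, _, rfl⟩ := Finset.mem_image.mp ha2
        rw [Polynomial.mem_roots hne0]
        simp only [Polynomial.IsRoot.def, Polynomial.eval_sub, Polynomial.eval_pow,
          Polynomial.eval_X, Polynomial.eval_C, hroot_lam i, sub_self]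
      have hg₃R : g₃ = ((I.image r).val.map (fun a => X - C a)).prod := by
        rw [hg₃I, ← Finset.prod_image (g := r) (f := fun a => X - C a) hInj]
        rfl
      rw [hg₃R]
      exact dvd_trans (Multiset.prod_dvd_prod_of_le (Multiset.map_le_map hRsub))
        (Polynomial.prod_multiset_X_sub_C_dvd _)
    suffices hmem2 : (fun i : Fin (q+1) => if i = 0 then lam * v (Fin.last q) else v (i - 1)) ∈
        {v : Fin (q+1) → F | g₃ ∣ ∑ i : Fin (q + 1), C (f (v i)) * X ^ (i:ℕ)} by
      rw [← hset] at hmem2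
      exact hmem2
    show g₃ ∣ ∑ i : Fin (q + 1),
      C (f (if i = 0 then lam * v (Fin.last q) else v (i - 1))) * X ^ (i:ℕ)
    have hterm : ∀ i : Fin q,
        (if (i.succ : Fin (q+1)) = 0 then lam * v (Fin.last q) else v (i.succ - 1))
          = v i.castSucc := by
      intro i
      rw [if_neg (Fin.succ_ne_zero i), fin_succ_sub_one]
    have hident : (∑ i : Fin (q+1),
          C (f (if i = 0 then lam * v (Fin.last q) else v (i - 1))) * X ^ (i:ℕ))
        = X * (∑ i : Fin (q+1), C (f (v i)) * X ^ (i:ℕ))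
          - C (f (v (Fin.last q))) * (X ^ (q+1) - C (ω ^ (q+1))) := by
      rw [Fin.sum_univ_succ (f := fun i : Fin (q+1) =>
        C (f (if i = 0 then lam * v (Fin.last q) else v (i - 1))) * X ^ (i:ℕ))]
      rw [Finset.sum_congr rfl (fun i (_ : i ∈ Finset.univ) => by rw [hterm i])]
      rw [Fin.sum_univ_castSucc (f := fun i : Fin (q+1) => C (f (v i)) * X ^ (i:ℕ))]
      have hsum : ∑ i : Fin q, C (f (v i.castSucc)) * X ^ ((i.succ : Fin (q+1)):ℕ)
          = ∑ i : Fin q, X * (C (f (v i.castSucc)) * X ^ ((i.castSucc : Fin (q+1)):ℕ)) := by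
        apply Finset.sum_congr rfl
        intro i _
        rw [Fin.val_succ, Fin.coe_castSucc]
        ring
      rw [hsum, if_pos rfl, map_mul, Polynomial.C_mul, hlam, mul_add, Finset.mul_sum]
      simp only [Fin.val_zero, Fin.val_last, pow_zero, mul_one]
      ring
    rw [hident]
    exact dvd_sub (hvset.mul_left X) (hXdvd.mul_left _)
end

section
/- Let q be a prime power and C ⊆ F_{q²}^n an F_{q²}-linear code of dimension k (not necessarily self-orthogonal) such that every nonzero codeword of the Hermitian dual C* has Hamming weight at least d. Suppose the puncture code P(C) contains a codeword x of Hamming weight r > 0. Then there exists an F_{q²}-linear code D ⊆ F_{q²}^r of some dimension k̃ ≤ k such that D ⊆ D* (Hermitian dual taken in F_{q²}^r) and every nonzero codeword of D* has Hamming weight at least d. -/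
/-!
Write `x_i = y_i ^ (q + 1)` on the support of `x`, which is possible because the norm of
`F_{q²}/F_q` is `z ↦ z ^ (q + 1)` and is surjective. Restricting the codewords of `C` to the
support and rescaling coordinate `i` by `y_i` turns the twisted form `∑ x_i c_i^q c'_i` into the
Hermitian form, so the image `D` of `C` is self-orthogonal. Conversely, a vector `v` orthogonal
to `D` extends by zero to the vector `(y_i^q v_i)_i`, orthogonal to `C` and of the same weight.
-/

open Function

lemma FiniteField.exists_pow_succ_eq_algebraMap {K L : Type*} [Field K] [Field L] [Algebra K L]
    [Fintype K] [Fintype L] {q : ℕ} (hK : Fintype.card K = q) (hL : Fintype.card L = q ^ 2)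
    (b : K) : ∃ z : L, z ^ (q + 1) = algebraMap K L b := by
  obtain ⟨z, rfl⟩ := FiniteField.norm_surjective K L b
  refine ⟨z, ?_⟩
  have hq : 2 ≤ q := hK ▸ Fintype.one_lt_card
  have hexp : (q ^ 2 - 1) / (q - 1) = q + 1 := by
    rw [Nat.div_eq_iff_eq_mul_left (by omega) (Dvd.intro_left _ (Nat.sq_sub_sq q 1).symm),
      Nat.sq_sub_sq]
  rw [FiniteField.algebraMap_norm_eq_pow, Nat.card_eq_fintype_card, Nat.card_eq_fintype_card,
    hK, hL, hexp]

section ScaledPuncture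

variable {ι ι' E : Type*} [CommRing E]

def scaledPuncture (e : ι' → ι) (y : ι' → E) : (ι → E) →ₗ[E] (ι' → E) :=
  LinearMap.pi fun j => y j • LinearMap.proj (e j)

@[simp]
lemma scaledPuncture_apply (e : ι' → ι) (y : ι' → E) (c : ι → E) (j : ι') :
    scaledPuncture e y c j = y j * c (e j) :=
  rfl

variable [Fintype ι'] {e : ι' → ι} (q : ℕ)

lemma sum_scaledPuncture_pow_mul (y : ι' → E) (c c' : ι → E) :
    ∑ j, scaledPuncture e y c j ^ q * scaledPuncture e y c' j =
      ∑ j, y j ^ (q + 1) * c (e j) ^ q * c' (e j) :=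
  Finset.sum_congr rfl fun j _ => by simp only [scaledPuncture_apply]; ring

variable [Fintype ι]

lemma sum_mul_extend_zero (he : Injective e) (a : ι → E) (g : ι' → E) :
    ∑ i, a i * extend e g 0 i = ∑ j, a (e j) * g j :=
  (Fintype.sum_of_injective e he _ _
    (fun i hi => by rw [extend_apply' _ _ _ (by simpa using hi), Pi.zero_apply, mul_zero])
    (fun j => by rw [he.extend_apply])).symm

lemma hammingNorm_extend_zero [DecidableEq E] (he : Injective e) (g : ι' → E) :
    hammingNorm (extend e g 0) = hammingNorm g := by
  simp only [hammingNorm, Finset.card_filter]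
  exact (Fintype.sum_of_injective e he _ _
    (fun i hi => by rw [extend_apply' _ _ _ (by simpa using hi)]; simp)
    (fun j => by rw [he.extend_apply])).symm

lemma sum_scaledPuncture_pow_mul_eq_sum_mul_extend (he : Injective e) (y : ι' → E)
    (c : ι → E) (v : ι' → E) :
    ∑ j, scaledPuncture e y c j ^ q * v j =
      ∑ i, c i ^ q * extend e (fun j => y j ^ q * v j) 0 i := by
  rw [sum_mul_extend_zero he]
  exact Finset.sum_congr rfl fun j _ => by simp only [scaledPuncture_apply]; ring

lemma map_scaledPuncture_isotropic {C : Submodule E (ι → E)} (he : Injective e) {y : ι' → E}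
    {w : ι → E} (hw : ∀ i ∉ Set.range e, w i = 0) (hy : ∀ j, y j ^ (q + 1) = w (e j))
    (hC : ∀ c ∈ C, ∀ c' ∈ C, ∑ i, w i * c i ^ q * c' i = 0) :
    ∀ a ∈ C.map (scaledPuncture e y), ∀ b ∈ C.map (scaledPuncture e y),
      ∑ j, a j ^ q * b j = 0 := by
  rintro _ ⟨c, hc, rfl⟩ _ ⟨c', hc', rfl⟩
  rw [sum_scaledPuncture_pow_mul, ← hC c hc c' hc']
  exact Fintype.sum_of_injective e he _ _ (fun i hi => by simp [hw i hi])
    (fun j => by rw [hy])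

lemma dual_weight_map_scaledPuncture [IsDomain E] [DecidableEq E] {C : Submodule E (ι → E)}
    (he : Injective e) {y : ι' → E} (hy : ∀ j, y j ≠ 0) {d : ℕ}
    (hd : ∀ v : ι → E, (∀ c ∈ C, ∑ i, c i ^ q * v i = 0) → v ≠ 0 → d ≤ hammingNorm v) :
    ∀ v : ι' → E, (∀ a ∈ C.map (scaledPuncture e y), ∑ j, a j ^ q * v j = 0) → v ≠ 0 →
      d ≤ hammingNorm v := by
  intro v hv hv0
  have hweight : hammingNorm (extend e (fun j => y j ^ q * v j) 0) = hammingNorm v := by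
    rw [hammingNorm_extend_zero he]
    simp only [hammingNorm, ne_eq, mul_eq_zero, pow_eq_zero_iff', hy, false_and, false_or]
  refine hweight ▸ hd _ (fun c hc => ?_) ?_
  · rw [← sum_scaledPuncture_pow_mul_eq_sum_mul_extend q he]
    exact hv _ (Submodule.mem_map_of_mem hc)
  · rwa [← hammingNorm_ne_zero_iff, hweight, hammingNorm_ne_zero_iff]

end ScaledPuncture

theorem stmt_9_general (q n k d r : ℕ) (F E : Type) [Field F] [Fintype F] [DecidableEq F]
    [Field E] [Fintype E] [DecidableEq E]
    (hF : Fintype.card F = q) (hE : Fintype.card E = q ^ 2)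
    (f : F →+* E)
    (C : Submodule E (Fin n → E)) (hk : Module.finrank E C = k)
    (hd : ∀ v : Fin n → E, (∀ c ∈ C, ∑ i, (c i) ^ q * v i = 0) → v ≠ 0 → d ≤ hammingNorm v)
    (x : Fin n → F)
    (hx : ∀ c ∈ C, ∀ c' ∈ C, ∑ i, f (x i) * (c i) ^ q * c' i = 0)
    (hr : hammingNorm x = r) :
    ∃ D : Submodule E (Fin r → E),
      Module.finrank E D ≤ k ∧
      (∀ a ∈ D, ∀ b ∈ D, ∑ i, (a i) ^ q * b i = 0) ∧
      (∀ v : Fin r → E, (∀ c ∈ D, ∑ i, (c i) ^ q * v i = 0) → v ≠ 0 →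
        d ≤ hammingNorm v) := by
  let := f.toAlgebra
  let e := Finset.orderEmbOfFin _ hr
  have hrange : Set.range e = {i | x i ≠ 0} := by simp [e]
  have hsupp (j : Fin r) : x (e j) ≠ 0 := hrange.subset (Set.mem_range_self j)
  choose y hy using fun j => FiniteField.exists_pow_succ_eq_algebraMap hF hE (x (e j))
  have hy0 (j : Fin r) : y j ≠ 0 := fun h => hsupp j <| f.injective <| by
    simpa [h] using (hy j).symm
  refine ⟨C.map (scaledPuncture e y), hk ▸ Submodule.finrank_map_le _ _,
    map_scaledPuncture_isotropic q e.injective (fun i hi => ?_) hy hx,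
    dual_weight_map_scaledPuncture q e.injective hy0 hd⟩
  rw [show x i = 0 by simpa [hrange] using hi, map_zero]

/-- For `q` a prime power, `C ⊆ F_{q²}^n` an `F_{q²}`-linear code of dimension
`k` whose Hermitian dual has all nonzero codewords of Hamming weight at least `d`, and
`x ∈ P(C)` of Hamming weight `r > 0`: there exists an `F_{q²}`-linear code `D ⊆ F_{q²}^r`
of dimension `k̃ ≤ k` with `D ⊆ D*` such that every nonzero codeword of `D*` has Hamming
weight at least `d`. -/
theorem stmt_9 (q n k d r : ℕ) (F E : Type) [Field F] [Fintype F] [DecidableEq F]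
    [Field E] [Fintype E] [DecidableEq E]
    (hF : Fintype.card F = q) (hE : Fintype.card E = q ^ 2)
    (f : F →+* E) (hf : ∀ x : F, f x ^ q = f x)
    (C : Submodule E (Fin n → E)) (hk : Module.finrank E C = k)
    (hd : ∀ v : Fin n → E, (∀ c ∈ C, ∑ i, (c i) ^ q * v i = 0) → v ≠ 0 → d ≤ hammingNorm v)
    (x : Fin n → F)
    (hx : ∀ c ∈ C, ∀ c' ∈ C, ∑ i, f (x i) * (c i) ^ q * c' i = 0)
    (hr : hammingNorm x = r) (hr0 : 0 < r) :
    ∃ D : Submodule E (Fin r → E),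
      Module.finrank E D ≤ k ∧
      (∀ a ∈ D, ∀ b ∈ D, ∑ i, (a i) ^ q * b i = 0) ∧
      (∀ v : Fin r → E, (∀ c ∈ D, ∑ i, (c i) ^ q * v i = 0) → v ≠ 0 →
        d ≤ hammingNorm v) :=
  stmt_9_general q n k d r F E hF hE f C hk hd x hx hr
end

section
/- Let q = 2^m with m ≥ 1. Then there exists an F_{q²}-linear code C ⊆ F_{q²}^{q²+2} of dimension 3 such that C ⊆ C* and the Hermitian dual C* has minimum distance exactly 4; in particular C* is an MDS code with parameters [q²+2, q²-1, 4]_{q²}, and a quantum MDS code [[q²+2, q²-4, 4]]_q = [[4^m+2, 4^m-4, 4]]_{2^m} exists. -/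
open Finset

lemma aux_oddsum {K : Type} [Field K] [DecidableEq K] (h2 : (2:K) = 0)
    {s : Finset K} (h0 : (0:K) ∉ s) (h1 : (1:K) ∈ s) (hinv : ∀ t ∈ s, t⁻¹ ∈ s) :
    (∑ _t ∈ s, (1:K)) = 1 := by
  rw [← Finset.add_sum_erase s _ h1]
  have hz : (∑ _t ∈ s.erase 1, (1:K)) = 0 := by
    refine Finset.sum_involution (fun a _ => a⁻¹) ?_ ?_ ?_ ?_
    · intro a _; linear_combination h2
    · intro a ha _
      simp only [Finset.mem_erase] at ha
      intro hcon0
      have hcon : a⁻¹ = a := hcon0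
      have ha0 : a ≠ 0 := fun h => h0 (h ▸ ha.2)
      have hmul : a * a = 1 := by
        nth_rewrite 1 [← hcon]; exact inv_mul_cancel₀ ha0
      have hsq : (a + 1) * (a + 1) = 0 := by linear_combination hmul + (a+1) * h2
      have h11 : a + 1 = 0 := by
        rcases mul_eq_zero.mp hsq with h | h <;> exact h
      exact ha.1 (by linear_combination h11 - h2)
    · intro a ha
      simp only [Finset.mem_erase] at ha ⊢
      exact ⟨fun h => ha.1 (by rw [← inv_inv a, h, inv_one]), hinv _ ha.2⟩
    · intro a _; exact inv_inv a
  rw [hz, add_zero]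

lemma aux_sum_pow_zero {K : Type} [Field K] [Fintype K] {x : K} (a : ℕ)
    (hx : x ≠ 0) (hxa : x^a ≠ 1) : ∑ t : K, t^a = 0 := by
  have hb : Function.Bijective (fun t : K => x * t) := mulLeft_bijective₀ x hx
  have h : ∑ t : K, t^a = ∑ t : K, (x*t)^a :=
    (Fintype.sum_bijective _ hb (fun t => (x*t)^a) (fun t => t^a) (fun t => rfl)).symm
  have h2 : ∑ t : K, (x*t)^a = x^a * ∑ t : K, t^a := by
    rw [Finset.mul_sum]; exact Finset.sum_congr rfl (fun t _ => by rw [mul_pow])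
  have : (x^a - 1) * ∑ t : K, t^a = 0 := by
    rw [sub_mul, one_mul, ← h2, ← h, sub_self]
  rcases mul_eq_zero.mp this with h' | h'
  · exact absurd (by linear_combination h' : x^a = 1) hxa
  · exact h'

lemma aux_sum_pow_one {K : Type} [Field K] [Fintype K] [DecidableEq K] (h2 : (2:K) = 0)
    (a : ℕ) (ha : a ≠ 0) (hall : ∀ t : K, t ≠ 0 → t^a = 1) : ∑ t : K, t^a = 1 := by
  rw [← Finset.add_sum_erase Finset.univ _ (Finset.mem_univ (0:K))]
  rw [zero_pow ha, zero_add]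
  have : ∑ t ∈ Finset.univ.erase (0:K), t^a = ∑ _t ∈ Finset.univ.erase (0:K), (1:K) :=
    Finset.sum_congr rfl (fun t ht => hall t (Finset.mem_erase.mp ht).1)
  rw [this]
  apply aux_oddsum h2 (Finset.notMem_erase _ _)
    (Finset.mem_erase.mpr ⟨one_ne_zero, Finset.mem_univ _⟩)
  intro t ht
  exact Finset.mem_erase.mpr ⟨inv_ne_zero (Finset.mem_erase.mp ht).1, Finset.mem_univ _⟩

lemma aux_sum_smul_closed {K : Type} [Field K] [Fintype K] [DecidableEq K]
    {P : K → Prop} [DecidablePred P] {ξ : K} (hξ0 : ξ ≠ 0)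
    (hcl : ∀ t, P t ↔ P (ξ * t)) (a : ℕ) (hξa : ξ^a ≠ 1) :
    ∑ t ∈ Finset.univ.filter P, t^a = 0 := by
  set s := Finset.univ.filter P with hs
  have hmem : ∀ t : K, t ∈ s ↔ P t := by
    intro t; simp [hs]
  have h : ∑ t ∈ s, t^a = ∑ t ∈ s, (ξ*t)^a := by
    refine Finset.sum_nbij' (fun t => ξ⁻¹ * t) (fun t => ξ * t) ?_ ?_ ?_ ?_ ?_
    · intro t ht
      rw [hmem] at ht ⊢
      have hh := hcl (ξ⁻¹ * t)
      rw [← mul_assoc, mul_inv_cancel₀ hξ0, one_mul] at hh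
      exact hh.mpr ht
    · intro t ht; rw [hmem] at ht ⊢; exact (hcl t).mp ht
    · intro t _; field_simp
    · intro t _; field_simp
    · intro t _; rw [← mul_assoc, mul_inv_cancel₀ hξ0, one_mul]
  have h2 : ∑ t ∈ s, (ξ*t)^a = ξ^a * ∑ t ∈ s, t^a := by
    rw [Finset.mul_sum]; exact Finset.sum_congr rfl (fun t _ => by rw [mul_pow])
  have : (ξ^a - 1) * ∑ t ∈ s, t^a = 0 := by
    rw [sub_mul, one_mul, ← h2, ← h, sub_self]
  rcases mul_eq_zero.mp this with h' | h'
  · exact absurd (by linear_combination h' : ξ^a = 1) hξa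
  · exact h'

/-- For `q = 2^m` with `m ≥ 1`, there exists an `F_{q²}`-linear code
`C ⊆ F_{q²}^{q²+2}` of dimension 3 with `C ⊆ C*` (Hermitian dual) such that `C*` has
minimum distance exactly 4; in particular `C*` is MDS with parameters
`[q²+2, q²-1, 4]_{q²}` and a quantum MDS code `[[4^m+2, 4^m-4, 4]]_{2^m}` exists. -/
theorem stmt_15 (q m : ℕ) (hm : 1 ≤ m) (hq : q = 2 ^ m)
    (K : Type) [Field K] [Fintype K] [DecidableEq K] (hK : Fintype.card K = q ^ 2) :
    ∃ C : Submodule K (Fin (q ^ 2 + 2) → K),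
      Module.finrank K C = 3 ∧
      (∀ a ∈ C, ∀ b ∈ C, ∑ i, (a i) ^ q * b i = 0) ∧
      (∀ v : Fin (q ^ 2 + 2) → K, (∀ c ∈ C, ∑ i, (c i) ^ q * v i = 0) → v ≠ 0 →
        4 ≤ hammingNorm v) ∧
      (∃ v : Fin (q ^ 2 + 2) → K, (∀ c ∈ C, ∑ i, (c i) ^ q * v i = 0) ∧ v ≠ 0 ∧
        hammingNorm v = 4) := by
  -- basic numerics
  have hq2 : 2 ≤ q := by
    rw [hq]; calc 2 = 2^1 := rfl
    _ ≤ 2^m := Nat.pow_le_pow_right (by norm_num) hm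
  have hq0 : q ≠ 0 := by omega
  have hqq4 : 4 ≤ q^2 := by nlinarith
  -- characteristic 2
  have hcast : ((q:K))^2 = 0 := by
    have := FiniteField.cast_card_eq_zero K
    rw [hK] at this; push_cast at this; exact this
  have h2 : (2:K) = 0 := by
    have hqK : (q:K) = 0 := by
      exact sq_eq_zero_iff.mp hcast
    have : ((2:ℕ):K)^m = 0 := by
      rw [← Nat.cast_pow, ← hq]; exact_mod_cast hqK
    have h2m : ((2:ℕ):K) = 0 := pow_eq_zero_iff (by omega) |>.mp this
    exact_mod_cast h2m
  have hchar : CharP K 2 := by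
    have hdvd : ringChar K ∣ 2 := by
      rw [← CharP.cast_eq_zero_iff K (ringChar K) 2]; exact_mod_cast h2
    rcases (Nat.dvd_prime Nat.prime_two).mp hdvd with h | h
    · exact absurd h (CharP.char_ne_one K (ringChar K))
    · rw [← h]; exact ringChar.charP K
  haveI := hchar
  haveI : Fact (Nat.Prime 2) := ⟨Nat.prime_two⟩
  -- frobenius
  have frob : ∀ x y : K, (x+y)^q = x^q + y^q := by
    intro x y; rw [hq]; exact add_pow_char_pow x y 2 m
  have addself : ∀ x : K, x + x = 0 := fun x => by linear_combination x * h2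
  have hpowcard : ∀ x : K, x ^ (q^2) = x := by
    intro x; rw [← hK]; exact FiniteField.pow_card x
  have hunits : ∀ x : K, x ≠ 0 → x ^ (q^2 - 1) = 1 := by
    intro x hx
    have h1 : x ^ (q^2 - 1) * x = 1 * x := by
      rw [one_mul, ← pow_succ, Nat.sub_add_cancel (by omega)]; exact hpowcard x
    exact mul_right_cancel₀ hx h1
  -- generator
  obtain ⟨g, hg⟩ := IsCyclic.exists_generator (α := Kˣ)
  have horder : orderOf g = q^2 - 1 := by
    rw [orderOf_eq_card_of_forall_mem_zpowers hg, Nat.card_eq_fintype_card,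
      Fintype.card_units, hK]
  set G : K := (g : K) with hGdef
  have hG0 : G ≠ 0 := g.ne_zero
  have hGpow : ∀ a : ℕ, G ^ a = 1 ↔ (q^2 - 1) ∣ a := by
    intro a
    have h1 : G ^ a = ((g ^ a : Kˣ) : K) := (Units.val_pow_eq_pow_val g a).symm
    rw [h1, Units.val_eq_one, ← horder]
    exact orderOf_dvd_iff_pow_eq_one.symm
  -- helper: non-divisibility by q+1
  have hndvd : ∀ k r : ℕ, 0 < r → r < q + 1 → ¬ ((q+1) ∣ (k * (q+1) + r)) := by
    intro k r h1 h2 hdvd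
    have hr : (q+1) ∣ r := (Nat.dvd_add_right (dvd_mul_left (q+1) k)).mp hdvd
    have := Nat.le_of_dvd h1 hr; omega
  have e1 : q^2 - 1 = (q-1)*(q+1) := by
    have h := Nat.sq_sub_sq q 1
    simpa [mul_comm] using h
  -- the weight function
  set α : K := G^(q+1) with hαdef
  set P : K → Prop := fun t => t^(q+1) = 1 ∨ t^(q+1) = α with hPdef
  haveI : DecidablePred P := fun t => by rw [hPdef]; infer_instance
  set lam : K → K := fun t => if P t then G else 1 with hlamdef
  have hlam0 : ∀ t, lam t ≠ 0 := by
    intro t; rw [hlamdef]; dsimp only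
    split
    · exact hG0
    · exact one_ne_zero
  have hwt : ∀ t, (lam t)^(q+1) = if P t then α else 1 := by
    intro t; rw [hlamdef]; dsimp only
    split
    · rfl
    · exact one_pow _
  set W : ℕ → K := fun a => ∑ t : K, (lam t)^(q+1) * t^a with hWdef
  have Wsplit : ∀ a, W a = (∑ t : K, t^a) + (1+α) * ∑ t ∈ Finset.univ.filter P, t^a := by
    intro a
    rw [hWdef]; dsimp only
    rw [Finset.sum_filter, Finset.mul_sum, ← Finset.sum_add_distrib]
    apply Finset.sum_congr rfl
    intro t _
    rw [hwt]
    by_cases h : P t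
    · rw [if_pos h, if_pos h]; linear_combination (-(t^a)) * h2
    · rw [if_neg h, if_neg h, mul_zero, add_zero, one_mul]
  -- ξ and vanishing of filtered sums
  set ξ : K := G^(q-1) with hξdef
  have hξ0 : ξ ≠ 0 := pow_ne_zero _ hG0
  have hξpow : ξ^(q+1) = 1 := by
    rw [hξdef, ← pow_mul, ← e1]
    exact (hGpow _).mpr dvd_rfl
  have hξ1 : ∀ a : ℕ, ¬((q+1) ∣ a) → ξ^a ≠ 1 := by
    intro a ha hcon
    rw [hξdef, ← pow_mul] at hcon
    have hdvd : (q^2-1) ∣ (q-1)*a := (hGpow _).mp hcon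
    rw [e1] at hdvd
    have h3 : ((q-1)*(q+1)) ∣ ((q-1)*a) := by
      rcases hdvd with ⟨c, hc⟩; exact ⟨c, by linarith [hc]⟩
    have := (Nat.mul_dvd_mul_iff_left (show 0 < q-1 by omega)).mp h3
    exact ha this
  have hPcl : ∀ t, P t ↔ P (ξ * t) := by
    intro t
    rw [hPdef]; dsimp only
    rw [mul_pow, hξpow, one_mul]
  have hFS0 : ∀ a : ℕ, ¬((q+1) ∣ a) → ∑ t ∈ Finset.univ.filter P, t^a = 0 :=
    fun a ha => aux_sum_smul_closed hξ0 hPcl a (hξ1 a ha)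
  have hBz : ∀ a : ℕ, ¬((q+1) ∣ a) → ∑ t : K, t^a = 0 := by
    intro a ha
    apply aux_sum_pow_zero a hG0
    intro hcon
    have := (hGpow a).mp hcon
    rw [e1] at this
    exact ha (dvd_trans (dvd_mul_left _ _) this)
  have Wcross : ∀ a : ℕ, ¬((q+1) ∣ a) → W a = 0 := by
    intro a ha
    rw [Wsplit, hBz a ha, hFS0 a ha, mul_zero, add_zero]
  have hMAIN : W 0 = 0 ∧ (W (q+1) ≠ 0 ∧ (W (q+1))^(q-1) = 1) ∧
      (W (2*q+2) ≠ 0 ∧ (W (2*q+2))^(q-1) = 1) := by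
    by_cases hα : α = 1
    · -- q = 2 branch
      have hq2' : q = 2 := by
        have hdvd : (q^2-1) ∣ (q+1) := (hGpow (q+1)).mp (by rw [hαdef] at hα; exact hα)
        have hle := Nat.le_of_dvd (by omega) hdvd
        by_contra hne
        have h3 : 3 ≤ q := by omega
        have hmul : 3*q ≤ q*q := Nat.mul_le_mul_right q h3
        have hsq : q^2 = q*q := sq q
        omega
      have h1α : (1:K) + α = 0 := by rw [hα]; exact addself 1
      have Weq : ∀ a, W a = ∑ t : K, t^a := by
        intro a; rw [Wsplit, h1α, zero_mul, add_zero]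
      have hWz : W 0 = 0 := by
        rw [Weq]
        simp only [pow_zero]
        rw [Finset.sum_const, Finset.card_univ, hK, nsmul_eq_mul, mul_one, Nat.cast_pow]
        exact hcast
      have hq1all : ∀ t : K, t ≠ 0 → t^(q+1) = 1 := by
        intro t ht
        have h3 := hunits t ht
        have he : q^2 - 1 = q+1 := by rw [hq2']; norm_num
        rwa [he] at h3
      have hW1 : W (q+1) = 1 := by
        rw [Weq]; exact aux_sum_pow_one h2 (q+1) (by omega) hq1all
      have hW2 : W (2*q+2) = 1 := by
        rw [Weq]; apply aux_sum_pow_one h2 _ (by omega)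
        intro t ht
        have h3 : t^(q+1) = 1 := hq1all t ht
        have he : t^(2*q+2) = (t^(q+1))^2 := by rw [← pow_mul]; congr 1; ring
        rw [he, h3, one_pow]
      exact ⟨hWz, ⟨by rw [hW1]; exact one_ne_zero, by rw [hW1, one_pow]⟩,
        ⟨by rw [hW2]; exact one_ne_zero, by rw [hW2, one_pow]⟩⟩
    · -- q ≥ 4 branch
      have hq4 : 4 ≤ q := by
        have hqne2 : q ≠ 2 := by
          intro h
          apply hα
          rw [hαdef]
          apply (hGpow (q+1)).mpr
          rw [h]; norm_num
        have hm2 : 2 ≤ m := by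
          by_contra h
          have : m = 1 := by omega
          rw [this] at hq; simp at hq; omega
        calc 4 = 2^2 := rfl
        _ ≤ 2^m := Nat.pow_le_pow_right (by norm_num) hm2
        _ = q := hq.symm
      have hα0 : α ≠ 0 := pow_ne_zero _ hG0
      have hαq : α^q = α := by
        have hαq1 : α^(q-1) = 1 := by
          rw [hαdef, ← pow_mul]
          apply (hGpow _).mpr
          rw [e1]
          exact ⟨1, by ring⟩
        calc α^q = α^(q-1) * α := by rw [← pow_succ, (show q-1+1 = q by omega)]
        _ = α := by rw [hαq1, one_mul]
      have h1α : (1:K) + α ≠ 0 := by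
        intro h; exact hα (by linear_combination h - h2)
      have h1αpow : ((1:K)+α)^(q-1) = 1 := by
        have hfr : ((1:K)+α)^q = 1+α := by rw [frob 1 α, one_pow, hαq]
        have hcc : ((1:K)+α)^(q-1) * (1+α) = 1 * (1+α) := by
          rw [one_mul, ← pow_succ, (show q-1+1 = q by omega), hfr]
        exact mul_right_cancel₀ h1α hcc
      have hfilsplit : Finset.univ.filter P =
          (Finset.univ.filter (fun t : K => t^(q+1) = 1)) ∪
          (Finset.univ.filter (fun t : K => t^(q+1) = α)) := by
        ext t
        simp only [Finset.mem_filter, Finset.mem_union, Finset.mem_univ, true_and, hPdef]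
      have hdisj : Disjoint (Finset.univ.filter fun t : K => t^(q+1)=1)
          (Finset.univ.filter fun t : K => t^(q+1)=α) := by
        rw [Finset.disjoint_left]
        intro t ht1 ht2
        simp only [Finset.mem_filter] at ht1 ht2
        exact hα (by rw [← ht2.2, ht1.2])
      have hsum1 : (∑ _t ∈ Finset.univ.filter (fun t : K => t^(q+1) = 1), (1:K)) = 1 := by
        apply aux_oddsum h2
        · simp only [Finset.mem_filter, Finset.mem_univ, true_and]
          rw [zero_pow (show q+1 ≠ 0 by omega)]
          exact fun h => one_ne_zero h.symm
        · simp only [Finset.mem_filter, Finset.mem_univ, true_and, one_pow]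
        · intro t ht
          simp only [Finset.mem_filter, Finset.mem_univ, true_and] at ht ⊢
          rw [inv_pow, ht, inv_one]
      have hbij : (∑ _t ∈ Finset.univ.filter (fun t : K => t^(q+1) = α), (1:K)) =
          (∑ _t ∈ Finset.univ.filter (fun t : K => t^(q+1) = 1), (1:K)) := by
        refine Finset.sum_nbij' (fun t => G⁻¹ * t) (fun t => G * t) ?_ ?_ ?_ ?_ ?_
        · intro t ht
          simp only [Finset.mem_filter, Finset.mem_univ, true_and] at ht ⊢
          rw [mul_pow, inv_pow, ← hαdef, ht, inv_mul_cancel₀ hα0]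
        · intro t ht
          simp only [Finset.mem_filter, Finset.mem_univ, true_and] at ht ⊢
          rw [mul_pow, ← hαdef, ht, mul_one]
        · intro t _; field_simp
        · intro t _; field_simp
        · intro t _; rfl
      have hsumα : (∑ _t ∈ Finset.univ.filter (fun t : K => t^(q+1) = α), (1:K)) = 1 := by
        rw [hbij, hsum1]
      have hdiag : ∀ c : ℕ, (∑ t ∈ Finset.univ.filter P, t^((q+1)*c)) = 1 + α^c := by
        intro c
        rw [hfilsplit, Finset.sum_union hdisj]
        have hA : ∑ t ∈ Finset.univ.filter (fun t : K => t^(q+1)=1), t^((q+1)*c) = 1 := by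
          refine Eq.trans ?_ hsum1
          apply Finset.sum_congr rfl
          intro t ht
          simp only [Finset.mem_filter, Finset.mem_univ, true_and] at ht
          rw [pow_mul, ht, one_pow]
        have hB : ∑ t ∈ Finset.univ.filter (fun t : K => t^(q+1)=α), t^((q+1)*c) = α^c := by
          have : ∑ t ∈ Finset.univ.filter (fun t : K => t^(q+1)=α), t^((q+1)*c)
              = ∑ _t ∈ Finset.univ.filter (fun t : K => t^(q+1)=α), α^c := by
            apply Finset.sum_congr rfl
            intro t ht
            simp only [Finset.mem_filter, Finset.mem_univ, true_and] at ht
            rw [pow_mul, ht]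
          have hcard : ((Finset.univ.filter (fun t : K => t^(q+1)=α)).card : K) = 1 := by
            rw [Finset.sum_const, nsmul_eq_mul, mul_one] at hsumα
            exact hsumα
          rw [this, Finset.sum_const, nsmul_eq_mul, hcard, one_mul]
        rw [hA, hB]
      have hB1 : (∑ t : K, t^(q+1)) = 0 := by
        apply aux_sum_pow_zero _ hG0
        rw [← hαdef]; exact hα
      have hB2 : (∑ t : K, t^(2*q+2)) = 0 := by
        apply aux_sum_pow_zero _ hG0
        intro hcon
        have hdvd := (hGpow _).mp hcon
        have hle := Nat.le_of_dvd (by omega) hdvd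
        have hmul : 4*q ≤ q*q := Nat.mul_le_mul_right q hq4
        have hsq : q^2 = q*q := sq q
        omega
      have hD1 : ∑ t ∈ Finset.univ.filter P, t^(q+1) = 1 + α := by
        have hh := hdiag 1
        rw [mul_one, pow_one] at hh
        exact hh
      have hD2 : ∑ t ∈ Finset.univ.filter P, t^(2*q+2) = 1 + α^2 := by
        have hh := hdiag 2
        rw [(show (q+1)*2 = 2*q+2 by ring)] at hh
        exact hh
      have hW1 : W (q+1) = ((1:K)+α)^2 := by
        rw [Wsplit, hB1, hD1, zero_add]; ring
      have hW2 : W (2*q+2) = ((1:K)+α)^3 := by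
        rw [Wsplit, hB2, hD2, zero_add]
        have hsq : (1:K)+α^2 = (1+α)^2 := by linear_combination (-α)*h2
        rw [hsq]; ring
      refine ⟨?_, ⟨?_, ?_⟩, ⟨?_, ?_⟩⟩
      · -- W 0 = 0
        rw [Wsplit]
        have hzero : (∑ t : K, t^(0:ℕ)) = 0 := by
          simp only [pow_zero]
          rw [Finset.sum_const, Finset.card_univ, hK, nsmul_eq_mul, mul_one, Nat.cast_pow]
          exact hcast
        have hfs : (∑ t ∈ Finset.univ.filter P, t^(0:ℕ)) = 0 := by
          have hh := hdiag 0
          rw [mul_zero, pow_zero] at hh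
          rw [hh]
          exact addself 1
        rw [hzero, hfs, mul_zero, add_zero]
      · rw [hW1]; exact pow_ne_zero _ h1α
      · rw [hW1, ← pow_mul, mul_comm, pow_mul, h1αpow, one_pow]
      · rw [hW2]; exact pow_ne_zero _ h1α
      · rw [hW2, ← pow_mul, mul_comm, pow_mul, h1αpow, one_pow]
  obtain ⟨hW0, ⟨hM1ne, hM1pow⟩, ⟨hM2ne, hM2pow⟩⟩ := hMAIN
  -- half exponent
  have hh1 : 1 ≤ 2^(m-1) := Nat.one_le_two_pow
  have hqh : q = 2 * 2^(m-1) := by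
    rw [hq, ← pow_succ']; congr 1; omega
  have powhalf : ∀ x : K, x^(q-1) = 1 → (x^(2^(m-1)))^(q+1) = x := by
    intro x hx1
    rw [← pow_mul]
    have harith : 2^(m-1) * (q+1) = (q-1)*(2^(m-1)+1) + 1 := by
      obtain ⟨k, hk⟩ : ∃ k, 2^(m-1) = k + 1 := ⟨2^(m-1) - 1, by omega⟩
      rw [hqh, hk]
      have h21 : 2*(k+1) - 1 = 2*k+1 := by omega
      have h22 : 2*(k+1) + 1 = 2*k+3 := by omega
      rw [h21, h22]; ring
    rw [harith, pow_add, pow_mul, hx1, one_pow, one_mul, pow_one]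
  set lamA : K := (W (q+1))^(2^(m-1)) with hlamAdef
  set lamB : K := (W (2*q+2))^(2^(m-1)) with hlamBdef
  have hlamA : lamA^(q+1) = W (q+1) := powhalf _ hM1pow
  have hlamB : lamB^(q+1) = W (2*q+2) := powhalf _ hM2pow
  have hlamA0 : lamA ≠ 0 := pow_ne_zero _ hM1ne
  have hlamB0 : lamB ≠ 0 := pow_ne_zero _ hM2ne
  -- the index equivalence and columns
  have hcardsum : Fintype.card (Fin (q^2+2)) = Fintype.card (K ⊕ Fin 2) := by
    simp [hK]
  set φ : Fin (q^2+2) ≃ (K ⊕ Fin 2) := Fintype.equivOfCardEq hcardsum with hφdef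
  set col : K ⊕ Fin 2 → Fin 3 → K := fun x j =>
    Sum.casesOn x (fun t => lam t * t^(j:ℕ))
      (fun b => if (j:ℕ) = (b:ℕ)+1 then (if b = 0 then lamA else lamB) else 0) with hcoldef
  set r : Fin 3 → (Fin (q^2+2) → K) := fun j i => col (φ i) j with hrdef
  set C : Submodule K (Fin (q^2+2) → K) := Submodule.span K (Set.range r) with hCdef
  -- Gram entries
  have hconic : ∀ (j' k' : ℕ), (∑ t : K, (lam t * t^j')^q * (lam t * t^k'))
      = W (j'*q + k') := by
    intro j' k'
    rw [hWdef]
    apply Finset.sum_congr rfl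
    intro t _
    rw [mul_pow, ← pow_mul]
    ring
  have hentry : ∀ j k : Fin 3, (∑ i, (r j i)^q * (r k i)) =
      W ((j:ℕ)*q + (k:ℕ)) + ((if (j:ℕ)=1 ∧ (k:ℕ)=1 then W (q+1) else 0)
        + (if (j:ℕ)=2 ∧ (k:ℕ)=2 then W (2*q+2) else 0)) := by
    intro j k
    have htrans : (∑ i, (r j i)^q * (r k i)) = ∑ x : K ⊕ Fin 2, (col x j)^q * (col x k) :=
      Fintype.sum_equiv φ _ _ (fun i => rfl)
    rw [htrans, Fintype.sum_sum_type, Fin.sum_univ_two]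
    have hc0 : ∀ jj : Fin 3, col (Sum.inr 0) jj = if (jj:ℕ) = 1 then lamA else 0 :=
      fun jj => rfl
    have hc1 : ∀ jj : Fin 3, col (Sum.inr 1) jj = if (jj:ℕ) = 2 then lamB else 0 :=
      fun jj => rfl
    have hcl : ∀ (t : K) (jj : Fin 3), col (Sum.inl t) jj = lam t * t^(jj:ℕ) :=
      fun t jj => rfl
    have he0 : (col (Sum.inr 0) j)^q * (col (Sum.inr 0) k)
        = (if (j:ℕ)=1 ∧ (k:ℕ)=1 then W (q+1) else 0) := by
      rw [hc0, hc0]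
      by_cases hj : (j:ℕ) = 1
      · by_cases hk : (k:ℕ) = 1
        · rw [if_pos hj, if_pos hk, if_pos (⟨hj, hk⟩ : (j:ℕ) = 1 ∧ (k:ℕ) = 1),
            ← hlamA, pow_succ]
        · rw [if_pos hj, if_neg hk, mul_zero,
            if_neg (fun h : (j:ℕ) = 1 ∧ (k:ℕ) = 1 => hk h.2)]
      · rw [if_neg hj, zero_pow hq0, zero_mul,
          if_neg (fun h : (j:ℕ) = 1 ∧ (k:ℕ) = 1 => hj h.1)]
    have he1 : (col (Sum.inr 1) j)^q * (col (Sum.inr 1) k)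
        = (if (j:ℕ)=2 ∧ (k:ℕ)=2 then W (2*q+2) else 0) := by
      rw [hc1, hc1]
      by_cases hj : (j:ℕ) = 2
      · by_cases hk : (k:ℕ) = 2
        · rw [if_pos hj, if_pos hk, if_pos (⟨hj, hk⟩ : (j:ℕ) = 2 ∧ (k:ℕ) = 2),
            ← hlamB, pow_succ]
        · rw [if_pos hj, if_neg hk, mul_zero,
            if_neg (fun h : (j:ℕ) = 2 ∧ (k:ℕ) = 2 => hk h.2)]
      · rw [if_neg hj, zero_pow hq0, zero_mul,
          if_neg (fun h : (j:ℕ) = 2 ∧ (k:ℕ) = 2 => hj h.1)]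
    have hcon2 : ∑ t : K, (col (Sum.inl t) j)^q * (col (Sum.inl t) k)
        = W ((j:ℕ)*q+(k:ℕ)) := by
      rw [← hconic]
    rw [hcon2, he0, he1]
  have hGram : ∀ j k : Fin 3, (∑ i, (r j i)^q * (r k i)) = 0 := by
    intro j k
    rw [hentry j k]
    fin_cases j <;> fin_cases k <;>
      all_goals (try norm_num) <;>
      first
        | exact hW0
        | exact addself _
        | (exact Wcross 1 (by have := hndvd 0 1 (by omega) (by omega); simpa using this))
        | (exact Wcross 2 (by have := hndvd 0 2 (by omega) (by omega); simpa using this))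
        | (exact Wcross q (by have := hndvd 0 q (by omega) (by omega); simpa using this))
        | (rw [show q+2 = 1*(q+1)+1 by ring]; exact Wcross _ (hndvd 1 1 (by omega) (by omega)))
        | (rw [show 2*q = 1*(q+1)+(q-1) by omega]; exact Wcross _ (hndvd 1 (q-1) (by omega) (by omega)))
        | (rw [show 2*q+1 = 1*(q+1)+q by omega]; exact Wcross _ (hndvd 1 q (by omega) (by omega)))
  -- global column value lemmas
  have hcol0 : ∀ jj : Fin 3, col (Sum.inr 0) jj = if (jj:ℕ) = 1 then lamA else 0 :=
    fun jj => rfl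
  have hcol1 : ∀ jj : Fin 3, col (Sum.inr 1) jj = if (jj:ℕ) = 2 then lamB else 0 :=
    fun jj => rfl
  have hcoll : ∀ (t : K) (jj : Fin 3), col (Sum.inl t) jj = lam t * t^(jj:ℕ) :=
    fun t jj => rfl
  -- frobenius injectivity and char-2 helpers
  have chr2 : ∀ x y : K, x + y = 0 → x = y := by
    intro x y h; linear_combination h - (addself y)
  have frobinj : ∀ x y : K, x^q = y^q → x = y := by
    intro x y hxy
    have hz : (x+y)^q = 0 := by rw [frob, hxy]; exact addself _
    exact chr2 x y (pow_eq_zero_iff hq0 |>.mp hz)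
  -- linear independence
  have hLI : LinearIndependent K r := by
    rw [Fintype.linearIndependent_iff]
    intro c hc
    have hev : ∀ x : K ⊕ Fin 2, (∑ j : Fin 3, c j * col x j) = 0 := by
      intro x
      have h3 := congrFun hc (φ.symm x)
      rw [Finset.sum_apply] at h3
      simp only [Pi.smul_apply, smul_eq_mul, hrdef, Equiv.apply_symm_apply] at h3
      exact h3
    have e0 := hev (Sum.inl 0)
    rw [Fin.sum_univ_three, hcoll, hcoll, hcoll] at e0
    simp only [Fin.val_zero, Fin.val_one, Fin.val_two, pow_zero, mul_one,
      zero_pow (by norm_num : (1:ℕ) ≠ 0), zero_pow (by norm_num : (2:ℕ) ≠ 0),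
      mul_zero, add_zero, pow_one] at e0
    have eA := hev (Sum.inr 0)
    rw [Fin.sum_univ_three, hcol0, hcol0, hcol0] at eA
    norm_num at eA
    have eB := hev (Sum.inr 1)
    rw [Fin.sum_univ_three, hcol1, hcol1, hcol1] at eB
    norm_num at eB
    intro j
    fin_cases j
    · rcases mul_eq_zero.mp e0 with h | h
      · exact h
      · exact absurd h (hlam0 0)
    · rcases eA with h | h
      · exact h
      · exact absurd h hlamA0
    · rcases eB with h | h
      · exact h
      · exact absurd h hlamB0
  have hrank : Module.finrank K C = 3 := by
    rw [hCdef, finrank_span_eq_card hLI, Fintype.card_fin]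
  have hmemr : ∀ j : Fin 3, r j ∈ C := by
    intro j; rw [hCdef]; exact Submodule.subset_span (Set.mem_range_self j)
  -- self-orthogonality
  have horth : ∀ a ∈ C, ∀ b ∈ C, (∑ i, (a i)^q * b i) = 0 := by
    intro a ha
    rw [hCdef] at ha
    refine Submodule.span_induction (p := fun a _ => ∀ b ∈ C, (∑ i, (a i)^q * b i) = 0)
      ?_ ?_ ?_ ?_ ha
    · rintro x ⟨j, rfl⟩ b hb
      rw [hCdef] at hb
      refine Submodule.span_induction (p := fun b _ => (∑ i, (r j i)^q * b i) = 0)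
        ?_ ?_ ?_ ?_ hb
      · rintro y ⟨k, rfl⟩; exact hGram j k
      · simp
      · intro y z _ _ hy hz
        have hsplit : (∑ i, (r j i)^q * (y+z) i)
            = (∑ i, (r j i)^q * y i) + (∑ i, (r j i)^q * z i) := by
          rw [← Finset.sum_add_distrib]
          apply Finset.sum_congr rfl
          intro i _
          rw [Pi.add_apply]; ring
        rw [hsplit, hy, hz, add_zero]
      · intro s y _ hy
        have hs : (∑ i, (r j i)^q * (s • y) i) = s * ∑ i, (r j i)^q * y i := by
          rw [Finset.mul_sum]
          apply Finset.sum_congr rfl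
          intro i _
          rw [Pi.smul_apply, smul_eq_mul]; ring
        rw [hs, hy, mul_zero]
    · intro b _
      simp [zero_pow hq0]
    · intro x y _ _ hx hy b hb
      have hsplit : (∑ i, ((x+y) i)^q * b i)
          = (∑ i, (x i)^q * b i) + (∑ i, (y i)^q * b i) := by
        rw [← Finset.sum_add_distrib]
        apply Finset.sum_congr rfl
        intro i _
        rw [Pi.add_apply, frob]; ring
      rw [hsplit, hx b hb, hy b hb, add_zero]
    · intro s x _ hx b hb
      have hs : (∑ i, ((s • x) i)^q * b i) = s^q * ∑ i, (x i)^q * b i := by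
        rw [Finset.mul_sum]
        apply Finset.sum_congr rfl
        intro i _
        rw [Pi.smul_apply, smul_eq_mul, mul_pow]; ring
      rw [hs, hx b hb, mul_zero]
  -- transport lemmas for hammingNorm and the dual equations
  have hham : ∀ v : Fin (q^2+2) → K, hammingNorm v =
      (∑ t : K, if v (φ.symm (Sum.inl t)) ≠ 0 then 1 else 0) +
      ((if v (φ.symm (Sum.inr 0)) ≠ 0 then 1 else 0)
        + (if v (φ.symm (Sum.inr 1)) ≠ 0 then 1 else 0)) := by
    intro v
    unfold hammingNorm
    rw [Finset.card_filter]
    rw [← Equiv.sum_comp φ.symm (fun i => if v i ≠ 0 then 1 else 0)]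
    rw [Fintype.sum_sum_type, Fin.sum_univ_two]
  have hEq : ∀ (v : Fin (q^2+2) → K) (j : Fin 3),
      (∑ i, (r j i)^q * v i) = ∑ x : K ⊕ Fin 2, (col x j)^q * v (φ.symm x) := by
    intro v j
    rw [← Equiv.sum_comp φ (fun x => (col x j)^q * v (φ.symm x))]
    apply Finset.sum_congr rfl
    intro i _
    rw [Equiv.symm_apply_apply, hrdef]
  have hEsplit : ∀ (v : Fin (q^2+2) → K) (j : Fin 3),
      (∑ i, (r j i)^q * v i) =
        (∑ t : K, (lam t * t^(j:ℕ))^q * v (φ.symm (Sum.inl t)))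
        + (((if (j:ℕ)=1 then lamA else 0))^q * v (φ.symm (Sum.inr 0))
          + ((if (j:ℕ)=2 then lamB else 0))^q * v (φ.symm (Sum.inr 1))) := by
    intro v j
    rw [hEq v j, Fintype.sum_sum_type, Fin.sum_univ_two, hcol0, hcol1]
  refine ⟨C, hrank, horth, ?_, ?_⟩
  · -- distance ≥ 4
    intro v hv hv0
    set u : K → K := fun t => (lam t)^q * v (φ.symm (Sum.inl t)) with hudef
    set vA : K := v (φ.symm (Sum.inr 0)) with hvAdef
    set vB : K := v (φ.symm (Sum.inr 1)) with hvBdef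
    have hE : ∀ j : Fin 3, (∑ i, (r j i)^q * v i) = 0 := fun j => hv (r j) (hmemr j)
    have E0 : (∑ t : K, u t) = 0 := by
      have h3 := (hEsplit v 0).symm.trans (hE 0)
      norm_num [zero_pow hq0] at h3
      exact h3
    have E1 : (∑ t : K, u t * t^q) + lamA^q * vA = 0 := by
      have h3 := (hEsplit v 1).symm.trans (hE 1)
      norm_num [zero_pow hq0] at h3
      have hc : ∀ t : K, (lam t * t)^q * v (φ.symm (Sum.inl t)) = u t * t^q := by
        intro t
        simp only [hudef, mul_pow]
        ring
      rw [Finset.sum_congr rfl (fun t _ => hc t)] at h3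
      exact h3
    have E2 : (∑ t : K, u t * (t^q * t^q)) + lamB^q * vB = 0 := by
      have h3 := (hEsplit v 2).symm.trans (hE 2)
      norm_num [zero_pow hq0] at h3
      have hc : ∀ t : K, (lam t * t^2)^q * v (φ.symm (Sum.inl t))
          = u t * (t^q * t^q) := by
        intro t
        have hx : (t^2)^q = t^q * t^q := by
          rw [← pow_mul, show 2*q = q+q by ring, pow_add]
        simp only [hudef, mul_pow, hx]
        ring
      rw [Finset.sum_congr rfl (fun t _ => hc t)] at h3
      exact h3
    set S : Finset K := Finset.univ.filter (fun t => u t ≠ 0) with hSdef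
    have hmemS : ∀ t : K, t ∈ S ↔ u t ≠ 0 := by
      intro t; rw [hSdef]; simp
    have hcard : hammingNorm v = S.card +
        ((if vA ≠ 0 then 1 else 0) + (if vB ≠ 0 then 1 else 0)) := by
      rw [hham v, hSdef, Finset.card_filter]
      congr 1
      apply Finset.sum_congr rfl
      intro t _
      have hlamq : (lam t)^q ≠ 0 := pow_ne_zero _ (hlam0 t)
      by_cases hvt : v (φ.symm (Sum.inl t)) = 0
      · rw [if_neg (by simp [hvt]), if_neg (by simp [hudef, hvt])]
      · rw [if_pos hvt, if_pos (by rw [hudef]; exact mul_ne_zero hlamq hvt)]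
    have hres : ∀ f : K → K, (∑ t : K, u t * f t) = ∑ t ∈ S, u t * f t := by
      intro f
      symm
      apply Finset.sum_subset (Finset.subset_univ S)
      intro t _ ht
      have hut : u t = 0 := by
        by_contra h
        exact ht ((hmemS t).mpr h)
      rw [hut, zero_mul]
    have E0' : (∑ t ∈ S, u t) = 0 := by
      rw [hSdef]
      exact (Finset.sum_filter_ne_zero Finset.univ).trans E0
    have E1' : (∑ t ∈ S, u t * t^q) + lamA^q * vA = 0 := by rw [← hres]; exact E1
    have E2' : (∑ t ∈ S, u t * (t^q * t^q)) + lamB^q * vB = 0 := by rw [← hres]; exact E2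
    have hlamAq : lamA^q ≠ 0 := pow_ne_zero _ hlamA0
    have hlamBq : lamB^q ≠ 0 := pow_ne_zero _ hlamB0
    -- v nonzero gives a witness
    have hex : (∃ t, u t ≠ 0) ∨ vA ≠ 0 ∨ vB ≠ 0 := by
      by_contra hno
      push_neg at hno
      obtain ⟨hno1, hno2, hno3⟩ := hno
      apply hv0
      funext i
      have hi : v i = v (φ.symm (φ i)) := by rw [Equiv.symm_apply_apply]
      rcases hxx : φ i with t | b
      · have hut := hno1 t
        rw [hudef] at hut
        rcases mul_eq_zero.mp hut with h | h
        · exact absurd h (pow_ne_zero _ (hlam0 t))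
        · rw [hi, hxx, h]; rfl
      · fin_cases b
        · rw [hi, hxx]; exact hno2
        · rw [hi, hxx]; exact hno3
    by_contra hcon
    push_neg at hcon
    have hiA : (if vA ≠ 0 then 1 else 0) ≤ 1 := by split <;> omega
    have hiB : (if vB ≠ 0 then 1 else 0) ≤ 1 := by split <;> omega
    have hS3 : S.card ≤ 3 := by omega
    interval_cases hn : S.card
    · -- card 0
      have hSempty : S = ∅ := Finset.card_eq_zero.mp hn
      rw [hSempty, Finset.sum_empty, zero_add] at E1' E2'
      have hvA0 : vA = 0 := by
        rcases mul_eq_zero.mp E1' with h | h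
        · exact absurd h hlamAq
        · exact h
      have hvB0 : vB = 0 := by
        rcases mul_eq_zero.mp E2' with h | h
        · exact absurd h hlamBq
        · exact h
      rcases hex with ⟨t, ht⟩ | h | h
      · exact ht (by
          by_contra h
          have : t ∈ S := (hmemS t).mpr h
          rw [hSempty] at this
          exact absurd this (Finset.notMem_empty t))
      · exact h hvA0
      · exact h hvB0
    · -- card 1
      obtain ⟨a, ha⟩ := Finset.card_eq_one.mp hn
      have hua : u a ≠ 0 := (hmemS a).mp (ha ▸ Finset.mem_singleton_self a)
      rw [ha, Finset.sum_singleton] at E0'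
      exact hua E0'
    · -- card 2
      obtain ⟨a, b, hab, hS2⟩ := Finset.card_eq_two.mp hn
      have hua : u a ≠ 0 := (hmemS a).mp (hS2 ▸ Finset.mem_insert_self a {b})
      have hub : u b ≠ 0 := (hmemS b).mp (hS2 ▸ Finset.mem_insert_of_mem (Finset.mem_singleton_self b))
      rw [hS2, Finset.sum_pair hab] at E0' E1' E2'
      have hba : u a = u b := chr2 _ _ E0'
      have habq : a^q ≠ b^q := fun h => hab (frobinj a b h)
      have hAB : vA = 0 ∨ vB = 0 := by
        by_contra hc
        push_neg at hc
        rw [hcard, if_pos hc.1, if_pos hc.2] at hcon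
        omega
      rcases hAB with hvA0 | hvB0
      · rw [hvA0, mul_zero, add_zero] at E1'
        have hfac : u a * (a^q + b^q) = 0 := by linear_combination E1' + (b^q) * hba
        rcases mul_eq_zero.mp hfac with h | h
        · exact hua h
        · exact habq (chr2 _ _ h)
      · rw [hvB0, mul_zero, add_zero] at E2'
        have hsqs : a^q * a^q + b^q * b^q = (a^q + b^q) * (a^q + b^q) := by
          linear_combination (-(a^q * b^q)) * h2
        have hfac : u a * ((a^q + b^q) * (a^q + b^q)) = 0 := by
          linear_combination E2' + (b^q * b^q) * hba + (u a) * hsqs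
            + (2 * (u a * a^q * b^q)) * h2
        rcases mul_eq_zero.mp hfac with h | h
        · exact hua h
        · rcases mul_eq_zero.mp h with h' | h'
          · exact habq (chr2 _ _ h')
          · exact habq (chr2 _ _ h')
    · -- card 3
      obtain ⟨a, b, c, hab, hac, hbc, hS3s⟩ := Finset.card_eq_three.mp hn
      have hua : u a ≠ 0 := (hmemS a).mp (by rw [hS3s]; simp)
      have hvA0 : vA = 0 := by
        by_contra hc
        rw [hcard, if_pos hc] at hcon
        split_ifs at hcon <;> omega
      have hvB0 : vB = 0 := by
        by_contra hc
        rw [hcard, if_pos hc] at hcon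
        split_ifs at hcon <;> omega
      have hsum3 : ∀ f : K → K, (∑ t ∈ S, f t) = f a + (f b + f c) := by
        intro f
        rw [hS3s, Finset.sum_insert (by simp [hab, hac]), Finset.sum_pair hbc]
      rw [hsum3] at E0' E1' E2'
      rw [hvA0, mul_zero, add_zero] at E1'
      rw [hvB0, mul_zero, add_zero] at E2'
      set A : K := a^q with hAdef
      set Bq : K := b^q with hBdef
      set Cq : K := c^q with hCdef2
      have z2 : u a * (A + Cq) + u b * (Bq + Cq) = 0 := by
        linear_combination E1' + Cq * E0' - (u c * Cq) * h2
      have w2 : u a * ((A+Cq)*(A+Cq)) + u b * ((Bq+Cq)*(Bq+Cq)) = 0 := by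
        linear_combination E2' + (Cq*Cq) * E0'
          + (u a * A * Cq + u b * Bq * Cq - u c * Cq * Cq) * h2
      have hba2 : u a * (A + Cq) = u b * (Bq + Cq) := chr2 _ _ z2
      have key2 : u a * ((A + Cq) * (A + Bq)) = 0 := by
        linear_combination w2 + (Bq + Cq) * hba2
          - (Cq * (u a) * (A + Cq)) * h2
      rcases mul_eq_zero.mp key2 with h | h
      · exact hua h
      · rcases mul_eq_zero.mp h with h' | h'
        · exact (fun hh => hac (frobinj a c hh)) (chr2 _ _ h')
        · exact (fun hh => hab (frobinj a b hh)) (chr2 _ _ h')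
  · -- existence of a weight-4 dual word
    have h0G : (0:K) ≠ G := fun h => hG0 h.symm
    set Vf : K ⊕ Fin 2 → K := fun x => Sum.casesOn x
      (fun t => if t = 0 then ((lam 0)^q)⁻¹ else if t = G then ((lam G)^q)⁻¹ else 0)
      (fun b => if b = 0 then (lamA^q)⁻¹ * G^q else (lamB^q)⁻¹ * (G^q * G^q)) with hVfdef
    set v : Fin (q^2+2) → K := fun i => Vf (φ i) with hvdef
    have hVval : ∀ x : K ⊕ Fin 2, v (φ.symm x) = Vf x := by
      intro x
      rw [hvdef]
      simp only [Equiv.apply_symm_apply]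
    have hVl0 : Vf (Sum.inl 0) = ((lam 0)^q)⁻¹ := by rw [hVfdef]; simp
    have hVlG : Vf (Sum.inl G) = ((lam G)^q)⁻¹ := by
      rw [hVfdef]; simp [hG0]
    have hVlother : ∀ t : K, t ≠ 0 → t ≠ G → Vf (Sum.inl t) = 0 := by
      intro t h1 h2
      rw [hVfdef]; simp only [if_neg h1, if_neg h2]
    have hVA : Vf (Sum.inr 0) = (lamA^q)⁻¹ * G^q := by rw [hVfdef]; simp
    have hVB : Vf (Sum.inr 1) = (lamB^q)⁻¹ * (G^q * G^q) := by
      rw [hVfdef]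
      simp only [if_neg (by norm_num : (1:Fin 2) ≠ 0)]
    have hlam0q : (lam 0)^q ≠ 0 := pow_ne_zero _ (hlam0 0)
    have hlamGq : (lam G)^q ≠ 0 := pow_ne_zero _ (hlam0 G)
    have hlamAq : lamA^q ≠ 0 := pow_ne_zero _ hlamA0
    have hlamBq : lamB^q ≠ 0 := pow_ne_zero _ hlamB0
    -- the conic part of each equation restricts to {0, G}
    have hconicsum : ∀ j' : ℕ, (∑ t : K, (lam t * t^j')^q * v (φ.symm (Sum.inl t)))
        = (lam 0 * 0^j')^q * ((lam 0)^q)⁻¹ + (lam G * G^j')^q * ((lam G)^q)⁻¹ := by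
      intro j'
      have hsub : (∑ t ∈ ({0, G} : Finset K), (lam t * t^j')^q * v (φ.symm (Sum.inl t)))
          = ∑ t : K, (lam t * t^j')^q * v (φ.symm (Sum.inl t)) := by
        apply Finset.sum_subset (Finset.subset_univ _)
        intro t _ ht
        have h1 : t ≠ 0 := fun h => ht (by rw [h]; exact Finset.mem_insert_self _ _)
        have h2 : t ≠ G := fun h => ht (by rw [h]; exact Finset.mem_insert_of_mem (Finset.mem_singleton_self _))
        rw [hVval, hVlother t h1 h2, mul_zero]
      rw [← hsub, Finset.sum_pair h0G, hVval, hVval, hVl0, hVlG]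
    have hvdual : ∀ c ∈ C, (∑ i, (c i)^q * v i) = 0 := by
      intro c hc'
      rw [hCdef] at hc'
      refine Submodule.span_induction (p := fun c _ => (∑ i, (c i)^q * v i) = 0)
        ?_ ?_ ?_ ?_ hc'
      · rintro x ⟨j, rfl⟩
        rw [hEsplit v j]
        fin_cases j
        · -- j = 0
          rw [hconicsum 0]
          norm_num [zero_pow hq0]
          rw [mul_inv_cancel₀ hlam0q, mul_inv_cancel₀ hlamGq]
          exact addself 1
        · -- j = 1
          rw [hconicsum 1]
          norm_num [zero_pow hq0]
          rw [hVval, hVA]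
          have ha : (lam G)^q * G^q * ((lam G)^q)⁻¹ = G^q := by field_simp
          have hb : lamA^q * ((lamA^q)⁻¹ * G^q) = G^q := by field_simp
          rw [mul_pow, ha, hb]
          exact addself _
        · -- j = 2
          rw [hconicsum 2]
          norm_num [zero_pow hq0]
          rw [hVval, hVB]
          have ha : (lam G)^q * (G^2)^q * ((lam G)^q)⁻¹ = (G^2)^q := by field_simp
          have hb : lamB^q * ((lamB^q)⁻¹ * (G^q * G^q)) = G^q * G^q := by field_simp
          have hx : (G^2)^q = G^q * G^q := by
            rw [← pow_mul, show 2*q = q+q by ring, pow_add]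
          rw [mul_pow, ha, hx, hb]
          exact addself _
      · simp [zero_pow hq0]
      · intro x y _ _ hx hy
        have hsplit : (∑ i, ((x+y) i)^q * v i)
            = (∑ i, (x i)^q * v i) + (∑ i, (y i)^q * v i) := by
          rw [← Finset.sum_add_distrib]
          apply Finset.sum_congr rfl
          intro i _
          rw [Pi.add_apply, frob]; ring
        rw [hsplit, hx, hy, add_zero]
      · intro s x _ hx
        have hs : (∑ i, ((s • x) i)^q * v i) = s^q * ∑ i, (x i)^q * v i := by
          rw [Finset.mul_sum]
          apply Finset.sum_congr rfl
          intro i _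
          rw [Pi.smul_apply, smul_eq_mul, mul_pow]; ring
        rw [hs, hx, mul_zero]
    have hvne : v ≠ 0 := by
      intro h
      have h1 : v (φ.symm (Sum.inl 0)) = 0 := by rw [h]; rfl
      rw [hVval, hVl0] at h1
      exact inv_ne_zero hlam0q h1
    refine ⟨v, hvdual, hvne, ?_⟩
    rw [hham v]
    have hA1 : v (φ.symm (Sum.inr 0)) ≠ 0 := by
      rw [hVval, hVA]
      exact mul_ne_zero (inv_ne_zero hlamAq) (pow_ne_zero _ hG0)
    have hB1 : v (φ.symm (Sum.inr 1)) ≠ 0 := by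
      rw [hVval, hVB]
      exact mul_ne_zero (inv_ne_zero hlamBq) (mul_ne_zero (pow_ne_zero _ hG0) (pow_ne_zero _ hG0))
    rw [if_pos hA1, if_pos hB1]
    have hcnt : (∑ t : K, if v (φ.symm (Sum.inl t)) ≠ 0 then 1 else 0)
        = ∑ t : K, if (t = 0 ∨ t = G) then 1 else 0 := by
      apply Finset.sum_congr rfl
      intro t _
      rcases eq_or_ne t 0 with h1 | h1
      · rw [if_pos (Or.inl h1), if_pos (by
          rw [hVval, h1, hVl0]; exact inv_ne_zero hlam0q)]
      · rcases eq_or_ne t G with h2 | h2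
        · rw [if_pos (Or.inr h2), if_pos (by
            rw [hVval, h2, hVlG]; exact inv_ne_zero hlamGq)]
        · have hnor : ¬(t = 0 ∨ t = G) := by rintro (h|h); exacts [h1 h, h2 h]
          have hv0' : v (φ.symm (Sum.inl t)) = 0 := by rw [hVval, hVlother t h1 h2]
          rw [if_neg hnor, if_neg (fun hh => hh hv0')]
    rw [hcnt, ← Finset.card_filter]
    have hfil : Finset.univ.filter (fun t : K => t = 0 ∨ t = G) = {0, G} := by
      ext t; simp
    rw [hfil, Finset.card_pair h0G]
end

section
/- Let q be a prime power and suppose there exists an F_{q²}-linear code C ⊆ F_{q²}^n of dimension d - 1 with C ⊆ C* such that the Hermitian dual C* has minimum distance exactly d (so C* is an MDS code [n, n+1-d, d]_{q²}). Then for every integer s with 0 ≤ s < d there exists an F_{q²}-linear code C_s ⊆ F_{q²}^{n-s} of dimension d - 1 - s with C_s ⊆ C_s* such that C_s* has minimum distance exactly d - s; equivalently, the existence of a quantum MDS code [[n, n+2-2d, d]]_q implies the existence of quantum MDS codes [[n-s, n+s+2-2d, d-s]]_q for all 0 ≤ s < d. -/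
/-!
Shorten the code `C` at a coordinate `i` in the support of a minimum-weight vector `v₀` of the
Hermitian dual `C*`: keep the codewords vanishing at `i` and delete that coordinate. Since the
minimum distance of `C*` is at least `2`, some codeword of `C` is nonzero at `i`, so the dimension
drops by exactly one, and self-orthogonality survives because the deleted coordinate contributes
nothing. The dual of the shortened code is the dual `C*` punctured at `i`; puncturing lowers
weights by at most one and lowers the weight of `v₀` by exactly one. Iterating `s` times gives
the theorem. Only the fact that `x ↦ x ^ q` is a ring endomorphism of `𝔽_{q²}` is used, so
everything is done for the form `∑ σ (c i) * v i` of an arbitrary ring endomorphism `σ`.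
-/

open Finset Module

variable {E : Type*} [Field E] (σ : E →+* E)

section SesqDual

variable {ι : Type*} [Fintype ι]

def sesqDual (C : Submodule E (ι → E)) : Submodule E (ι → E) where
  carrier := {v | ∀ c ∈ C, ∑ i, σ (c i) * v i = 0}
  zero_mem' _ _ := by simp
  add_mem' ha hb c hc := by simp [mul_add, sum_add_distrib, ha c hc, hb c hc]
  smul_mem' r v hv c hc := by simp [mul_left_comm _ r, ← mul_sum, hv c hc]

variable {σ} in
@[simp]
lemma mem_sesqDual {C : Submodule E (ι → E)} {v : ι → E} :
    v ∈ sesqDual σ C ↔ ∀ c ∈ C, ∑ i, σ (c i) * v i = 0 :=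
  Iff.rfl

variable [DecidableEq E]

def HasMinDist (W : Submodule E (ι → E)) (d : ℕ) : Prop :=
  (∀ v ∈ W, v ≠ 0 → d ≤ hammingNorm v) ∧ ∃ v ∈ W, v ≠ 0 ∧ hammingNorm v = d

lemma HasMinDist.le_card {W : Submodule E (ι → E)} {d : ℕ} (h : HasMinDist W d) :
    d ≤ Fintype.card ι := by
  obtain ⟨-, v, -, -, rfl⟩ := h
  exact hammingNorm_le_card_fintype

variable {σ} in
lemma exists_apply_ne_zero_of_two_le [DecidableEq ι] {C : Submodule E (ι → E)}
    (hlb : ∀ v ∈ sesqDual σ C, v ≠ 0 → 2 ≤ hammingNorm v) (i : ι) : ∃ c ∈ C, c i ≠ 0 := by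
  by_contra! h
  have hsingle : Pi.single i 1 ∈ sesqDual σ C := by
    intro c hc
    simp [Pi.single_apply, h c hc]
  have := hlb _ hsingle (by simp)
  simp [hammingNorm, Pi.single_apply, filter_eq'] at this

end SesqDual

section Shorten

variable {m : ℕ} (i : Fin (m + 1))

def puncture : (Fin (m + 1) → E) →ₗ[E] (Fin m → E) :=
  LinearMap.funLeft E E i.succAbove

@[simp]
lemma puncture_apply (w : Fin (m + 1) → E) (j : Fin m) : puncture i w j = w (i.succAbove j) :=
  rfl

def shorten (C : Submodule E (Fin (m + 1) → E)) : Submodule E (Fin m → E) :=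
  (C ⊓ LinearMap.ker (LinearMap.proj i)).map (puncture i)

variable {i} {C : Submodule E (Fin (m + 1) → E)}

lemma mem_shorten {v : Fin m → E} :
    v ∈ shorten i C ↔ ∃ c ∈ C, c i = 0 ∧ puncture i c = v := by
  simp [shorten, and_assoc]

lemma hammingNorm_eq_hammingNorm_puncture_add [DecidableEq E] (w : Fin (m + 1) → E) :
    hammingNorm w = hammingNorm (puncture i w) + if w i = 0 then 0 else 1 := by
  change hammingNorm w = hammingNorm (w ∘ i.succAbove) + _
  unfold hammingNorm
  rw [card_filter, card_filter, Fin.sum_univ_succAbove _ i]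
  by_cases h : w i = 0 <;> simp [h, add_comm]

lemma sum_eq_sum_puncture_of_apply_eq_zero {c : Fin (m + 1) → E} (hc : c i = 0)
    (u : Fin (m + 1) → E) :
    ∑ j, σ (c j) * u j = ∑ j, σ (puncture i c j) * puncture i u j := by
  simp [Fin.sum_univ_succAbove _ i, hc]

lemma shorten_le_sesqDual (hC : C ≤ sesqDual σ C) : shorten i C ≤ sesqDual σ (shorten i C) := by
  intro a ha b hb
  obtain ⟨a, haC, hai, rfl⟩ := mem_shorten.mp ha
  obtain ⟨b, hbC, hbi, rfl⟩ := mem_shorten.mp hb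
  rw [← sum_eq_sum_puncture_of_apply_eq_zero σ hbi]
  exact hC haC b hbC

lemma map_sesqDual_le_sesqDual_shorten :
    (sesqDual σ C).map (puncture i) ≤ sesqDual σ (shorten i C) := by
  rintro _ ⟨u, hu, rfl⟩ c hc
  obtain ⟨c, hcC, hci, rfl⟩ := mem_shorten.mp hc
  rw [← sum_eq_sum_puncture_of_apply_eq_zero σ hci]
  exact hu c hcC

/-- The extension of `v` at `i` is chosen so as to be orthogonal to one codeword `c₀` with
`c₀ i ≠ 0`; since every codeword differs from a multiple of `c₀` by one vanishing at `i`, it is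
then orthogonal to all of `C`. -/
lemma sesqDual_shorten_le_map_sesqDual (h : ∃ c₀ ∈ C, c₀ i ≠ 0) :
    sesqDual σ (shorten i C) ≤ (sesqDual σ C).map (puncture i) := by
  obtain ⟨c₀, hc₀, hc₀i⟩ := h
  intro v hv
  set φ : (Fin (m + 1) → E) → E := fun c => ∑ j, σ (c (i.succAbove j)) * v j
  have hφ : ∀ c ∈ C, φ c = σ (c i / c₀ i) * φ c₀ := by
    intro c hc
    have hmem : puncture i (c - (c i / c₀ i) • c₀) ∈ shorten i C :=
      mem_shorten.mpr ⟨_, C.sub_mem hc (C.smul_mem _ hc₀), by simp [div_mul_cancel₀ _ hc₀i], rfl⟩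
    have := hv _ hmem
    simp only [puncture_apply, Pi.sub_apply, Pi.smul_apply, smul_eq_mul, map_sub, map_mul,
      sub_mul, sum_sub_distrib, mul_assoc, ← mul_sum] at this
    exact sub_eq_zero.mp this
  have hσc₀ : σ (c₀ i) ≠ 0 := (map_ne_zero σ).mpr hc₀i
  refine ⟨Fin.insertNth i (-φ c₀ / σ (c₀ i)) v, fun c hc => ?_, funext fun j => by simp⟩
  rw [Fin.sum_univ_succAbove _ i]
  simp only [Fin.insertNth_apply_same, Fin.insertNth_apply_succAbove]
  change _ + φ c = 0
  rw [hφ c hc, map_div₀]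
  field_simp
  ring

lemma sesqDual_shorten (h : ∃ c ∈ C, c i ≠ 0) :
    sesqDual σ (shorten i C) = (sesqDual σ C).map (puncture i) :=
  le_antisymm (sesqDual_shorten_le_map_sesqDual σ h) (map_sesqDual_le_sesqDual_shorten σ)

lemma finrank_shorten :
    finrank E (shorten i C) = finrank E ↥(C ⊓ LinearMap.ker (LinearMap.proj i)) := by
  have hinj :
      Function.Injective ((puncture i).domRestrict (C ⊓ LinearMap.ker (LinearMap.proj i))) := by
    rintro ⟨a, ha⟩ ⟨b, hb⟩ hab
    ext j
    refine Fin.succAboveCases i ?_ (fun k => congr_fun hab k) j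
    simp only [Submodule.mem_inf, LinearMap.mem_ker, LinearMap.proj_apply] at ha hb
    exact ha.2.trans hb.2.symm
  rw [shorten, ← LinearMap.range_domRestrict, LinearMap.finrank_range_of_inj hinj]

lemma finrank_inf_ker_proj_add_one (h : ∃ c ∈ C, c i ≠ 0) :
    finrank E ↥(C ⊓ LinearMap.ker (LinearMap.proj i)) + 1 = finrank E C := by
  obtain ⟨c, hc, hci⟩ := h
  set f : Dual E C := (LinearMap.proj i).comp C.subtype
  have hf : f ≠ 0 := fun hf => hci (LinearMap.congr_fun hf ⟨c, hc⟩)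
  rw [← Module.Dual.finrank_ker_add_one_of_ne_zero hf, ← Submodule.finrank_map_subtype_eq,
    LinearMap.ker_comp, Submodule.map_comap_subtype]

end Shorten

section SelfOrthogonal

variable [DecidableEq E]

/-- For `σ = (· ^ q)` on `𝔽_{q²}` this is the data of a quantum MDS code `[[N, N + 2 - 2d, d]]_q`. -/
def HasSelfOrthogonalCode (N d : ℕ) : Prop :=
  ∃ C : Submodule E (Fin N → E),
    finrank E C = d - 1 ∧ C ≤ sesqDual σ C ∧ HasMinDist (sesqDual σ C) d

variable {σ}

theorem HasSelfOrthogonalCode.of_succ {m d : ℕ} (h : HasSelfOrthogonalCode σ (m + 1) d)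
    (hd : 2 ≤ d) : HasSelfOrthogonalCode σ m (d - 1) := by
  obtain ⟨C, hdim, hso, hlb, v₀, hv₀, hv₀ne, hv₀w⟩ := h
  obtain ⟨i, hi⟩ : ∃ i, v₀ i ≠ 0 := Function.ne_iff.mp hv₀ne
  have hC : ∃ c ∈ C, c i ≠ 0 :=
    exists_apply_ne_zero_of_two_le (fun v hv hne => hd.trans (hlb v hv hne)) i
  have hdimD := finrank_inf_ker_proj_add_one hC
  rw [← finrank_shorten] at hdimD
  have hv₀w' := hammingNorm_eq_hammingNorm_puncture_add (i := i) v₀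
  rw [if_neg hi, hv₀w] at hv₀w'
  refine ⟨shorten i C, by omega, shorten_le_sesqDual σ hso, ?_, puncture i v₀,
    map_sesqDual_le_sesqDual_shorten σ ⟨v₀, hv₀, rfl⟩, ?_, by omega⟩
  · rw [sesqDual_shorten σ hC]
    rintro _ ⟨u, hu, rfl⟩ hne
    have hu0 : u ≠ 0 := by rintro rfl; exact hne (map_zero _)
    have := hlb u hu hu0
    have := hammingNorm_eq_hammingNorm_puncture_add (i := i) u
    split_ifs at this <;> omega
  · rw [← hammingNorm_ne_zero_iff]
    omega

theorem HasSelfOrthogonalCode.sub {n d : ℕ} (h : HasSelfOrthogonalCode σ n d) {s : ℕ}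
    (hs : s < d) : HasSelfOrthogonalCode σ (n - s) (d - s) := by
  induction s with
  | zero => exact h
  | succ s ih =>
    have hprev := ih (by omega)
    have hlen : n - s = n - (s + 1) + 1 := by
      obtain ⟨C, -, -, hmin⟩ := hprev
      have := hmin.le_card
      rw [Fintype.card_fin] at this
      omega
    rw [hlen] at hprev
    simpa [Nat.sub_sub] using hprev.of_succ (by omega)

end SelfOrthogonal

lemma exists_ringHom_apply_eq_pow [Fintype E] {q : ℕ} (hE : Fintype.card E = q ^ 2) :
    ∃ σ : E →+* E, ∀ x, σ x = x ^ q := by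
  obtain ⟨p, hchar, k, hp, hcard⟩ := FiniteField.card' E
  have := Fact.mk hp
  obtain ⟨a, -, rfl⟩ : ∃ a ≤ (k : ℕ), q = p ^ a :=
    (Nat.dvd_prime_pow hp).mp (hcard ▸ hE ▸ dvd_pow_self q two_ne_zero)
  exact ⟨iterateFrobenius E p a, fun _ => rfl⟩

/-- For `q` a prime power, suppose there is an `F_{q²}`-linear code
`C ⊆ F_{q²}^n` of dimension `d - 1` with `C ⊆ C*` (Hermitian dual) whose dual `C*` has
minimum distance exactly `d` (so `C*` is MDS `[n, n+1-d, d]_{q²}`, giving a quantum MDS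
code `[[n, n+2-2d, d]]_q`). Then for every `0 ≤ s < d` there is an `F_{q²}`-linear code
`C_s ⊆ F_{q²}^{n-s}` of dimension `d - 1 - s` with `C_s ⊆ C_s*` whose dual has minimum
distance exactly `d - s` (giving quantum MDS codes `[[n-s, n+s+2-2d, d-s]]_q`). -/
theorem stmt_17 (q n d : ℕ) (E : Type) [Field E] [Fintype E] [DecidableEq E]
    (hE : Fintype.card E = q ^ 2)
    (C : Submodule E (Fin n → E)) (hdim : Module.finrank E C = d - 1)
    (hso : ∀ a ∈ C, ∀ b ∈ C, ∑ i, (a i) ^ q * b i = 0)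
    (hlb : ∀ v : Fin n → E, (∀ c ∈ C, ∑ i, (c i) ^ q * v i = 0) → v ≠ 0 →
      d ≤ hammingNorm v)
    (hex : ∃ v : Fin n → E, (∀ c ∈ C, ∑ i, (c i) ^ q * v i = 0) ∧ v ≠ 0 ∧
      hammingNorm v = d) :
    ∀ s : ℕ, s < d →
      ∃ D : Submodule E (Fin (n - s) → E),
        Module.finrank E D = d - 1 - s ∧
        (∀ a ∈ D, ∀ b ∈ D, ∑ i, (a i) ^ q * b i = 0) ∧
        (∀ v : Fin (n - s) → E, (∀ c ∈ D, ∑ i, (c i) ^ q * v i = 0) → v ≠ 0 →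
          d - s ≤ hammingNorm v) ∧
        (∃ v : Fin (n - s) → E, (∀ c ∈ D, ∑ i, (c i) ^ q * v i = 0) ∧ v ≠ 0 ∧
          hammingNorm v = d - s) := by
  obtain ⟨σ, hσ⟩ := exists_ringHom_apply_eq_pow hE
  have hC : HasSelfOrthogonalCode σ n d :=
    ⟨C, hdim, fun b hb a ha => by simpa [hσ] using hso a ha b hb,
      fun v hv => hlb v (by simpa [hσ] using hv), by simpa [hσ] using hex⟩
  intro s hs
  obtain ⟨D, hdimD, hsoD, hlbD, v, hv, hvne, hvw⟩ := hC.sub hs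
  refine ⟨D, by omega, fun a ha b hb => by simpa [hσ] using hsoD hb a ha,
    fun v hv => hlbD v (by simpa [hσ] using hv), v, by simpa [hσ] using hv, hvne, hvw⟩
end
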